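/- arXiv:1503.09159 — 3 statements merged into one kernel-verified Lean document; each statement's English description precedes it below -/
import Mathlib

section
/- Let x(u,v) = Σ_{i,j=0}^4 v_{ij} u^i v^j be a bi-quartic polynomial chart which is isothermal (E = G and F = 0 identically) and harmonic (x_uu + x_vv = 0 identically), and suppose v_{40} = (p, 0, 0) and v_{31} = (0, 4p, 0) for some real p ≠ 0. Writing v_{30} = (a₃₀, b₃₀, c₃₀) and v_{03} = (a₀₃, b₀₃, c₀₃), one has b₀₃ + a₃₀ = 0 and a₀₃ − b₃₀ = 0. -/
set_option maxHeartbeats 4000000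

noncomputable section

/-- Euclidean dot product in `ℝ³`. -/
def dot3 (a b : Fin 3 → ℝ) : ℝ := a 0 * b 0 + a 1 * b 1 + a 2 * b 2

/-- Cross product in `ℝ³`. -/
def cross3 (a b : Fin 3 → ℝ) : Fin 3 → ℝ :=
  ![a 1 * b 2 - a 2 * b 1, a 2 * b 0 - a 0 * b 2, a 0 * b 1 - a 1 * b 0]

/-- Partial derivative of a chart with respect to the first variable. -/
def pu (x : ℝ → ℝ → Fin 3 → ℝ) : ℝ → ℝ → Fin 3 → ℝ :=
  fun u v i => deriv (fun t => x t v i) u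

/-- Partial derivative of a chart with respect to the second variable. -/
def pv (x : ℝ → ℝ → Fin 3 → ℝ) : ℝ → ℝ → Fin 3 → ℝ :=
  fun u v i => deriv (fun t => x u t i) v

/-- The chart is isothermal: `E = G` and `F = 0` identically. -/
def Isothermal (x : ℝ → ℝ → Fin 3 → ℝ) : Prop :=
  ∀ u v : ℝ,
    dot3 (pu x u v) (pu x u v) = dot3 (pv x u v) (pv x u v) ∧
    dot3 (pu x u v) (pv x u v) = 0

/-- The chart is harmonic: `x_uu + x_vv = 0` identically. -/
def Harmonic (x : ℝ → ℝ → Fin 3 → ℝ) : Prop :=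
  ∀ u v : ℝ, ∀ i : Fin 3, pu (pu x) u v i + pv (pv x) u v i = 0

/-- The chart `x` is generated by the Weierstrass data `(f, g)`:
for `z = u + iv`, `x_u - i x_v = (½ f (1 - g²), (i/2) f (1 + g²), f g)`. -/
def GeneratedBy (x : ℝ → ℝ → Fin 3 → ℝ) (f g : ℂ → ℂ) : Prop :=
  ∀ u v : ℝ,
    (pu x u v 0 : ℂ) - Complex.I * (pv x u v 0)
        = (1 / 2) * f (u + v * Complex.I) * (1 - (g (u + v * Complex.I)) ^ 2) ∧
    (pu x u v 1 : ℂ) - Complex.I * (pv x u v 1)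
        = (Complex.I / 2) * f (u + v * Complex.I) * (1 + (g (u + v * Complex.I)) ^ 2) ∧
    (pu x u v 2 : ℂ) - Complex.I * (pv x u v 2)
        = f (u + v * Complex.I) * g (u + v * Complex.I)

lemma deriv_poly4 (a0 a1 a2 a3 a4 t : ℝ) :
    deriv (fun s : ℝ => a0 + a1 * s + a2 * s ^ 2 + a3 * s ^ 3 + a4 * s ^ 4) t
      = a1 + 2 * a2 * t + 3 * a3 * t ^ 2 + 4 * a4 * t ^ 3 := by
  have h : HasDerivAt (fun s : ℝ => a0 + a1 * s + a2 * s ^ 2 + a3 * s ^ 3 + a4 * s ^ 4)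
      (0 + a1 * 1 + a2 * (2 * t ^ 1) + a3 * (3 * t ^ 2) + a4 * (4 * t ^ 3)) t := by
    exact ((((hasDerivAt_const t a0).add ((hasDerivAt_id t).const_mul a1)).add
      ((hasDerivAt_pow 2 t).const_mul a2)).add ((hasDerivAt_pow 3 t).const_mul a3)).add
      ((hasDerivAt_pow 4 t).const_mul a4)
  rw [h.deriv]; ring

lemma vanish8 {a0 a1 a2 a3 a4 a5 a6 a7 a8 : ℝ}
    (h : ∀ t : ℝ, a0 + a1 * t + a2 * t ^ 2 + a3 * t ^ 3 + a4 * t ^ 4 + a5 * t ^ 5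
        + a6 * t ^ 6 + a7 * t ^ 7 + a8 * t ^ 8 = 0) :
    a0 = 0 ∧ a1 = 0 ∧ a2 = 0 ∧ a3 = 0 ∧ a4 = 0 ∧ a5 = 0 ∧ a6 = 0 ∧ a7 = 0 ∧ a8 = 0 := by
  refine ⟨?_, ?_, ?_, ?_, ?_, ?_, ?_, ?_, ?_⟩
  · linear_combination h (0)
  · linear_combination (4/5 : ℝ) * h (1) - (4/5 : ℝ) * h (-1) - (1/5 : ℝ) * h (2) + (1/5 : ℝ) * h (-2) + (4/105 : ℝ) * h (3) - (4/105 : ℝ) * h (-3) - (1/280 : ℝ) * h (4) + (1/280 : ℝ) * h (-4)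
  · linear_combination -(205/144 : ℝ) * h (0) + (4/5 : ℝ) * h (1) + (4/5 : ℝ) * h (-1) - (1/10 : ℝ) * h (2) - (1/10 : ℝ) * h (-2) + (4/315 : ℝ) * h (3) + (4/315 : ℝ) * h (-3) - (1/1120 : ℝ) * h (4) - (1/1120 : ℝ) * h (-4)
  · linear_combination -(61/180 : ℝ) * h (1) + (61/180 : ℝ) * h (-1) + (169/720 : ℝ) * h (2) - (169/720 : ℝ) * h (-2) - (1/20 : ℝ) * h (3) + (1/20 : ℝ) * h (-3) + (7/1440 : ℝ) * h (4) - (7/1440 : ℝ) * h (-4)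
  · linear_combination (91/192 : ℝ) * h (0) - (61/180 : ℝ) * h (1) - (61/180 : ℝ) * h (-1) + (169/1440 : ℝ) * h (2) + (169/1440 : ℝ) * h (-2) - (1/60 : ℝ) * h (3) - (1/60 : ℝ) * h (-3) + (7/5760 : ℝ) * h (4) + (7/5760 : ℝ) * h (-4)
  · linear_combination (29/720 : ℝ) * h (1) - (29/720 : ℝ) * h (-1) - (13/360 : ℝ) * h (2) + (13/360 : ℝ) * h (-2) + (1/80 : ℝ) * h (3) - (1/80 : ℝ) * h (-3) - (1/720 : ℝ) * h (4) + (1/720 : ℝ) * h (-4)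
  · linear_combination -(5/96 : ℝ) * h (0) + (29/720 : ℝ) * h (1) + (29/720 : ℝ) * h (-1) - (13/720 : ℝ) * h (2) - (13/720 : ℝ) * h (-2) + (1/240 : ℝ) * h (3) + (1/240 : ℝ) * h (-3) - (1/2880 : ℝ) * h (4) - (1/2880 : ℝ) * h (-4)
  · linear_combination -(1/720 : ℝ) * h (1) + (1/720 : ℝ) * h (-1) + (1/720 : ℝ) * h (2) - (1/720 : ℝ) * h (-2) - (1/1680 : ℝ) * h (3) + (1/1680 : ℝ) * h (-3) + (1/10080 : ℝ) * h (4) - (1/10080 : ℝ) * h (-4)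
  · linear_combination (1/576 : ℝ) * h (0) - (1/720 : ℝ) * h (1) - (1/720 : ℝ) * h (-1) + (1/1440 : ℝ) * h (2) + (1/1440 : ℝ) * h (-2) - (1/5040 : ℝ) * h (3) - (1/5040 : ℝ) * h (-3) + (1/40320 : ℝ) * h (4) + (1/40320 : ℝ) * h (-4)


/-- for an isothermal harmonic bi-quartic chart with
`v₄₀ = (p,0,0)` and `v₃₁ = (0,4p,0)`, `p ≠ 0`, the coefficients of `v₃₀` and `v₀₃`
satisfy `b₀₃ + a₃₀ = 0` and `a₀₃ - b₃₀ = 0`. -/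
theorem biquartic_normalized_cubic_coefficients
    (c : Fin 5 → Fin 5 → Fin 3 → ℝ) (x : ℝ → ℝ → Fin 3 → ℝ) (p : ℝ)
    (hx : ∀ u v : ℝ, ∀ i : Fin 3,
      x u v i = ∑ p' : Fin 5, ∑ q : Fin 5, c p' q i * u ^ (p' : ℕ) * v ^ (q : ℕ))
    (hiso : Isothermal x) (hharm : Harmonic x)
    (hp : p ≠ 0) (h40 : c 4 0 = ![p, 0, 0]) (h31 : c 3 1 = ![0, 4 * p, 0]) :
    c 0 3 1 + c 3 0 0 = 0 ∧ c 0 3 0 - c 3 0 1 = 0 := by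
  have h40c0 : c 4 0 0 = p := by rw [h40]; simp
  have h40c1 : c 4 0 1 = 0 := by rw [h40]; simp
  have h40c2 : c 4 0 2 = 0 := by rw [h40]; simp
  have h31c0 : c 3 1 0 = 0 := by rw [h31]; simp
  have h31c1 : c 3 1 1 = 4 * p := by rw [h31]; simp
  have h31c2 : c 3 1 2 = 0 := by rw [h31]; simp
  have hpu : ∀ (u v : ℝ) (i : Fin 3), pu x u v i = (c 1 0 i + c 1 1 i * v + c 1 2 i * v ^ 2 + c 1 3 i * v ^ 3 + c 1 4 i * v ^ 4) + (2 * (c 2 0 i + c 2 1 i * v + c 2 2 i * v ^ 2 + c 2 3 i * v ^ 3 + c 2 4 i * v ^ 4)) * u + (3 * (c 3 0 i + c 3 1 i * v + c 3 2 i * v ^ 2 + c 3 3 i * v ^ 3 + c 3 4 i * v ^ 4)) * u ^ 2 + (4 * (c 4 0 i + c 4 1 i * v + c 4 2 i * v ^ 2 + c 4 3 i * v ^ 3 + c 4 4 i * v ^ 4)) * u ^ 3 + 0 * u ^ 4 := by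
    intro u v i
    have hf : (fun t : ℝ => x t v i) = (fun t : ℝ => (c 0 0 i + c 0 1 i * v + c 0 2 i * v ^ 2 + c 0 3 i * v ^ 3 + c 0 4 i * v ^ 4) + (c 1 0 i + c 1 1 i * v + c 1 2 i * v ^ 2 + c 1 3 i * v ^ 3 + c 1 4 i * v ^ 4) * t + (c 2 0 i + c 2 1 i * v + c 2 2 i * v ^ 2 + c 2 3 i * v ^ 3 + c 2 4 i * v ^ 4) * t ^ 2 + (c 3 0 i + c 3 1 i * v + c 3 2 i * v ^ 2 + c 3 3 i * v ^ 3 + c 3 4 i * v ^ 4) * t ^ 3 + (c 4 0 i + c 4 1 i * v + c 4 2 i * v ^ 2 + c 4 3 i * v ^ 3 + c 4 4 i * v ^ 4) * t ^ 4) := by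
      funext t
      rw [hx t v i]
      simp [Fin.sum_univ_five, show ((3:Fin 5):ℕ) = 3 from rfl, show ((4:Fin 5):ℕ) = 4 from rfl]
      ring
    show deriv (fun t : ℝ => x t v i) u = _
    rw [hf, deriv_poly4]
    ring
  have hpv : ∀ (u v : ℝ) (i : Fin 3), pv x u v i = (c 0 1 i + c 1 1 i * u + c 2 1 i * u ^ 2 + c 3 1 i * u ^ 3 + c 4 1 i * u ^ 4) + (2 * (c 0 2 i + c 1 2 i * u + c 2 2 i * u ^ 2 + c 3 2 i * u ^ 3 + c 4 2 i * u ^ 4)) * v + (3 * (c 0 3 i + c 1 3 i * u + c 2 3 i * u ^ 2 + c 3 3 i * u ^ 3 + c 4 3 i * u ^ 4)) * v ^ 2 + (4 * (c 0 4 i + c 1 4 i * u + c 2 4 i * u ^ 2 + c 3 4 i * u ^ 3 + c 4 4 i * u ^ 4)) * v ^ 3 + 0 * v ^ 4 := by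
    intro u v i
    have hf : (fun t : ℝ => x u t i) = (fun t : ℝ => (c 0 0 i + c 1 0 i * u + c 2 0 i * u ^ 2 + c 3 0 i * u ^ 3 + c 4 0 i * u ^ 4) + (c 0 1 i + c 1 1 i * u + c 2 1 i * u ^ 2 + c 3 1 i * u ^ 3 + c 4 1 i * u ^ 4) * t + (c 0 2 i + c 1 2 i * u + c 2 2 i * u ^ 2 + c 3 2 i * u ^ 3 + c 4 2 i * u ^ 4) * t ^ 2 + (c 0 3 i + c 1 3 i * u + c 2 3 i * u ^ 2 + c 3 3 i * u ^ 3 + c 4 3 i * u ^ 4) * t ^ 3 + (c 0 4 i + c 1 4 i * u + c 2 4 i * u ^ 2 + c 3 4 i * u ^ 3 + c 4 4 i * u ^ 4) * t ^ 4) := by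
      funext t
      rw [hx u t i]
      simp [Fin.sum_univ_five, show ((3:Fin 5):ℕ) = 3 from rfl, show ((4:Fin 5):ℕ) = 4 from rfl]
      ring
    show deriv (fun t : ℝ => x u t i) v = _
    rw [hf, deriv_poly4]
    ring
  have hpuu : ∀ (u v : ℝ) (i : Fin 3), pu (pu x) u v i
      = 2 * (c 2 0 i + c 2 1 i * v + c 2 2 i * v ^ 2 + c 2 3 i * v ^ 3 + c 2 4 i * v ^ 4) + (6 * (c 3 0 i + c 3 1 i * v + c 3 2 i * v ^ 2 + c 3 3 i * v ^ 3 + c 3 4 i * v ^ 4)) * u + (12 * (c 4 0 i + c 4 1 i * v + c 4 2 i * v ^ 2 + c 4 3 i * v ^ 3 + c 4 4 i * v ^ 4)) * u ^ 2 := by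
    intro u v i
    have hf : (fun t : ℝ => pu x t v i) = (fun t : ℝ => (c 1 0 i + c 1 1 i * v + c 1 2 i * v ^ 2 + c 1 3 i * v ^ 3 + c 1 4 i * v ^ 4) + (2 * (c 2 0 i + c 2 1 i * v + c 2 2 i * v ^ 2 + c 2 3 i * v ^ 3 + c 2 4 i * v ^ 4)) * t + (3 * (c 3 0 i + c 3 1 i * v + c 3 2 i * v ^ 2 + c 3 3 i * v ^ 3 + c 3 4 i * v ^ 4)) * t ^ 2 + (4 * (c 4 0 i + c 4 1 i * v + c 4 2 i * v ^ 2 + c 4 3 i * v ^ 3 + c 4 4 i * v ^ 4)) * t ^ 3 + 0 * t ^ 4) := funext fun t => hpu t v i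
    show deriv (fun t : ℝ => pu x t v i) u = _
    rw [hf, deriv_poly4]
    ring
  have hpvv : ∀ (u v : ℝ) (i : Fin 3), pv (pv x) u v i
      = 2 * (c 0 2 i + c 1 2 i * u + c 2 2 i * u ^ 2 + c 3 2 i * u ^ 3 + c 4 2 i * u ^ 4) + (6 * (c 0 3 i + c 1 3 i * u + c 2 3 i * u ^ 2 + c 3 3 i * u ^ 3 + c 4 3 i * u ^ 4)) * v + (12 * (c 0 4 i + c 1 4 i * u + c 2 4 i * u ^ 2 + c 3 4 i * u ^ 3 + c 4 4 i * u ^ 4)) * v ^ 2 := by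
    intro u v i
    have hf : (fun t : ℝ => pv x u t i) = (fun t : ℝ => (c 0 1 i + c 1 1 i * u + c 2 1 i * u ^ 2 + c 3 1 i * u ^ 3 + c 4 1 i * u ^ 4) + (2 * (c 0 2 i + c 1 2 i * u + c 2 2 i * u ^ 2 + c 3 2 i * u ^ 3 + c 4 2 i * u ^ 4)) * t + (3 * (c 0 3 i + c 1 3 i * u + c 2 3 i * u ^ 2 + c 3 3 i * u ^ 3 + c 4 3 i * u ^ 4)) * t ^ 2 + (4 * (c 0 4 i + c 1 4 i * u + c 2 4 i * u ^ 2 + c 3 4 i * u ^ 3 + c 4 4 i * u ^ 4)) * t ^ 3 + 0 * t ^ 4) := funext fun t => hpv u t i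
    show deriv (fun t : ℝ => pv x u t i) v = _
    rw [hf, deriv_poly4]
    ring
  have hHg : ∀ (i : Fin 3) (v u : ℝ), (((2 : ℝ) * c 0 2 i + (2 : ℝ) * c 2 0 i) + ((6 : ℝ) * c 0 3 i + (2 : ℝ) * c 2 1 i) * v + ((12 : ℝ) * c 0 4 i + (2 : ℝ) * c 2 2 i) * v ^ 2 + ((2 : ℝ) * c 2 3 i) * v ^ 3 + ((2 : ℝ) * c 2 4 i) * v ^ 4) + (((2 : ℝ) * c 1 2 i + (6 : ℝ) * c 3 0 i) + ((6 : ℝ) * c 1 3 i + (6 : ℝ) * c 3 1 i) * v + ((12 : ℝ) * c 1 4 i + (6 : ℝ) * c 3 2 i) * v ^ 2 + ((6 : ℝ) * c 3 3 i) * v ^ 3 + ((6 : ℝ) * c 3 4 i) * v ^ 4) * u + (((2 : ℝ) * c 2 2 i + (12 : ℝ) * c 4 0 i) + ((6 : ℝ) * c 2 3 i + (12 : ℝ) * c 4 1 i) * v + ((12 : ℝ) * c 2 4 i + (12 : ℝ) * c 4 2 i) * v ^ 2 + ((12 : ℝ) * c 4 3 i) * v ^ 3 + ((12 : ℝ) *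 c 4 4 i) * v ^ 4) * u ^ 2 + (((2 : ℝ) * c 3 2 i) + ((6 : ℝ) * c 3 3 i) * v + ((12 : ℝ) * c 3 4 i) * v ^ 2) * u ^ 3 + (((2 : ℝ) * c 4 2 i) + ((6 : ℝ) * c 4 3 i) * v + ((12 : ℝ) * c 4 4 i) * v ^ 2) * u ^ 4 + ((0:ℝ)) * u ^ 5 + ((0:ℝ)) * u ^ 6 + ((0:ℝ)) * u ^ 7 + ((0:ℝ)) * u ^ 8 = 0 := by
    intro i v u
    have h := hharm u v i
    rw [hpuu u v i, hpvv u v i] at h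
    linear_combination h
  have hHrow0 := fun (i : Fin 3) (v : ℝ) => (vanish8 (hHg i v)).1
  have hHrow0v : ∀ (i : Fin 3) (v : ℝ), ((2 : ℝ) * c 0 2 i + (2 : ℝ) * c 2 0 i) + ((6 : ℝ) * c 0 3 i + (2 : ℝ) * c 2 1 i) * v + ((12 : ℝ) * c 0 4 i + (2 : ℝ) * c 2 2 i) * v ^ 2 + ((2 : ℝ) * c 2 3 i) * v ^ 3 + ((2 : ℝ) * c 2 4 i) * v ^ 4 + ((0:ℝ)) * v ^ 5 + ((0:ℝ)) * v ^ 6 + ((0:ℝ)) * v ^ 7 + ((0:ℝ)) * v ^ 8 = 0 :=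
    fun i v => by linear_combination hHrow0 i v
  have hH00 := fun (i : Fin 3) => (vanish8 (hHrow0v i)).1
  have hH01 := fun (i : Fin 3) => (vanish8 (hHrow0v i)).2.1
  have hH03 := fun (i : Fin 3) => (vanish8 (hHrow0v i)).2.2.2.1
  have hHrow2 := fun (i : Fin 3) (v : ℝ) => (vanish8 (hHg i v)).2.2.1
  have hHrow2v : ∀ (i : Fin 3) (v : ℝ), ((2 : ℝ) * c 2 2 i + (12 : ℝ) * c 4 0 i) + ((6 : ℝ) * c 2 3 i + (12 : ℝ) * c 4 1 i) * v + ((12 : ℝ) * c 2 4 i + (12 : ℝ) * c 4 2 i) * v ^ 2 + ((12 : ℝ) * c 4 3 i) * v ^ 3 + ((12 : ℝ) * c 4 4 i) * v ^ 4 + ((0:ℝ)) * v ^ 5 + ((0:ℝ)) * v ^ 6 + ((0:ℝ)) * v ^ 7 + ((0:ℝ)) * v ^ 8 = 0 :=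
    fun i v => by linear_combination hHrow2 i v
  have hH21 := fun (i : Fin 3) => (vanish8 (hHrow2v i)).2.1
  have hEGg : ∀ (v u : ℝ), (((-1 : ℝ) * c 0 1 0 * c 0 1 0 + (-1 : ℝ) * c 0 1 1 * c 0 1 1 + (-1 : ℝ) * c 0 1 2 * c 0 1 2 + c 1 0 0 * c 1 0 0 + c 1 0 1 * c 1 0 1 + c 1 0 2 * c 1 0 2) + ((-4 : ℝ) * c 0 1 0 * c 0 2 0 + (-4 : ℝ) * c 0 1 1 * c 0 2 1 + (-4 : ℝ) * c 0 1 2 * c 0 2 2 + (2 : ℝ) * c 1 0 0 * c 1 1 0 + (2 : ℝ) * c 1 0 1 * c 1 1 1 + (2 : ℝ) * c 1 0 2 * c 1 1 2) * v + ((-6 : ℝ) * c 0 1 0 * c 0 3 0 + (-6 : ℝ) * c 0 1 1 * c 0 3 1 + (-6 : ℝ) * c 0 1 2 * c 0 3 2 + (-4 : ℝ) * c 0 2 0 * c 0 2 0 + (-4 : ℝ) * c 0 2 1 * c 0 2 1 + (-4 : ℝ) * c 0 2 2 * c 0 2 2 + (2 : ℝ) * c 1 0 0 * c 1 2 0 +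 (2 : ℝ) * c 1 0 1 * c 1 2 1 + (2 : ℝ) * c 1 0 2 * c 1 2 2 + c 1 1 0 * c 1 1 0 + c 1 1 1 * c 1 1 1 + c 1 1 2 * c 1 1 2) * v ^ 2 + ((-8 : ℝ) * c 0 1 0 * c 0 4 0 + (-8 : ℝ) * c 0 1 1 * c 0 4 1 + (-8 : ℝ) * c 0 1 2 * c 0 4 2 + (-12 : ℝ) * c 0 2 0 * c 0 3 0 + (-12 : ℝ) * c 0 2 1 * c 0 3 1 + (-12 : ℝ) * c 0 2 2 * c 0 3 2 + (2 : ℝ) * c 1 0 0 * c 1 3 0 + (2 : ℝ) * c 1 0 1 * c 1 3 1 + (2 : ℝ) * c 1 0 2 * c 1 3 2 + (2 : ℝ) * c 1 1 0 * c 1 2 0 + (2 : ℝ) * c 1 1 1 * c 1 2 1 + (2 : ℝ) * c 1 1 2 * c 1 2 2) * v ^ 3 + ((-16 : ℝ) * c 0 2 0 * c 0 4 0 + (-16 : ℝ) * c 0 2 1 * c 0 4 1 + (-16 : ℝ) * c 0 2 2 * c 0 4 2 + (-9 : ℝ) * c 0 3 0 * c 0 3 0 + (-9 : ℝ) * c 0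 3 1 * c 0 3 1 + (-9 : ℝ) * c 0 3 2 * c 0 3 2 + (2 : ℝ) * c 1 0 0 * c 1 4 0 + (2 : ℝ) * c 1 0 1 * c 1 4 1 + (2 : ℝ) * c 1 0 2 * c 1 4 2 + (2 : ℝ) * c 1 1 0 * c 1 3 0 + (2 : ℝ) * c 1 1 1 * c 1 3 1 + (2 : ℝ) * c 1 1 2 * c 1 3 2 + c 1 2 0 * c 1 2 0 + c 1 2 1 * c 1 2 1 + c 1 2 2 * c 1 2 2) * v ^ 4 + ((-24 : ℝ) * c 0 3 0 * c 0 4 0 + (-24 : ℝ) * c 0 3 1 * c 0 4 1 + (-24 : ℝ) * c 0 3 2 * c 0 4 2 + (2 : ℝ) * c 1 1 0 * c 1 4 0 + (2 : ℝ) * c 1 1 1 * c 1 4 1 + (2 : ℝ) * c 1 1 2 * c 1 4 2 + (2 : ℝ) * c 1 2 0 * c 1 3 0 + (2 : ℝ) * c 1 2 1 * c 1 3 1 + (2 : ℝ) * c 1 2 2 * c 1 3 2) * v ^ 5 + ((-16 : ℝ) * c 0 4 0 * c 0 4 0 + (-16 : ℝ) * c 0 4 1 * c 0 4 1 + (-16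 : ℝ) * c 0 4 2 * c 0 4 2 + (2 : ℝ) * c 1 2 0 * c 1 4 0 + (2 : ℝ) * c 1 2 1 * c 1 4 1 + (2 : ℝ) * c 1 2 2 * c 1 4 2 + c 1 3 0 * c 1 3 0 + c 1 3 1 * c 1 3 1 + c 1 3 2 * c 1 3 2) * v ^ 6 + ((2 : ℝ) * c 1 3 0 * c 1 4 0 + (2 : ℝ) * c 1 3 1 * c 1 4 1 + (2 : ℝ) * c 1 3 2 * c 1 4 2) * v ^ 7 + (c 1 4 0 * c 1 4 0 + c 1 4 1 * c 1 4 1 + c 1 4 2 * c 1 4 2) * v ^ 8) + (((-2 : ℝ) * c 0 1 0 * c 1 1 0 + (-2 : ℝ) * c 0 1 1 * c 1 1 1 + (-2 : ℝ) * c 0 1 2 * c 1 1 2 + (4 : ℝ) * c 1 0 0 * c 2 0 0 + (4 : ℝ) * c 1 0 1 * c 2 0 1 + (4 : ℝ) * c 1 0 2 * c 2 0 2) + ((-4 : ℝ) * c 0 1 0 * c 1 2 0 + (-4 : ℝ) * c 0 1 1 * c 1 2 1 + (-4 : ℝ) * c 0 1 2 * c 1 2 2 + (-4 : ℝ) * c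 0 2 0 * c 1 1 0 + (-4 : ℝ) * c 0 2 1 * c 1 1 1 + (-4 : ℝ) * c 0 2 2 * c 1 1 2 + (4 : ℝ) * c 1 0 0 * c 2 1 0 + (4 : ℝ) * c 1 0 1 * c 2 1 1 + (4 : ℝ) * c 1 0 2 * c 2 1 2 + (4 : ℝ) * c 1 1 0 * c 2 0 0 + (4 : ℝ) * c 1 1 1 * c 2 0 1 + (4 : ℝ) * c 1 1 2 * c 2 0 2) * v + ((-6 : ℝ) * c 0 1 0 * c 1 3 0 + (-6 : ℝ) * c 0 1 1 * c 1 3 1 + (-6 : ℝ) * c 0 1 2 * c 1 3 2 + (-8 : ℝ) * c 0 2 0 * c 1 2 0 + (-8 : ℝ) * c 0 2 1 * c 1 2 1 + (-8 : ℝ) * c 0 2 2 * c 1 2 2 + (-6 : ℝ) * c 0 3 0 * c 1 1 0 + (-6 : ℝ) * c 0 3 1 * c 1 1 1 + (-6 : ℝ) * c 0 3 2 * c 1 1 2 + (4 : ℝ) * c 1 0 0 * c 2 2 0 + (4 : ℝ) * c 1 0 1 * c 2 2 1 + (4 : ℝ) * c 1 0 2 * c 2 2 2 + (4 : ℝ)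 * c 1 1 0 * c 2 1 0 + (4 : ℝ) * c 1 1 1 * c 2 1 1 + (4 : ℝ) * c 1 1 2 * c 2 1 2 + (4 : ℝ) * c 1 2 0 * c 2 0 0 + (4 : ℝ) * c 1 2 1 * c 2 0 1 + (4 : ℝ) * c 1 2 2 * c 2 0 2) * v ^ 2 + ((-8 : ℝ) * c 0 1 0 * c 1 4 0 + (-8 : ℝ) * c 0 1 1 * c 1 4 1 + (-8 : ℝ) * c 0 1 2 * c 1 4 2 + (-12 : ℝ) * c 0 2 0 * c 1 3 0 + (-12 : ℝ) * c 0 2 1 * c 1 3 1 + (-12 : ℝ) * c 0 2 2 * c 1 3 2 + (-12 : ℝ) * c 0 3 0 * c 1 2 0 + (-12 : ℝ) * c 0 3 1 * c 1 2 1 + (-12 : ℝ) * c 0 3 2 * c 1 2 2 + (-8 : ℝ) * c 0 4 0 * c 1 1 0 + (-8 : ℝ) * c 0 4 1 * c 1 1 1 + (-8 : ℝ) * c 0 4 2 * c 1 1 2 + (4 : ℝ) * c 1 0 0 * c 2 3 0 + (4 : ℝ) * c 1 0 1 * c 2 3 1 + (4 : ℝ) * c 1 0 2 * c 2 3 2 +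 (4 : ℝ) * c 1 1 0 * c 2 2 0 + (4 : ℝ) * c 1 1 1 * c 2 2 1 + (4 : ℝ) * c 1 1 2 * c 2 2 2 + (4 : ℝ) * c 1 2 0 * c 2 1 0 + (4 : ℝ) * c 1 2 1 * c 2 1 1 + (4 : ℝ) * c 1 2 2 * c 2 1 2 + (4 : ℝ) * c 1 3 0 * c 2 0 0 + (4 : ℝ) * c 1 3 1 * c 2 0 1 + (4 : ℝ) * c 1 3 2 * c 2 0 2) * v ^ 3 + ((-16 : ℝ) * c 0 2 0 * c 1 4 0 + (-16 : ℝ) * c 0 2 1 * c 1 4 1 + (-16 : ℝ) * c 0 2 2 * c 1 4 2 + (-18 : ℝ) * c 0 3 0 * c 1 3 0 + (-18 : ℝ) * c 0 3 1 * c 1 3 1 + (-18 : ℝ) * c 0 3 2 * c 1 3 2 + (-16 : ℝ) * c 0 4 0 * c 1 2 0 + (-16 : ℝ) * c 0 4 1 * c 1 2 1 + (-16 : ℝ) * c 0 4 2 * c 1 2 2 + (4 : ℝ) * c 1 0 0 * c 2 4 0 + (4 : ℝ) * c 1 0 1 * c 2 4 1 + (4 : ℝ) * c 1 0 2 * c 2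 4 2 + (4 : ℝ) * c 1 1 0 * c 2 3 0 + (4 : ℝ) * c 1 1 1 * c 2 3 1 + (4 : ℝ) * c 1 1 2 * c 2 3 2 + (4 : ℝ) * c 1 2 0 * c 2 2 0 + (4 : ℝ) * c 1 2 1 * c 2 2 1 + (4 : ℝ) * c 1 2 2 * c 2 2 2 + (4 : ℝ) * c 1 3 0 * c 2 1 0 + (4 : ℝ) * c 1 3 1 * c 2 1 1 + (4 : ℝ) * c 1 3 2 * c 2 1 2 + (4 : ℝ) * c 1 4 0 * c 2 0 0 + (4 : ℝ) * c 1 4 1 * c 2 0 1 + (4 : ℝ) * c 1 4 2 * c 2 0 2) * v ^ 4 + ((-24 : ℝ) * c 0 3 0 * c 1 4 0 + (-24 : ℝ) * c 0 3 1 * c 1 4 1 + (-24 : ℝ) * c 0 3 2 * c 1 4 2 + (-24 : ℝ) * c 0 4 0 * c 1 3 0 + (-24 : ℝ) * c 0 4 1 * c 1 3 1 + (-24 : ℝ) * c 0 4 2 * c 1 3 2 + (4 : ℝ) * c 1 1 0 * c 2 4 0 + (4 : ℝ) * c 1 1 1 * c 2 4 1 + (4 : ℝ) * c 1 1 2 *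 c 2 4 2 + (4 : ℝ) * c 1 2 0 * c 2 3 0 + (4 : ℝ) * c 1 2 1 * c 2 3 1 + (4 : ℝ) * c 1 2 2 * c 2 3 2 + (4 : ℝ) * c 1 3 0 * c 2 2 0 + (4 : ℝ) * c 1 3 1 * c 2 2 1 + (4 : ℝ) * c 1 3 2 * c 2 2 2 + (4 : ℝ) * c 1 4 0 * c 2 1 0 + (4 : ℝ) * c 1 4 1 * c 2 1 1 + (4 : ℝ) * c 1 4 2 * c 2 1 2) * v ^ 5 + ((-32 : ℝ) * c 0 4 0 * c 1 4 0 + (-32 : ℝ) * c 0 4 1 * c 1 4 1 + (-32 : ℝ) * c 0 4 2 * c 1 4 2 + (4 : ℝ) * c 1 2 0 * c 2 4 0 + (4 : ℝ) * c 1 2 1 * c 2 4 1 + (4 : ℝ) * c 1 2 2 * c 2 4 2 + (4 : ℝ) * c 1 3 0 * c 2 3 0 + (4 : ℝ) * c 1 3 1 * c 2 3 1 + (4 : ℝ) * c 1 3 2 * c 2 3 2 + (4 : ℝ) * c 1 4 0 * c 2 2 0 + (4 : ℝ) * c 1 4 1 * c 2 2 1 + (4 : ℝ) * c 1 4 2 *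 c 2 2 2) * v ^ 6 + ((4 : ℝ) * c 1 3 0 * c 2 4 0 + (4 : ℝ) * c 1 3 1 * c 2 4 1 + (4 : ℝ) * c 1 3 2 * c 2 4 2 + (4 : ℝ) * c 1 4 0 * c 2 3 0 + (4 : ℝ) * c 1 4 1 * c 2 3 1 + (4 : ℝ) * c 1 4 2 * c 2 3 2) * v ^ 7 + ((4 : ℝ) * c 1 4 0 * c 2 4 0 + (4 : ℝ) * c 1 4 1 * c 2 4 1 + (4 : ℝ) * c 1 4 2 * c 2 4 2) * v ^ 8) * u + (((-2 : ℝ) * c 0 1 0 * c 2 1 0 + (-2 : ℝ) * c 0 1 1 * c 2 1 1 + (-2 : ℝ) * c 0 1 2 * c 2 1 2 + (6 : ℝ) * c 1 0 0 * c 3 0 0 + (6 : ℝ) * c 1 0 1 * c 3 0 1 + (6 : ℝ) * c 1 0 2 * c 3 0 2 + (-1 : ℝ) * c 1 1 0 * c 1 1 0 + (-1 : ℝ) * c 1 1 1 * c 1 1 1 + (-1 : ℝ) * c 1 1 2 * c 1 1 2 + (4 : ℝ) * c 2 0 0 * c 2 0 0 + (4 : ℝ) * c 2 0 1 * c 2 0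 1 + (4 : ℝ) * c 2 0 2 * c 2 0 2) + ((-4 : ℝ) * c 0 1 0 * c 2 2 0 + (-4 : ℝ) * c 0 1 1 * c 2 2 1 + (-4 : ℝ) * c 0 1 2 * c 2 2 2 + (-4 : ℝ) * c 0 2 0 * c 2 1 0 + (-4 : ℝ) * c 0 2 1 * c 2 1 1 + (-4 : ℝ) * c 0 2 2 * c 2 1 2 + (6 : ℝ) * c 1 0 0 * c 3 1 0 + (6 : ℝ) * c 1 0 1 * c 3 1 1 + (6 : ℝ) * c 1 0 2 * c 3 1 2 + (-4 : ℝ) * c 1 1 0 * c 1 2 0 + (6 : ℝ) * c 1 1 0 * c 3 0 0 + (-4 : ℝ) * c 1 1 1 * c 1 2 1 + (6 : ℝ) * c 1 1 1 * c 3 0 1 + (-4 : ℝ) * c 1 1 2 * c 1 2 2 + (6 : ℝ) * c 1 1 2 * c 3 0 2 + (8 : ℝ) * c 2 0 0 * c 2 1 0 + (8 : ℝ) * c 2 0 1 * c 2 1 1 + (8 : ℝ) * c 2 0 2 * c 2 1 2) * v + ((-6 : ℝ) * c 0 1 0 * c 2 3 0 + (-6 : ℝ) * c 0 1 1 * c 2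 3 1 + (-6 : ℝ) * c 0 1 2 * c 2 3 2 + (-8 : ℝ) * c 0 2 0 * c 2 2 0 + (-8 : ℝ) * c 0 2 1 * c 2 2 1 + (-8 : ℝ) * c 0 2 2 * c 2 2 2 + (-6 : ℝ) * c 0 3 0 * c 2 1 0 + (-6 : ℝ) * c 0 3 1 * c 2 1 1 + (-6 : ℝ) * c 0 3 2 * c 2 1 2 + (6 : ℝ) * c 1 0 0 * c 3 2 0 + (6 : ℝ) * c 1 0 1 * c 3 2 1 + (6 : ℝ) * c 1 0 2 * c 3 2 2 + (-6 : ℝ) * c 1 1 0 * c 1 3 0 + (6 : ℝ) * c 1 1 0 * c 3 1 0 + (-6 : ℝ) * c 1 1 1 * c 1 3 1 + (6 : ℝ) * c 1 1 1 * c 3 1 1 + (-6 : ℝ) * c 1 1 2 * c 1 3 2 + (6 : ℝ) * c 1 1 2 * c 3 1 2 + (6 : ℝ) * c 1 2 0 * c 3 0 0 + (-4 : ℝ) * c 1 2 0 * c 1 2 0 + (6 : ℝ) * c 1 2 1 * c 3 0 1 + (-4 : ℝ) * c 1 2 1 * c 1 2 1 + (6 : ℝ) * c 1 2 2 * c 3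 0 2 + (-4 : ℝ) * c 1 2 2 * c 1 2 2 + (8 : ℝ) * c 2 0 0 * c 2 2 0 + (8 : ℝ) * c 2 0 1 * c 2 2 1 + (8 : ℝ) * c 2 0 2 * c 2 2 2 + (4 : ℝ) * c 2 1 0 * c 2 1 0 + (4 : ℝ) * c 2 1 1 * c 2 1 1 + (4 : ℝ) * c 2 1 2 * c 2 1 2) * v ^ 2 + ((-8 : ℝ) * c 0 1 0 * c 2 4 0 + (-8 : ℝ) * c 0 1 1 * c 2 4 1 + (-8 : ℝ) * c 0 1 2 * c 2 4 2 + (-12 : ℝ) * c 0 2 0 * c 2 3 0 + (-12 : ℝ) * c 0 2 1 * c 2 3 1 + (-12 : ℝ) * c 0 2 2 * c 2 3 2 + (-12 : ℝ) * c 0 3 0 * c 2 2 0 + (-12 : ℝ) * c 0 3 1 * c 2 2 1 + (-12 : ℝ) * c 0 3 2 * c 2 2 2 + (-8 : ℝ) * c 0 4 0 * c 2 1 0 + (-8 : ℝ) * c 0 4 1 * c 2 1 1 + (-8 : ℝ) * c 0 4 2 * c 2 1 2 + (6 : ℝ) * c 1 0 0 * c 3 3 0 + (6 : ℝ) * c 1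 0 1 * c 3 3 1 + (6 : ℝ) * c 1 0 2 * c 3 3 2 + (-8 : ℝ) * c 1 1 0 * c 1 4 0 + (6 : ℝ) * c 1 1 0 * c 3 2 0 + (-8 : ℝ) * c 1 1 1 * c 1 4 1 + (6 : ℝ) * c 1 1 1 * c 3 2 1 + (-8 : ℝ) * c 1 1 2 * c 1 4 2 + (6 : ℝ) * c 1 1 2 * c 3 2 2 + (-12 : ℝ) * c 1 2 0 * c 1 3 0 + (6 : ℝ) * c 1 2 0 * c 3 1 0 + (-12 : ℝ) * c 1 2 1 * c 1 3 1 + (6 : ℝ) * c 1 2 1 * c 3 1 1 + (-12 : ℝ) * c 1 2 2 * c 1 3 2 + (6 : ℝ) * c 1 2 2 * c 3 1 2 + (6 : ℝ) * c 1 3 0 * c 3 0 0 + (6 : ℝ) * c 1 3 1 * c 3 0 1 + (6 : ℝ) * c 1 3 2 * c 3 0 2 + (8 : ℝ) * c 2 0 0 * c 2 3 0 + (8 : ℝ) * c 2 0 1 * c 2 3 1 + (8 : ℝ) * c 2 0 2 * c 2 3 2 + (8 : ℝ) * c 2 1 0 * c 2 2 0 + (8 : ℝ) * c 2 1 1 *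 c 2 2 1 + (8 : ℝ) * c 2 1 2 * c 2 2 2) * v ^ 3 + ((-16 : ℝ) * c 0 2 0 * c 2 4 0 + (-16 : ℝ) * c 0 2 1 * c 2 4 1 + (-16 : ℝ) * c 0 2 2 * c 2 4 2 + (-18 : ℝ) * c 0 3 0 * c 2 3 0 + (-18 : ℝ) * c 0 3 1 * c 2 3 1 + (-18 : ℝ) * c 0 3 2 * c 2 3 2 + (-16 : ℝ) * c 0 4 0 * c 2 2 0 + (-16 : ℝ) * c 0 4 1 * c 2 2 1 + (-16 : ℝ) * c 0 4 2 * c 2 2 2 + (6 : ℝ) * c 1 0 0 * c 3 4 0 + (6 : ℝ) * c 1 0 1 * c 3 4 1 + (6 : ℝ) * c 1 0 2 * c 3 4 2 + (6 : ℝ) * c 1 1 0 * c 3 3 0 + (6 : ℝ) * c 1 1 1 * c 3 3 1 + (6 : ℝ) * c 1 1 2 * c 3 3 2 + (-16 : ℝ) * c 1 2 0 * c 1 4 0 + (6 : ℝ) * c 1 2 0 * c 3 2 0 + (-16 : ℝ) * c 1 2 1 * c 1 4 1 + (6 : ℝ) * c 1 2 1 * c 3 2 1 + (-16 : ℝ)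 * c 1 2 2 * c 1 4 2 + (6 : ℝ) * c 1 2 2 * c 3 2 2 + (6 : ℝ) * c 1 3 0 * c 3 1 0 + (-9 : ℝ) * c 1 3 0 * c 1 3 0 + (6 : ℝ) * c 1 3 1 * c 3 1 1 + (-9 : ℝ) * c 1 3 1 * c 1 3 1 + (6 : ℝ) * c 1 3 2 * c 3 1 2 + (-9 : ℝ) * c 1 3 2 * c 1 3 2 + (6 : ℝ) * c 1 4 0 * c 3 0 0 + (6 : ℝ) * c 1 4 1 * c 3 0 1 + (6 : ℝ) * c 1 4 2 * c 3 0 2 + (8 : ℝ) * c 2 0 0 * c 2 4 0 + (8 : ℝ) * c 2 0 1 * c 2 4 1 + (8 : ℝ) * c 2 0 2 * c 2 4 2 + (8 : ℝ) * c 2 1 0 * c 2 3 0 + (8 : ℝ) * c 2 1 1 * c 2 3 1 + (8 : ℝ) * c 2 1 2 * c 2 3 2 + (4 : ℝ) * c 2 2 0 * c 2 2 0 + (4 : ℝ) * c 2 2 1 * c 2 2 1 + (4 : ℝ) * c 2 2 2 * c 2 2 2) * v ^ 4 + ((-24 : ℝ) * c 0 3 0 * c 2 4 0 + (-24 : ℝ)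 * c 0 3 1 * c 2 4 1 + (-24 : ℝ) * c 0 3 2 * c 2 4 2 + (-24 : ℝ) * c 0 4 0 * c 2 3 0 + (-24 : ℝ) * c 0 4 1 * c 2 3 1 + (-24 : ℝ) * c 0 4 2 * c 2 3 2 + (6 : ℝ) * c 1 1 0 * c 3 4 0 + (6 : ℝ) * c 1 1 1 * c 3 4 1 + (6 : ℝ) * c 1 1 2 * c 3 4 2 + (6 : ℝ) * c 1 2 0 * c 3 3 0 + (6 : ℝ) * c 1 2 1 * c 3 3 1 + (6 : ℝ) * c 1 2 2 * c 3 3 2 + (-24 : ℝ) * c 1 3 0 * c 1 4 0 + (6 : ℝ) * c 1 3 0 * c 3 2 0 + (-24 : ℝ) * c 1 3 1 * c 1 4 1 + (6 : ℝ) * c 1 3 1 * c 3 2 1 + (-24 : ℝ) * c 1 3 2 * c 1 4 2 + (6 : ℝ) * c 1 3 2 * c 3 2 2 + (6 : ℝ) * c 1 4 0 * c 3 1 0 + (6 : ℝ) * c 1 4 1 * c 3 1 1 + (6 : ℝ) * c 1 4 2 * c 3 1 2 + (8 : ℝ) * c 2 1 0 * c 2 4 0 + (8 : ℝ) * c 2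 1 1 * c 2 4 1 + (8 : ℝ) * c 2 1 2 * c 2 4 2 + (8 : ℝ) * c 2 2 0 * c 2 3 0 + (8 : ℝ) * c 2 2 1 * c 2 3 1 + (8 : ℝ) * c 2 2 2 * c 2 3 2) * v ^ 5 + ((-32 : ℝ) * c 0 4 0 * c 2 4 0 + (-32 : ℝ) * c 0 4 1 * c 2 4 1 + (-32 : ℝ) * c 0 4 2 * c 2 4 2 + (6 : ℝ) * c 1 2 0 * c 3 4 0 + (6 : ℝ) * c 1 2 1 * c 3 4 1 + (6 : ℝ) * c 1 2 2 * c 3 4 2 + (6 : ℝ) * c 1 3 0 * c 3 3 0 + (6 : ℝ) * c 1 3 1 * c 3 3 1 + (6 : ℝ) * c 1 3 2 * c 3 3 2 + (6 : ℝ) * c 1 4 0 * c 3 2 0 + (-16 : ℝ) * c 1 4 0 * c 1 4 0 + (6 : ℝ) * c 1 4 1 * c 3 2 1 + (-16 : ℝ) * c 1 4 1 * c 1 4 1 + (6 : ℝ) * c 1 4 2 * c 3 2 2 + (-16 : ℝ) * c 1 4 2 * c 1 4 2 + (8 : ℝ) * c 2 2 0 * c 2 4 0 + (8 : ℝ) *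 c 2 2 1 * c 2 4 1 + (8 : ℝ) * c 2 2 2 * c 2 4 2 + (4 : ℝ) * c 2 3 0 * c 2 3 0 + (4 : ℝ) * c 2 3 1 * c 2 3 1 + (4 : ℝ) * c 2 3 2 * c 2 3 2) * v ^ 6 + ((6 : ℝ) * c 1 3 0 * c 3 4 0 + (6 : ℝ) * c 1 3 1 * c 3 4 1 + (6 : ℝ) * c 1 3 2 * c 3 4 2 + (6 : ℝ) * c 1 4 0 * c 3 3 0 + (6 : ℝ) * c 1 4 1 * c 3 3 1 + (6 : ℝ) * c 1 4 2 * c 3 3 2 + (8 : ℝ) * c 2 3 0 * c 2 4 0 + (8 : ℝ) * c 2 3 1 * c 2 4 1 + (8 : ℝ) * c 2 3 2 * c 2 4 2) * v ^ 7 + ((6 : ℝ) * c 1 4 0 * c 3 4 0 + (6 : ℝ) * c 1 4 1 * c 3 4 1 + (6 : ℝ) * c 1 4 2 * c 3 4 2 + (4 : ℝ) * c 2 4 0 * c 2 4 0 + (4 : ℝ) * c 2 4 1 * c 2 4 1 + (4 : ℝ) * c 2 4 2 * c 2 4 2) * v ^ 8) * u ^ 2 + (((-2 : ℝ) * c 0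 1 0 * c 3 1 0 + (-2 : ℝ) * c 0 1 1 * c 3 1 1 + (-2 : ℝ) * c 0 1 2 * c 3 1 2 + (8 : ℝ) * c 1 0 0 * c 4 0 0 + (8 : ℝ) * c 1 0 1 * c 4 0 1 + (8 : ℝ) * c 1 0 2 * c 4 0 2 + (-2 : ℝ) * c 1 1 0 * c 2 1 0 + (-2 : ℝ) * c 1 1 1 * c 2 1 1 + (-2 : ℝ) * c 1 1 2 * c 2 1 2 + (12 : ℝ) * c 2 0 0 * c 3 0 0 + (12 : ℝ) * c 2 0 1 * c 3 0 1 + (12 : ℝ) * c 2 0 2 * c 3 0 2) + ((-4 : ℝ) * c 0 1 0 * c 3 2 0 + (-4 : ℝ) * c 0 1 1 * c 3 2 1 + (-4 : ℝ) * c 0 1 2 * c 3 2 2 + (-4 : ℝ) * c 0 2 0 * c 3 1 0 + (-4 : ℝ) * c 0 2 1 * c 3 1 1 + (-4 : ℝ) * c 0 2 2 * c 3 1 2 + (8 : ℝ) * c 1 0 0 * c 4 1 0 + (8 : ℝ) * c 1 0 1 * c 4 1 1 + (8 : ℝ) * c 1 0 2 * c 4 1 2 + (-4 : ℝ) * c 1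 1 0 * c 2 2 0 + (8 : ℝ) * c 1 1 0 * c 4 0 0 + (-4 : ℝ) * c 1 1 1 * c 2 2 1 + (8 : ℝ) * c 1 1 1 * c 4 0 1 + (-4 : ℝ) * c 1 1 2 * c 2 2 2 + (8 : ℝ) * c 1 1 2 * c 4 0 2 + (-4 : ℝ) * c 1 2 0 * c 2 1 0 + (-4 : ℝ) * c 1 2 1 * c 2 1 1 + (-4 : ℝ) * c 1 2 2 * c 2 1 2 + (12 : ℝ) * c 2 0 0 * c 3 1 0 + (12 : ℝ) * c 2 0 1 * c 3 1 1 + (12 : ℝ) * c 2 0 2 * c 3 1 2 + (12 : ℝ) * c 2 1 0 * c 3 0 0 + (12 : ℝ) * c 2 1 1 * c 3 0 1 + (12 : ℝ) * c 2 1 2 * c 3 0 2) * v + ((-6 : ℝ) * c 0 1 0 * c 3 3 0 + (-6 : ℝ) * c 0 1 1 * c 3 3 1 + (-6 : ℝ) * c 0 1 2 * c 3 3 2 + (-8 : ℝ) * c 0 2 0 * c 3 2 0 + (-8 : ℝ) * c 0 2 1 * c 3 2 1 + (-8 : ℝ) * c 0 2 2 * c 3 2 2 + (-6 : ℝ) *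 c 0 3 0 * c 3 1 0 + (-6 : ℝ) * c 0 3 1 * c 3 1 1 + (-6 : ℝ) * c 0 3 2 * c 3 1 2 + (8 : ℝ) * c 1 0 0 * c 4 2 0 + (8 : ℝ) * c 1 0 1 * c 4 2 1 + (8 : ℝ) * c 1 0 2 * c 4 2 2 + (-6 : ℝ) * c 1 1 0 * c 2 3 0 + (8 : ℝ) * c 1 1 0 * c 4 1 0 + (-6 : ℝ) * c 1 1 1 * c 2 3 1 + (8 : ℝ) * c 1 1 1 * c 4 1 1 + (-6 : ℝ) * c 1 1 2 * c 2 3 2 + (8 : ℝ) * c 1 1 2 * c 4 1 2 + (-8 : ℝ) * c 1 2 0 * c 2 2 0 + (8 : ℝ) * c 1 2 0 * c 4 0 0 + (-8 : ℝ) * c 1 2 1 * c 2 2 1 + (8 : ℝ) * c 1 2 1 * c 4 0 1 + (-8 : ℝ) * c 1 2 2 * c 2 2 2 + (8 : ℝ) * c 1 2 2 * c 4 0 2 + (-6 : ℝ) * c 1 3 0 * c 2 1 0 + (-6 : ℝ) * c 1 3 1 * c 2 1 1 + (-6 : ℝ) * c 1 3 2 * c 2 1 2 + (12 : ℝ) *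 c 2 0 0 * c 3 2 0 + (12 : ℝ) * c 2 0 1 * c 3 2 1 + (12 : ℝ) * c 2 0 2 * c 3 2 2 + (12 : ℝ) * c 2 1 0 * c 3 1 0 + (12 : ℝ) * c 2 1 1 * c 3 1 1 + (12 : ℝ) * c 2 1 2 * c 3 1 2 + (12 : ℝ) * c 2 2 0 * c 3 0 0 + (12 : ℝ) * c 2 2 1 * c 3 0 1 + (12 : ℝ) * c 2 2 2 * c 3 0 2) * v ^ 2 + ((-8 : ℝ) * c 0 1 0 * c 3 4 0 + (-8 : ℝ) * c 0 1 1 * c 3 4 1 + (-8 : ℝ) * c 0 1 2 * c 3 4 2 + (-12 : ℝ) * c 0 2 0 * c 3 3 0 + (-12 : ℝ) * c 0 2 1 * c 3 3 1 + (-12 : ℝ) * c 0 2 2 * c 3 3 2 + (-12 : ℝ) * c 0 3 0 * c 3 2 0 + (-12 : ℝ) * c 0 3 1 * c 3 2 1 + (-12 : ℝ) * c 0 3 2 * c 3 2 2 + (-8 : ℝ) * c 0 4 0 * c 3 1 0 + (-8 : ℝ) * c 0 4 1 * c 3 1 1 + (-8 : ℝ) * c 0 4 2 * c 3 1 2 +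 (8 : ℝ) * c 1 0 0 * c 4 3 0 + (8 : ℝ) * c 1 0 1 * c 4 3 1 + (8 : ℝ) * c 1 0 2 * c 4 3 2 + (-8 : ℝ) * c 1 1 0 * c 2 4 0 + (8 : ℝ) * c 1 1 0 * c 4 2 0 + (-8 : ℝ) * c 1 1 1 * c 2 4 1 + (8 : ℝ) * c 1 1 1 * c 4 2 1 + (-8 : ℝ) * c 1 1 2 * c 2 4 2 + (8 : ℝ) * c 1 1 2 * c 4 2 2 + (-12 : ℝ) * c 1 2 0 * c 2 3 0 + (8 : ℝ) * c 1 2 0 * c 4 1 0 + (-12 : ℝ) * c 1 2 1 * c 2 3 1 + (8 : ℝ) * c 1 2 1 * c 4 1 1 + (-12 : ℝ) * c 1 2 2 * c 2 3 2 + (8 : ℝ) * c 1 2 2 * c 4 1 2 + (-12 : ℝ) * c 1 3 0 * c 2 2 0 + (8 : ℝ) * c 1 3 0 * c 4 0 0 + (-12 : ℝ) * c 1 3 1 * c 2 2 1 + (8 : ℝ) * c 1 3 1 * c 4 0 1 + (-12 : ℝ) * c 1 3 2 * c 2 2 2 + (8 : ℝ) * c 1 3 2 * c 4 0 2 + (-8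 : ℝ) * c 1 4 0 * c 2 1 0 + (-8 : ℝ) * c 1 4 1 * c 2 1 1 + (-8 : ℝ) * c 1 4 2 * c 2 1 2 + (12 : ℝ) * c 2 0 0 * c 3 3 0 + (12 : ℝ) * c 2 0 1 * c 3 3 1 + (12 : ℝ) * c 2 0 2 * c 3 3 2 + (12 : ℝ) * c 2 1 0 * c 3 2 0 + (12 : ℝ) * c 2 1 1 * c 3 2 1 + (12 : ℝ) * c 2 1 2 * c 3 2 2 + (12 : ℝ) * c 2 2 0 * c 3 1 0 + (12 : ℝ) * c 2 2 1 * c 3 1 1 + (12 : ℝ) * c 2 2 2 * c 3 1 2 + (12 : ℝ) * c 2 3 0 * c 3 0 0 + (12 : ℝ) * c 2 3 1 * c 3 0 1 + (12 : ℝ) * c 2 3 2 * c 3 0 2) * v ^ 3 + ((-16 : ℝ) * c 0 2 0 * c 3 4 0 + (-16 : ℝ) * c 0 2 1 * c 3 4 1 + (-16 : ℝ) * c 0 2 2 * c 3 4 2 + (-18 : ℝ) * c 0 3 0 * c 3 3 0 + (-18 : ℝ) * c 0 3 1 * c 3 3 1 + (-18 : ℝ) * c 0 3 2 * c 3 3 2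 + (-16 : ℝ) * c 0 4 0 * c 3 2 0 + (-16 : ℝ) * c 0 4 1 * c 3 2 1 + (-16 : ℝ) * c 0 4 2 * c 3 2 2 + (8 : ℝ) * c 1 0 0 * c 4 4 0 + (8 : ℝ) * c 1 0 1 * c 4 4 1 + (8 : ℝ) * c 1 0 2 * c 4 4 2 + (8 : ℝ) * c 1 1 0 * c 4 3 0 + (8 : ℝ) * c 1 1 1 * c 4 3 1 + (8 : ℝ) * c 1 1 2 * c 4 3 2 + (-16 : ℝ) * c 1 2 0 * c 2 4 0 + (8 : ℝ) * c 1 2 0 * c 4 2 0 + (-16 : ℝ) * c 1 2 1 * c 2 4 1 + (8 : ℝ) * c 1 2 1 * c 4 2 1 + (-16 : ℝ) * c 1 2 2 * c 2 4 2 + (8 : ℝ) * c 1 2 2 * c 4 2 2 + (-18 : ℝ) * c 1 3 0 * c 2 3 0 + (8 : ℝ) * c 1 3 0 * c 4 1 0 + (-18 : ℝ) * c 1 3 1 * c 2 3 1 + (8 : ℝ) * c 1 3 1 * c 4 1 1 + (-18 : ℝ) * c 1 3 2 * c 2 3 2 + (8 : ℝ) * c 1 3 2 * c 4 1 2 + (-16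 : ℝ) * c 1 4 0 * c 2 2 0 + (8 : ℝ) * c 1 4 0 * c 4 0 0 + (-16 : ℝ) * c 1 4 1 * c 2 2 1 + (8 : ℝ) * c 1 4 1 * c 4 0 1 + (-16 : ℝ) * c 1 4 2 * c 2 2 2 + (8 : ℝ) * c 1 4 2 * c 4 0 2 + (12 : ℝ) * c 2 0 0 * c 3 4 0 + (12 : ℝ) * c 2 0 1 * c 3 4 1 + (12 : ℝ) * c 2 0 2 * c 3 4 2 + (12 : ℝ) * c 2 1 0 * c 3 3 0 + (12 : ℝ) * c 2 1 1 * c 3 3 1 + (12 : ℝ) * c 2 1 2 * c 3 3 2 + (12 : ℝ) * c 2 2 0 * c 3 2 0 + (12 : ℝ) * c 2 2 1 * c 3 2 1 + (12 : ℝ) * c 2 2 2 * c 3 2 2 + (12 : ℝ) * c 2 3 0 * c 3 1 0 + (12 : ℝ) * c 2 3 1 * c 3 1 1 + (12 : ℝ) * c 2 3 2 * c 3 1 2 + (12 : ℝ) * c 2 4 0 * c 3 0 0 + (12 : ℝ) * c 2 4 1 * c 3 0 1 + (12 : ℝ) * c 2 4 2 * c 3 0 2) * v ^ 4 + ((-24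 : ℝ) * c 0 3 0 * c 3 4 0 + (-24 : ℝ) * c 0 3 1 * c 3 4 1 + (-24 : ℝ) * c 0 3 2 * c 3 4 2 + (-24 : ℝ) * c 0 4 0 * c 3 3 0 + (-24 : ℝ) * c 0 4 1 * c 3 3 1 + (-24 : ℝ) * c 0 4 2 * c 3 3 2 + (8 : ℝ) * c 1 1 0 * c 4 4 0 + (8 : ℝ) * c 1 1 1 * c 4 4 1 + (8 : ℝ) * c 1 1 2 * c 4 4 2 + (8 : ℝ) * c 1 2 0 * c 4 3 0 + (8 : ℝ) * c 1 2 1 * c 4 3 1 + (8 : ℝ) * c 1 2 2 * c 4 3 2 + (-24 : ℝ) * c 1 3 0 * c 2 4 0 + (8 : ℝ) * c 1 3 0 * c 4 2 0 + (-24 : ℝ) * c 1 3 1 * c 2 4 1 + (8 : ℝ) * c 1 3 1 * c 4 2 1 + (-24 : ℝ) * c 1 3 2 * c 2 4 2 + (8 : ℝ) * c 1 3 2 * c 4 2 2 + (-24 : ℝ) * c 1 4 0 * c 2 3 0 + (8 : ℝ) * c 1 4 0 * c 4 1 0 + (-24 : ℝ) * c 1 4 1 * c 2 3 1 + (8 :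 ℝ) * c 1 4 1 * c 4 1 1 + (-24 : ℝ) * c 1 4 2 * c 2 3 2 + (8 : ℝ) * c 1 4 2 * c 4 1 2 + (12 : ℝ) * c 2 1 0 * c 3 4 0 + (12 : ℝ) * c 2 1 1 * c 3 4 1 + (12 : ℝ) * c 2 1 2 * c 3 4 2 + (12 : ℝ) * c 2 2 0 * c 3 3 0 + (12 : ℝ) * c 2 2 1 * c 3 3 1 + (12 : ℝ) * c 2 2 2 * c 3 3 2 + (12 : ℝ) * c 2 3 0 * c 3 2 0 + (12 : ℝ) * c 2 3 1 * c 3 2 1 + (12 : ℝ) * c 2 3 2 * c 3 2 2 + (12 : ℝ) * c 2 4 0 * c 3 1 0 + (12 : ℝ) * c 2 4 1 * c 3 1 1 + (12 : ℝ) * c 2 4 2 * c 3 1 2) * v ^ 5 + ((-32 : ℝ) * c 0 4 0 * c 3 4 0 + (-32 : ℝ) * c 0 4 1 * c 3 4 1 + (-32 : ℝ) * c 0 4 2 * c 3 4 2 + (8 : ℝ) * c 1 2 0 * c 4 4 0 + (8 : ℝ) * c 1 2 1 * c 4 4 1 + (8 : ℝ) * c 1 2 2 * c 4 4 2 + (8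 : ℝ) * c 1 3 0 * c 4 3 0 + (8 : ℝ) * c 1 3 1 * c 4 3 1 + (8 : ℝ) * c 1 3 2 * c 4 3 2 + (-32 : ℝ) * c 1 4 0 * c 2 4 0 + (8 : ℝ) * c 1 4 0 * c 4 2 0 + (-32 : ℝ) * c 1 4 1 * c 2 4 1 + (8 : ℝ) * c 1 4 1 * c 4 2 1 + (-32 : ℝ) * c 1 4 2 * c 2 4 2 + (8 : ℝ) * c 1 4 2 * c 4 2 2 + (12 : ℝ) * c 2 2 0 * c 3 4 0 + (12 : ℝ) * c 2 2 1 * c 3 4 1 + (12 : ℝ) * c 2 2 2 * c 3 4 2 + (12 : ℝ) * c 2 3 0 * c 3 3 0 + (12 : ℝ) * c 2 3 1 * c 3 3 1 + (12 : ℝ) * c 2 3 2 * c 3 3 2 + (12 : ℝ) * c 2 4 0 * c 3 2 0 + (12 : ℝ) * c 2 4 1 * c 3 2 1 + (12 : ℝ) * c 2 4 2 * c 3 2 2) * v ^ 6 + ((8 : ℝ) * c 1 3 0 * c 4 4 0 + (8 : ℝ) * c 1 3 1 * c 4 4 1 + (8 : ℝ) * c 1 3 2 * c 4 4 2 + (8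 : ℝ) * c 1 4 0 * c 4 3 0 + (8 : ℝ) * c 1 4 1 * c 4 3 1 + (8 : ℝ) * c 1 4 2 * c 4 3 2 + (12 : ℝ) * c 2 3 0 * c 3 4 0 + (12 : ℝ) * c 2 3 1 * c 3 4 1 + (12 : ℝ) * c 2 3 2 * c 3 4 2 + (12 : ℝ) * c 2 4 0 * c 3 3 0 + (12 : ℝ) * c 2 4 1 * c 3 3 1 + (12 : ℝ) * c 2 4 2 * c 3 3 2) * v ^ 7 + ((8 : ℝ) * c 1 4 0 * c 4 4 0 + (8 : ℝ) * c 1 4 1 * c 4 4 1 + (8 : ℝ) * c 1 4 2 * c 4 4 2 + (12 : ℝ) * c 2 4 0 * c 3 4 0 + (12 : ℝ) * c 2 4 1 * c 3 4 1 + (12 : ℝ) * c 2 4 2 * c 3 4 2) * v ^ 8) * u ^ 3 + (((-2 : ℝ) * c 0 1 0 * c 4 1 0 + (-2 : ℝ) * c 0 1 1 * c 4 1 1 + (-2 : ℝ) * c 0 1 2 * c 4 1 2 + (-2 : ℝ) * c 1 1 0 * c 3 1 0 + (-2 : ℝ) * c 1 1 1 * c 3 1 1 + (-2 : ℝ) *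 c 1 1 2 * c 3 1 2 + (16 : ℝ) * c 2 0 0 * c 4 0 0 + (16 : ℝ) * c 2 0 1 * c 4 0 1 + (16 : ℝ) * c 2 0 2 * c 4 0 2 + (-1 : ℝ) * c 2 1 0 * c 2 1 0 + (-1 : ℝ) * c 2 1 1 * c 2 1 1 + (-1 : ℝ) * c 2 1 2 * c 2 1 2 + (9 : ℝ) * c 3 0 0 * c 3 0 0 + (9 : ℝ) * c 3 0 1 * c 3 0 1 + (9 : ℝ) * c 3 0 2 * c 3 0 2) + ((-4 : ℝ) * c 0 1 0 * c 4 2 0 + (-4 : ℝ) * c 0 1 1 * c 4 2 1 + (-4 : ℝ) * c 0 1 2 * c 4 2 2 + (-4 : ℝ) * c 0 2 0 * c 4 1 0 + (-4 : ℝ) * c 0 2 1 * c 4 1 1 + (-4 : ℝ) * c 0 2 2 * c 4 1 2 + (-4 : ℝ) * c 1 1 0 * c 3 2 0 + (-4 : ℝ) * c 1 1 1 * c 3 2 1 + (-4 : ℝ) * c 1 1 2 * c 3 2 2 + (-4 : ℝ) * c 1 2 0 * c 3 1 0 + (-4 : ℝ) * c 1 2 1 * c 3 1 1 + (-4 : ℝ)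 * c 1 2 2 * c 3 1 2 + (16 : ℝ) * c 2 0 0 * c 4 1 0 + (16 : ℝ) * c 2 0 1 * c 4 1 1 + (16 : ℝ) * c 2 0 2 * c 4 1 2 + (-4 : ℝ) * c 2 1 0 * c 2 2 0 + (16 : ℝ) * c 2 1 0 * c 4 0 0 + (-4 : ℝ) * c 2 1 1 * c 2 2 1 + (16 : ℝ) * c 2 1 1 * c 4 0 1 + (-4 : ℝ) * c 2 1 2 * c 2 2 2 + (16 : ℝ) * c 2 1 2 * c 4 0 2 + (18 : ℝ) * c 3 0 0 * c 3 1 0 + (18 : ℝ) * c 3 0 1 * c 3 1 1 + (18 : ℝ) * c 3 0 2 * c 3 1 2) * v + ((-6 : ℝ) * c 0 1 0 * c 4 3 0 + (-6 : ℝ) * c 0 1 1 * c 4 3 1 + (-6 : ℝ) * c 0 1 2 * c 4 3 2 + (-8 : ℝ) * c 0 2 0 * c 4 2 0 + (-8 : ℝ) * c 0 2 1 * c 4 2 1 + (-8 : ℝ) * c 0 2 2 * c 4 2 2 + (-6 : ℝ) * c 0 3 0 * c 4 1 0 + (-6 : ℝ) * c 0 3 1 * c 4 1 1 + (-6 : ℝ)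 * c 0 3 2 * c 4 1 2 + (-6 : ℝ) * c 1 1 0 * c 3 3 0 + (-6 : ℝ) * c 1 1 1 * c 3 3 1 + (-6 : ℝ) * c 1 1 2 * c 3 3 2 + (-8 : ℝ) * c 1 2 0 * c 3 2 0 + (-8 : ℝ) * c 1 2 1 * c 3 2 1 + (-8 : ℝ) * c 1 2 2 * c 3 2 2 + (-6 : ℝ) * c 1 3 0 * c 3 1 0 + (-6 : ℝ) * c 1 3 1 * c 3 1 1 + (-6 : ℝ) * c 1 3 2 * c 3 1 2 + (16 : ℝ) * c 2 0 0 * c 4 2 0 + (16 : ℝ) * c 2 0 1 * c 4 2 1 + (16 : ℝ) * c 2 0 2 * c 4 2 2 + (-6 : ℝ) * c 2 1 0 * c 2 3 0 + (16 : ℝ) * c 2 1 0 * c 4 1 0 + (-6 : ℝ) * c 2 1 1 * c 2 3 1 + (16 : ℝ) * c 2 1 1 * c 4 1 1 + (-6 : ℝ) * c 2 1 2 * c 2 3 2 + (16 : ℝ) * c 2 1 2 * c 4 1 2 + (16 : ℝ) * c 2 2 0 * c 4 0 0 + (-4 : ℝ) * c 2 2 0 * c 2 2 0 + (16 : ℝ)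 * c 2 2 1 * c 4 0 1 + (-4 : ℝ) * c 2 2 1 * c 2 2 1 + (16 : ℝ) * c 2 2 2 * c 4 0 2 + (-4 : ℝ) * c 2 2 2 * c 2 2 2 + (18 : ℝ) * c 3 0 0 * c 3 2 0 + (18 : ℝ) * c 3 0 1 * c 3 2 1 + (18 : ℝ) * c 3 0 2 * c 3 2 2 + (9 : ℝ) * c 3 1 0 * c 3 1 0 + (9 : ℝ) * c 3 1 1 * c 3 1 1 + (9 : ℝ) * c 3 1 2 * c 3 1 2) * v ^ 2 + ((-8 : ℝ) * c 0 1 0 * c 4 4 0 + (-8 : ℝ) * c 0 1 1 * c 4 4 1 + (-8 : ℝ) * c 0 1 2 * c 4 4 2 + (-12 : ℝ) * c 0 2 0 * c 4 3 0 + (-12 : ℝ) * c 0 2 1 * c 4 3 1 + (-12 : ℝ) * c 0 2 2 * c 4 3 2 + (-12 : ℝ) * c 0 3 0 * c 4 2 0 + (-12 : ℝ) * c 0 3 1 * c 4 2 1 + (-12 : ℝ) * c 0 3 2 * c 4 2 2 + (-8 : ℝ) * c 0 4 0 * c 4 1 0 + (-8 : ℝ) * c 0 4 1 * c 4 1 1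 + (-8 : ℝ) * c 0 4 2 * c 4 1 2 + (-8 : ℝ) * c 1 1 0 * c 3 4 0 + (-8 : ℝ) * c 1 1 1 * c 3 4 1 + (-8 : ℝ) * c 1 1 2 * c 3 4 2 + (-12 : ℝ) * c 1 2 0 * c 3 3 0 + (-12 : ℝ) * c 1 2 1 * c 3 3 1 + (-12 : ℝ) * c 1 2 2 * c 3 3 2 + (-12 : ℝ) * c 1 3 0 * c 3 2 0 + (-12 : ℝ) * c 1 3 1 * c 3 2 1 + (-12 : ℝ) * c 1 3 2 * c 3 2 2 + (-8 : ℝ) * c 1 4 0 * c 3 1 0 + (-8 : ℝ) * c 1 4 1 * c 3 1 1 + (-8 : ℝ) * c 1 4 2 * c 3 1 2 + (16 : ℝ) * c 2 0 0 * c 4 3 0 + (16 : ℝ) * c 2 0 1 * c 4 3 1 + (16 : ℝ) * c 2 0 2 * c 4 3 2 + (-8 : ℝ) * c 2 1 0 * c 2 4 0 + (16 : ℝ) * c 2 1 0 * c 4 2 0 + (-8 : ℝ) * c 2 1 1 * c 2 4 1 + (16 : ℝ) * c 2 1 1 * c 4 2 1 + (-8 : ℝ) * c 2 1 2 * c 2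 4 2 + (16 : ℝ) * c 2 1 2 * c 4 2 2 + (-12 : ℝ) * c 2 2 0 * c 2 3 0 + (16 : ℝ) * c 2 2 0 * c 4 1 0 + (-12 : ℝ) * c 2 2 1 * c 2 3 1 + (16 : ℝ) * c 2 2 1 * c 4 1 1 + (-12 : ℝ) * c 2 2 2 * c 2 3 2 + (16 : ℝ) * c 2 2 2 * c 4 1 2 + (16 : ℝ) * c 2 3 0 * c 4 0 0 + (16 : ℝ) * c 2 3 1 * c 4 0 1 + (16 : ℝ) * c 2 3 2 * c 4 0 2 + (18 : ℝ) * c 3 0 0 * c 3 3 0 + (18 : ℝ) * c 3 0 1 * c 3 3 1 + (18 : ℝ) * c 3 0 2 * c 3 3 2 + (18 : ℝ) * c 3 1 0 * c 3 2 0 + (18 : ℝ) * c 3 1 1 * c 3 2 1 + (18 : ℝ) * c 3 1 2 * c 3 2 2) * v ^ 3 + ((-16 : ℝ) * c 0 2 0 * c 4 4 0 + (-16 : ℝ) * c 0 2 1 * c 4 4 1 + (-16 : ℝ) * c 0 2 2 * c 4 4 2 + (-18 : ℝ) * c 0 3 0 * c 4 3 0 + (-18 : ℝ) * c 0 3 1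 * c 4 3 1 + (-18 : ℝ) * c 0 3 2 * c 4 3 2 + (-16 : ℝ) * c 0 4 0 * c 4 2 0 + (-16 : ℝ) * c 0 4 1 * c 4 2 1 + (-16 : ℝ) * c 0 4 2 * c 4 2 2 + (-16 : ℝ) * c 1 2 0 * c 3 4 0 + (-16 : ℝ) * c 1 2 1 * c 3 4 1 + (-16 : ℝ) * c 1 2 2 * c 3 4 2 + (-18 : ℝ) * c 1 3 0 * c 3 3 0 + (-18 : ℝ) * c 1 3 1 * c 3 3 1 + (-18 : ℝ) * c 1 3 2 * c 3 3 2 + (-16 : ℝ) * c 1 4 0 * c 3 2 0 + (-16 : ℝ) * c 1 4 1 * c 3 2 1 + (-16 : ℝ) * c 1 4 2 * c 3 2 2 + (16 : ℝ) * c 2 0 0 * c 4 4 0 + (16 : ℝ) * c 2 0 1 * c 4 4 1 + (16 : ℝ) * c 2 0 2 * c 4 4 2 + (16 : ℝ) * c 2 1 0 * c 4 3 0 + (16 : ℝ) * c 2 1 1 * c 4 3 1 + (16 : ℝ) * c 2 1 2 * c 4 3 2 + (-16 : ℝ) * c 2 2 0 * c 2 4 0 + (16 : ℝ) * c 2 2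 0 * c 4 2 0 + (-16 : ℝ) * c 2 2 1 * c 2 4 1 + (16 : ℝ) * c 2 2 1 * c 4 2 1 + (-16 : ℝ) * c 2 2 2 * c 2 4 2 + (16 : ℝ) * c 2 2 2 * c 4 2 2 + (16 : ℝ) * c 2 3 0 * c 4 1 0 + (-9 : ℝ) * c 2 3 0 * c 2 3 0 + (16 : ℝ) * c 2 3 1 * c 4 1 1 + (-9 : ℝ) * c 2 3 1 * c 2 3 1 + (16 : ℝ) * c 2 3 2 * c 4 1 2 + (-9 : ℝ) * c 2 3 2 * c 2 3 2 + (16 : ℝ) * c 2 4 0 * c 4 0 0 + (16 : ℝ) * c 2 4 1 * c 4 0 1 + (16 : ℝ) * c 2 4 2 * c 4 0 2 + (18 : ℝ) * c 3 0 0 * c 3 4 0 + (18 : ℝ) * c 3 0 1 * c 3 4 1 + (18 : ℝ) * c 3 0 2 * c 3 4 2 + (18 : ℝ) * c 3 1 0 * c 3 3 0 + (18 : ℝ) * c 3 1 1 * c 3 3 1 + (18 : ℝ) * c 3 1 2 * c 3 3 2 + (9 : ℝ) * c 3 2 0 * c 3 2 0 + (9 : ℝ) * c 3 2 1 * c 3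 2 1 + (9 : ℝ) * c 3 2 2 * c 3 2 2) * v ^ 4 + ((-24 : ℝ) * c 0 3 0 * c 4 4 0 + (-24 : ℝ) * c 0 3 1 * c 4 4 1 + (-24 : ℝ) * c 0 3 2 * c 4 4 2 + (-24 : ℝ) * c 0 4 0 * c 4 3 0 + (-24 : ℝ) * c 0 4 1 * c 4 3 1 + (-24 : ℝ) * c 0 4 2 * c 4 3 2 + (-24 : ℝ) * c 1 3 0 * c 3 4 0 + (-24 : ℝ) * c 1 3 1 * c 3 4 1 + (-24 : ℝ) * c 1 3 2 * c 3 4 2 + (-24 : ℝ) * c 1 4 0 * c 3 3 0 + (-24 : ℝ) * c 1 4 1 * c 3 3 1 + (-24 : ℝ) * c 1 4 2 * c 3 3 2 + (16 : ℝ) * c 2 1 0 * c 4 4 0 + (16 : ℝ) * c 2 1 1 * c 4 4 1 + (16 : ℝ) * c 2 1 2 * c 4 4 2 + (16 : ℝ) * c 2 2 0 * c 4 3 0 + (16 : ℝ) * c 2 2 1 * c 4 3 1 + (16 : ℝ) * c 2 2 2 * c 4 3 2 + (-24 : ℝ) * c 2 3 0 * c 2 4 0 + (16 : ℝ) * c 2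 3 0 * c 4 2 0 + (-24 : ℝ) * c 2 3 1 * c 2 4 1 + (16 : ℝ) * c 2 3 1 * c 4 2 1 + (-24 : ℝ) * c 2 3 2 * c 2 4 2 + (16 : ℝ) * c 2 3 2 * c 4 2 2 + (16 : ℝ) * c 2 4 0 * c 4 1 0 + (16 : ℝ) * c 2 4 1 * c 4 1 1 + (16 : ℝ) * c 2 4 2 * c 4 1 2 + (18 : ℝ) * c 3 1 0 * c 3 4 0 + (18 : ℝ) * c 3 1 1 * c 3 4 1 + (18 : ℝ) * c 3 1 2 * c 3 4 2 + (18 : ℝ) * c 3 2 0 * c 3 3 0 + (18 : ℝ) * c 3 2 1 * c 3 3 1 + (18 : ℝ) * c 3 2 2 * c 3 3 2) * v ^ 5 + ((-32 : ℝ) * c 0 4 0 * c 4 4 0 + (-32 : ℝ) * c 0 4 1 * c 4 4 1 + (-32 : ℝ) * c 0 4 2 * c 4 4 2 + (-32 : ℝ) * c 1 4 0 * c 3 4 0 + (-32 : ℝ) * c 1 4 1 * c 3 4 1 + (-32 : ℝ) * c 1 4 2 * c 3 4 2 + (16 : ℝ) * c 2 2 0 * c 4 4 0 + (16 : ℝ)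 * c 2 2 1 * c 4 4 1 + (16 : ℝ) * c 2 2 2 * c 4 4 2 + (16 : ℝ) * c 2 3 0 * c 4 3 0 + (16 : ℝ) * c 2 3 1 * c 4 3 1 + (16 : ℝ) * c 2 3 2 * c 4 3 2 + (16 : ℝ) * c 2 4 0 * c 4 2 0 + (-16 : ℝ) * c 2 4 0 * c 2 4 0 + (16 : ℝ) * c 2 4 1 * c 4 2 1 + (-16 : ℝ) * c 2 4 1 * c 2 4 1 + (16 : ℝ) * c 2 4 2 * c 4 2 2 + (-16 : ℝ) * c 2 4 2 * c 2 4 2 + (18 : ℝ) * c 3 2 0 * c 3 4 0 + (18 : ℝ) * c 3 2 1 * c 3 4 1 + (18 : ℝ) * c 3 2 2 * c 3 4 2 + (9 : ℝ) * c 3 3 0 * c 3 3 0 + (9 : ℝ) * c 3 3 1 * c 3 3 1 + (9 : ℝ) * c 3 3 2 * c 3 3 2) * v ^ 6 + ((16 : ℝ) * c 2 3 0 * c 4 4 0 + (16 : ℝ) * c 2 3 1 * c 4 4 1 + (16 : ℝ) * c 2 3 2 * c 4 4 2 + (16 : ℝ) * c 2 4 0 * c 4 3 0 + (16 : ℝ)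 * c 2 4 1 * c 4 3 1 + (16 : ℝ) * c 2 4 2 * c 4 3 2 + (18 : ℝ) * c 3 3 0 * c 3 4 0 + (18 : ℝ) * c 3 3 1 * c 3 4 1 + (18 : ℝ) * c 3 3 2 * c 3 4 2) * v ^ 7 + ((16 : ℝ) * c 2 4 0 * c 4 4 0 + (16 : ℝ) * c 2 4 1 * c 4 4 1 + (16 : ℝ) * c 2 4 2 * c 4 4 2 + (9 : ℝ) * c 3 4 0 * c 3 4 0 + (9 : ℝ) * c 3 4 1 * c 3 4 1 + (9 : ℝ) * c 3 4 2 * c 3 4 2) * v ^ 8) * u ^ 4 + (((-2 : ℝ) * c 1 1 0 * c 4 1 0 + (-2 : ℝ) * c 1 1 1 * c 4 1 1 + (-2 : ℝ) * c 1 1 2 * c 4 1 2 + (-2 : ℝ) * c 2 1 0 * c 3 1 0 + (-2 : ℝ) * c 2 1 1 * c 3 1 1 + (-2 : ℝ) * c 2 1 2 * c 3 1 2 + (24 : ℝ) * c 3 0 0 * c 4 0 0 + (24 : ℝ) * c 3 0 1 * c 4 0 1 + (24 : ℝ) * c 3 0 2 * c 4 0 2) + ((-4 : ℝ) * c 1 1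 0 * c 4 2 0 + (-4 : ℝ) * c 1 1 1 * c 4 2 1 + (-4 : ℝ) * c 1 1 2 * c 4 2 2 + (-4 : ℝ) * c 1 2 0 * c 4 1 0 + (-4 : ℝ) * c 1 2 1 * c 4 1 1 + (-4 : ℝ) * c 1 2 2 * c 4 1 2 + (-4 : ℝ) * c 2 1 0 * c 3 2 0 + (-4 : ℝ) * c 2 1 1 * c 3 2 1 + (-4 : ℝ) * c 2 1 2 * c 3 2 2 + (-4 : ℝ) * c 2 2 0 * c 3 1 0 + (-4 : ℝ) * c 2 2 1 * c 3 1 1 + (-4 : ℝ) * c 2 2 2 * c 3 1 2 + (24 : ℝ) * c 3 0 0 * c 4 1 0 + (24 : ℝ) * c 3 0 1 * c 4 1 1 + (24 : ℝ) * c 3 0 2 * c 4 1 2 + (24 : ℝ) * c 3 1 0 * c 4 0 0 + (24 : ℝ) * c 3 1 1 * c 4 0 1 + (24 : ℝ) * c 3 1 2 * c 4 0 2) * v + ((-6 : ℝ) * c 1 1 0 * c 4 3 0 + (-6 : ℝ) * c 1 1 1 * c 4 3 1 + (-6 : ℝ) * c 1 1 2 * c 4 3 2 + (-8 : ℝ)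 * c 1 2 0 * c 4 2 0 + (-8 : ℝ) * c 1 2 1 * c 4 2 1 + (-8 : ℝ) * c 1 2 2 * c 4 2 2 + (-6 : ℝ) * c 1 3 0 * c 4 1 0 + (-6 : ℝ) * c 1 3 1 * c 4 1 1 + (-6 : ℝ) * c 1 3 2 * c 4 1 2 + (-6 : ℝ) * c 2 1 0 * c 3 3 0 + (-6 : ℝ) * c 2 1 1 * c 3 3 1 + (-6 : ℝ) * c 2 1 2 * c 3 3 2 + (-8 : ℝ) * c 2 2 0 * c 3 2 0 + (-8 : ℝ) * c 2 2 1 * c 3 2 1 + (-8 : ℝ) * c 2 2 2 * c 3 2 2 + (-6 : ℝ) * c 2 3 0 * c 3 1 0 + (-6 : ℝ) * c 2 3 1 * c 3 1 1 + (-6 : ℝ) * c 2 3 2 * c 3 1 2 + (24 : ℝ) * c 3 0 0 * c 4 2 0 + (24 : ℝ) * c 3 0 1 * c 4 2 1 + (24 : ℝ) * c 3 0 2 * c 4 2 2 + (24 : ℝ) * c 3 1 0 * c 4 1 0 + (24 : ℝ) * c 3 1 1 * c 4 1 1 + (24 : ℝ) * c 3 1 2 * c 4 1 2 + (24 : ℝ)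 * c 3 2 0 * c 4 0 0 + (24 : ℝ) * c 3 2 1 * c 4 0 1 + (24 : ℝ) * c 3 2 2 * c 4 0 2) * v ^ 2 + ((-8 : ℝ) * c 1 1 0 * c 4 4 0 + (-8 : ℝ) * c 1 1 1 * c 4 4 1 + (-8 : ℝ) * c 1 1 2 * c 4 4 2 + (-12 : ℝ) * c 1 2 0 * c 4 3 0 + (-12 : ℝ) * c 1 2 1 * c 4 3 1 + (-12 : ℝ) * c 1 2 2 * c 4 3 2 + (-12 : ℝ) * c 1 3 0 * c 4 2 0 + (-12 : ℝ) * c 1 3 1 * c 4 2 1 + (-12 : ℝ) * c 1 3 2 * c 4 2 2 + (-8 : ℝ) * c 1 4 0 * c 4 1 0 + (-8 : ℝ) * c 1 4 1 * c 4 1 1 + (-8 : ℝ) * c 1 4 2 * c 4 1 2 + (-8 : ℝ) * c 2 1 0 * c 3 4 0 + (-8 : ℝ) * c 2 1 1 * c 3 4 1 + (-8 : ℝ) * c 2 1 2 * c 3 4 2 + (-12 : ℝ) * c 2 2 0 * c 3 3 0 + (-12 : ℝ) * c 2 2 1 * c 3 3 1 + (-12 : ℝ) * c 2 2 2 * c 3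 3 2 + (-12 : ℝ) * c 2 3 0 * c 3 2 0 + (-12 : ℝ) * c 2 3 1 * c 3 2 1 + (-12 : ℝ) * c 2 3 2 * c 3 2 2 + (-8 : ℝ) * c 2 4 0 * c 3 1 0 + (-8 : ℝ) * c 2 4 1 * c 3 1 1 + (-8 : ℝ) * c 2 4 2 * c 3 1 2 + (24 : ℝ) * c 3 0 0 * c 4 3 0 + (24 : ℝ) * c 3 0 1 * c 4 3 1 + (24 : ℝ) * c 3 0 2 * c 4 3 2 + (24 : ℝ) * c 3 1 0 * c 4 2 0 + (24 : ℝ) * c 3 1 1 * c 4 2 1 + (24 : ℝ) * c 3 1 2 * c 4 2 2 + (24 : ℝ) * c 3 2 0 * c 4 1 0 + (24 : ℝ) * c 3 2 1 * c 4 1 1 + (24 : ℝ) * c 3 2 2 * c 4 1 2 + (24 : ℝ) * c 3 3 0 * c 4 0 0 + (24 : ℝ) * c 3 3 1 * c 4 0 1 + (24 : ℝ) * c 3 3 2 * c 4 0 2) * v ^ 3 + ((-16 : ℝ) * c 1 2 0 * c 4 4 0 + (-16 : ℝ) * c 1 2 1 * c 4 4 1 + (-16 : ℝ) * c 1 2 2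 * c 4 4 2 + (-18 : ℝ) * c 1 3 0 * c 4 3 0 + (-18 : ℝ) * c 1 3 1 * c 4 3 1 + (-18 : ℝ) * c 1 3 2 * c 4 3 2 + (-16 : ℝ) * c 1 4 0 * c 4 2 0 + (-16 : ℝ) * c 1 4 1 * c 4 2 1 + (-16 : ℝ) * c 1 4 2 * c 4 2 2 + (-16 : ℝ) * c 2 2 0 * c 3 4 0 + (-16 : ℝ) * c 2 2 1 * c 3 4 1 + (-16 : ℝ) * c 2 2 2 * c 3 4 2 + (-18 : ℝ) * c 2 3 0 * c 3 3 0 + (-18 : ℝ) * c 2 3 1 * c 3 3 1 + (-18 : ℝ) * c 2 3 2 * c 3 3 2 + (-16 : ℝ) * c 2 4 0 * c 3 2 0 + (-16 : ℝ) * c 2 4 1 * c 3 2 1 + (-16 : ℝ) * c 2 4 2 * c 3 2 2 + (24 : ℝ) * c 3 0 0 * c 4 4 0 + (24 : ℝ) * c 3 0 1 * c 4 4 1 + (24 : ℝ) * c 3 0 2 * c 4 4 2 + (24 : ℝ) * c 3 1 0 * c 4 3 0 + (24 : ℝ) * c 3 1 1 * c 4 3 1 + (24 : ℝ) * c 3 1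 2 * c 4 3 2 + (24 : ℝ) * c 3 2 0 * c 4 2 0 + (24 : ℝ) * c 3 2 1 * c 4 2 1 + (24 : ℝ) * c 3 2 2 * c 4 2 2 + (24 : ℝ) * c 3 3 0 * c 4 1 0 + (24 : ℝ) * c 3 3 1 * c 4 1 1 + (24 : ℝ) * c 3 3 2 * c 4 1 2 + (24 : ℝ) * c 3 4 0 * c 4 0 0 + (24 : ℝ) * c 3 4 1 * c 4 0 1 + (24 : ℝ) * c 3 4 2 * c 4 0 2) * v ^ 4 + ((-24 : ℝ) * c 1 3 0 * c 4 4 0 + (-24 : ℝ) * c 1 3 1 * c 4 4 1 + (-24 : ℝ) * c 1 3 2 * c 4 4 2 + (-24 : ℝ) * c 1 4 0 * c 4 3 0 + (-24 : ℝ) * c 1 4 1 * c 4 3 1 + (-24 : ℝ) * c 1 4 2 * c 4 3 2 + (-24 : ℝ) * c 2 3 0 * c 3 4 0 + (-24 : ℝ) * c 2 3 1 * c 3 4 1 + (-24 : ℝ) * c 2 3 2 * c 3 4 2 + (-24 : ℝ) * c 2 4 0 * c 3 3 0 + (-24 : ℝ) * c 2 4 1 * c 3 3 1 + (-24 : ℝ)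 * c 2 4 2 * c 3 3 2 + (24 : ℝ) * c 3 1 0 * c 4 4 0 + (24 : ℝ) * c 3 1 1 * c 4 4 1 + (24 : ℝ) * c 3 1 2 * c 4 4 2 + (24 : ℝ) * c 3 2 0 * c 4 3 0 + (24 : ℝ) * c 3 2 1 * c 4 3 1 + (24 : ℝ) * c 3 2 2 * c 4 3 2 + (24 : ℝ) * c 3 3 0 * c 4 2 0 + (24 : ℝ) * c 3 3 1 * c 4 2 1 + (24 : ℝ) * c 3 3 2 * c 4 2 2 + (24 : ℝ) * c 3 4 0 * c 4 1 0 + (24 : ℝ) * c 3 4 1 * c 4 1 1 + (24 : ℝ) * c 3 4 2 * c 4 1 2) * v ^ 5 + ((-32 : ℝ) * c 1 4 0 * c 4 4 0 + (-32 : ℝ) * c 1 4 1 * c 4 4 1 + (-32 : ℝ) * c 1 4 2 * c 4 4 2 + (-32 : ℝ) * c 2 4 0 * c 3 4 0 + (-32 : ℝ) * c 2 4 1 * c 3 4 1 + (-32 : ℝ) * c 2 4 2 * c 3 4 2 + (24 : ℝ) * c 3 2 0 * c 4 4 0 + (24 : ℝ) * c 3 2 1 * c 4 4 1 + (24 : ℝ)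 * c 3 2 2 * c 4 4 2 + (24 : ℝ) * c 3 3 0 * c 4 3 0 + (24 : ℝ) * c 3 3 1 * c 4 3 1 + (24 : ℝ) * c 3 3 2 * c 4 3 2 + (24 : ℝ) * c 3 4 0 * c 4 2 0 + (24 : ℝ) * c 3 4 1 * c 4 2 1 + (24 : ℝ) * c 3 4 2 * c 4 2 2) * v ^ 6 + ((24 : ℝ) * c 3 3 0 * c 4 4 0 + (24 : ℝ) * c 3 3 1 * c 4 4 1 + (24 : ℝ) * c 3 3 2 * c 4 4 2 + (24 : ℝ) * c 3 4 0 * c 4 3 0 + (24 : ℝ) * c 3 4 1 * c 4 3 1 + (24 : ℝ) * c 3 4 2 * c 4 3 2) * v ^ 7 + ((24 : ℝ) * c 3 4 0 * c 4 4 0 + (24 : ℝ) * c 3 4 1 * c 4 4 1 + (24 : ℝ) * c 3 4 2 * c 4 4 2) * v ^ 8) * u ^ 5 + (((-2 : ℝ) * c 2 1 0 * c 4 1 0 + (-2 : ℝ) * c 2 1 1 * c 4 1 1 + (-2 : ℝ) * c 2 1 2 * c 4 1 2 + (-1 : ℝ) * c 3 1 0 * c 3 1 0 + (-1 : ℝ)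 * c 3 1 1 * c 3 1 1 + (-1 : ℝ) * c 3 1 2 * c 3 1 2 + (16 : ℝ) * c 4 0 0 * c 4 0 0 + (16 : ℝ) * c 4 0 1 * c 4 0 1 + (16 : ℝ) * c 4 0 2 * c 4 0 2) + ((-4 : ℝ) * c 2 1 0 * c 4 2 0 + (-4 : ℝ) * c 2 1 1 * c 4 2 1 + (-4 : ℝ) * c 2 1 2 * c 4 2 2 + (-4 : ℝ) * c 2 2 0 * c 4 1 0 + (-4 : ℝ) * c 2 2 1 * c 4 1 1 + (-4 : ℝ) * c 2 2 2 * c 4 1 2 + (-4 : ℝ) * c 3 1 0 * c 3 2 0 + (-4 : ℝ) * c 3 1 1 * c 3 2 1 + (-4 : ℝ) * c 3 1 2 * c 3 2 2 + (32 : ℝ) * c 4 0 0 * c 4 1 0 + (32 : ℝ) * c 4 0 1 * c 4 1 1 + (32 : ℝ) * c 4 0 2 * c 4 1 2) * v + ((-6 : ℝ) * c 2 1 0 * c 4 3 0 + (-6 : ℝ) * c 2 1 1 * c 4 3 1 + (-6 : ℝ) * c 2 1 2 * c 4 3 2 + (-8 : ℝ) * c 2 2 0 * c 4 2 0 + (-8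 : ℝ) * c 2 2 1 * c 4 2 1 + (-8 : ℝ) * c 2 2 2 * c 4 2 2 + (-6 : ℝ) * c 2 3 0 * c 4 1 0 + (-6 : ℝ) * c 2 3 1 * c 4 1 1 + (-6 : ℝ) * c 2 3 2 * c 4 1 2 + (-6 : ℝ) * c 3 1 0 * c 3 3 0 + (-6 : ℝ) * c 3 1 1 * c 3 3 1 + (-6 : ℝ) * c 3 1 2 * c 3 3 2 + (-4 : ℝ) * c 3 2 0 * c 3 2 0 + (-4 : ℝ) * c 3 2 1 * c 3 2 1 + (-4 : ℝ) * c 3 2 2 * c 3 2 2 + (32 : ℝ) * c 4 0 0 * c 4 2 0 + (32 : ℝ) * c 4 0 1 * c 4 2 1 + (32 : ℝ) * c 4 0 2 * c 4 2 2 + (16 : ℝ) * c 4 1 0 * c 4 1 0 + (16 : ℝ) * c 4 1 1 * c 4 1 1 + (16 : ℝ) * c 4 1 2 * c 4 1 2) * v ^ 2 + ((-8 : ℝ) * c 2 1 0 * c 4 4 0 + (-8 : ℝ) * c 2 1 1 * c 4 4 1 + (-8 : ℝ) * c 2 1 2 * c 4 4 2 + (-12 : ℝ) * c 2 2 0 *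 c 4 3 0 + (-12 : ℝ) * c 2 2 1 * c 4 3 1 + (-12 : ℝ) * c 2 2 2 * c 4 3 2 + (-12 : ℝ) * c 2 3 0 * c 4 2 0 + (-12 : ℝ) * c 2 3 1 * c 4 2 1 + (-12 : ℝ) * c 2 3 2 * c 4 2 2 + (-8 : ℝ) * c 2 4 0 * c 4 1 0 + (-8 : ℝ) * c 2 4 1 * c 4 1 1 + (-8 : ℝ) * c 2 4 2 * c 4 1 2 + (-8 : ℝ) * c 3 1 0 * c 3 4 0 + (-8 : ℝ) * c 3 1 1 * c 3 4 1 + (-8 : ℝ) * c 3 1 2 * c 3 4 2 + (-12 : ℝ) * c 3 2 0 * c 3 3 0 + (-12 : ℝ) * c 3 2 1 * c 3 3 1 + (-12 : ℝ) * c 3 2 2 * c 3 3 2 + (32 : ℝ) * c 4 0 0 * c 4 3 0 + (32 : ℝ) * c 4 0 1 * c 4 3 1 + (32 : ℝ) * c 4 0 2 * c 4 3 2 + (32 : ℝ) * c 4 1 0 * c 4 2 0 + (32 : ℝ) * c 4 1 1 * c 4 2 1 + (32 : ℝ) * c 4 1 2 * c 4 2 2) * v ^ 3 + ((-16 : ℝ)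 * c 2 2 0 * c 4 4 0 + (-16 : ℝ) * c 2 2 1 * c 4 4 1 + (-16 : ℝ) * c 2 2 2 * c 4 4 2 + (-18 : ℝ) * c 2 3 0 * c 4 3 0 + (-18 : ℝ) * c 2 3 1 * c 4 3 1 + (-18 : ℝ) * c 2 3 2 * c 4 3 2 + (-16 : ℝ) * c 2 4 0 * c 4 2 0 + (-16 : ℝ) * c 2 4 1 * c 4 2 1 + (-16 : ℝ) * c 2 4 2 * c 4 2 2 + (-16 : ℝ) * c 3 2 0 * c 3 4 0 + (-16 : ℝ) * c 3 2 1 * c 3 4 1 + (-16 : ℝ) * c 3 2 2 * c 3 4 2 + (-9 : ℝ) * c 3 3 0 * c 3 3 0 + (-9 : ℝ) * c 3 3 1 * c 3 3 1 + (-9 : ℝ) * c 3 3 2 * c 3 3 2 + (32 : ℝ) * c 4 0 0 * c 4 4 0 + (32 : ℝ) * c 4 0 1 * c 4 4 1 + (32 : ℝ) * c 4 0 2 * c 4 4 2 + (32 : ℝ) * c 4 1 0 * c 4 3 0 + (32 : ℝ) * c 4 1 1 * c 4 3 1 + (32 : ℝ) * c 4 1 2 * c 4 3 2 + (16 : ℝ)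 * c 4 2 0 * c 4 2 0 + (16 : ℝ) * c 4 2 1 * c 4 2 1 + (16 : ℝ) * c 4 2 2 * c 4 2 2) * v ^ 4 + ((-24 : ℝ) * c 2 3 0 * c 4 4 0 + (-24 : ℝ) * c 2 3 1 * c 4 4 1 + (-24 : ℝ) * c 2 3 2 * c 4 4 2 + (-24 : ℝ) * c 2 4 0 * c 4 3 0 + (-24 : ℝ) * c 2 4 1 * c 4 3 1 + (-24 : ℝ) * c 2 4 2 * c 4 3 2 + (-24 : ℝ) * c 3 3 0 * c 3 4 0 + (-24 : ℝ) * c 3 3 1 * c 3 4 1 + (-24 : ℝ) * c 3 3 2 * c 3 4 2 + (32 : ℝ) * c 4 1 0 * c 4 4 0 + (32 : ℝ) * c 4 1 1 * c 4 4 1 + (32 : ℝ) * c 4 1 2 * c 4 4 2 + (32 : ℝ) * c 4 2 0 * c 4 3 0 + (32 : ℝ) * c 4 2 1 * c 4 3 1 + (32 : ℝ) * c 4 2 2 * c 4 3 2) * v ^ 5 + ((-32 : ℝ) * c 2 4 0 * c 4 4 0 + (-32 : ℝ) * c 2 4 1 * c 4 4 1 + (-32 : ℝ) * c 2 4 2 *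 c 4 4 2 + (-16 : ℝ) * c 3 4 0 * c 3 4 0 + (-16 : ℝ) * c 3 4 1 * c 3 4 1 + (-16 : ℝ) * c 3 4 2 * c 3 4 2 + (32 : ℝ) * c 4 2 0 * c 4 4 0 + (32 : ℝ) * c 4 2 1 * c 4 4 1 + (32 : ℝ) * c 4 2 2 * c 4 4 2 + (16 : ℝ) * c 4 3 0 * c 4 3 0 + (16 : ℝ) * c 4 3 1 * c 4 3 1 + (16 : ℝ) * c 4 3 2 * c 4 3 2) * v ^ 6 + ((32 : ℝ) * c 4 3 0 * c 4 4 0 + (32 : ℝ) * c 4 3 1 * c 4 4 1 + (32 : ℝ) * c 4 3 2 * c 4 4 2) * v ^ 7 + ((16 : ℝ) * c 4 4 0 * c 4 4 0 + (16 : ℝ) * c 4 4 1 * c 4 4 1 + (16 : ℝ) * c 4 4 2 * c 4 4 2) * v ^ 8) * u ^ 6 + (((-2 : ℝ) * c 3 1 0 * c 4 1 0 + (-2 : ℝ) * c 3 1 1 * c 4 1 1 + (-2 : ℝ) * c 3 1 2 * c 4 1 2) + ((-4 : ℝ) * c 3 1 0 * c 4 2 0 + (-4 : ℝ) * c 3 1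 1 * c 4 2 1 + (-4 : ℝ) * c 3 1 2 * c 4 2 2 + (-4 : ℝ) * c 3 2 0 * c 4 1 0 + (-4 : ℝ) * c 3 2 1 * c 4 1 1 + (-4 : ℝ) * c 3 2 2 * c 4 1 2) * v + ((-6 : ℝ) * c 3 1 0 * c 4 3 0 + (-6 : ℝ) * c 3 1 1 * c 4 3 1 + (-6 : ℝ) * c 3 1 2 * c 4 3 2 + (-8 : ℝ) * c 3 2 0 * c 4 2 0 + (-8 : ℝ) * c 3 2 1 * c 4 2 1 + (-8 : ℝ) * c 3 2 2 * c 4 2 2 + (-6 : ℝ) * c 3 3 0 * c 4 1 0 + (-6 : ℝ) * c 3 3 1 * c 4 1 1 + (-6 : ℝ) * c 3 3 2 * c 4 1 2) * v ^ 2 + ((-8 : ℝ) * c 3 1 0 * c 4 4 0 + (-8 : ℝ) * c 3 1 1 * c 4 4 1 + (-8 : ℝ) * c 3 1 2 * c 4 4 2 + (-12 : ℝ) * c 3 2 0 * c 4 3 0 + (-12 : ℝ) * c 3 2 1 * c 4 3 1 + (-12 : ℝ) * c 3 2 2 * c 4 3 2 + (-12 : ℝ) * c 3 3 0 * c 4 2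 0 + (-12 : ℝ) * c 3 3 1 * c 4 2 1 + (-12 : ℝ) * c 3 3 2 * c 4 2 2 + (-8 : ℝ) * c 3 4 0 * c 4 1 0 + (-8 : ℝ) * c 3 4 1 * c 4 1 1 + (-8 : ℝ) * c 3 4 2 * c 4 1 2) * v ^ 3 + ((-16 : ℝ) * c 3 2 0 * c 4 4 0 + (-16 : ℝ) * c 3 2 1 * c 4 4 1 + (-16 : ℝ) * c 3 2 2 * c 4 4 2 + (-18 : ℝ) * c 3 3 0 * c 4 3 0 + (-18 : ℝ) * c 3 3 1 * c 4 3 1 + (-18 : ℝ) * c 3 3 2 * c 4 3 2 + (-16 : ℝ) * c 3 4 0 * c 4 2 0 + (-16 : ℝ) * c 3 4 1 * c 4 2 1 + (-16 : ℝ) * c 3 4 2 * c 4 2 2) * v ^ 4 + ((-24 : ℝ) * c 3 3 0 * c 4 4 0 + (-24 : ℝ) * c 3 3 1 * c 4 4 1 + (-24 : ℝ) * c 3 3 2 * c 4 4 2 + (-24 : ℝ) * c 3 4 0 * c 4 3 0 + (-24 : ℝ) * c 3 4 1 * c 4 3 1 + (-24 : ℝ) * c 3 4 2 * c 4 3 2)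 * v ^ 5 + ((-32 : ℝ) * c 3 4 0 * c 4 4 0 + (-32 : ℝ) * c 3 4 1 * c 4 4 1 + (-32 : ℝ) * c 3 4 2 * c 4 4 2) * v ^ 6) * u ^ 7 + (((-1 : ℝ) * c 4 1 0 * c 4 1 0 + (-1 : ℝ) * c 4 1 1 * c 4 1 1 + (-1 : ℝ) * c 4 1 2 * c 4 1 2) + ((-4 : ℝ) * c 4 1 0 * c 4 2 0 + (-4 : ℝ) * c 4 1 1 * c 4 2 1 + (-4 : ℝ) * c 4 1 2 * c 4 2 2) * v + ((-6 : ℝ) * c 4 1 0 * c 4 3 0 + (-6 : ℝ) * c 4 1 1 * c 4 3 1 + (-6 : ℝ) * c 4 1 2 * c 4 3 2 + (-4 : ℝ) * c 4 2 0 * c 4 2 0 + (-4 : ℝ) * c 4 2 1 * c 4 2 1 + (-4 : ℝ) * c 4 2 2 * c 4 2 2) * v ^ 2 + ((-8 : ℝ) * c 4 1 0 * c 4 4 0 + (-8 : ℝ) * c 4 1 1 * c 4 4 1 + (-8 : ℝ) * c 4 1 2 * c 4 4 2 + (-12 : ℝ) * c 4 2 0 * c 4 3 0 + (-12 : ℝ)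 * c 4 2 1 * c 4 3 1 + (-12 : ℝ) * c 4 2 2 * c 4 3 2) * v ^ 3 + ((-16 : ℝ) * c 4 2 0 * c 4 4 0 + (-16 : ℝ) * c 4 2 1 * c 4 4 1 + (-16 : ℝ) * c 4 2 2 * c 4 4 2 + (-9 : ℝ) * c 4 3 0 * c 4 3 0 + (-9 : ℝ) * c 4 3 1 * c 4 3 1 + (-9 : ℝ) * c 4 3 2 * c 4 3 2) * v ^ 4 + ((-24 : ℝ) * c 4 3 0 * c 4 4 0 + (-24 : ℝ) * c 4 3 1 * c 4 4 1 + (-24 : ℝ) * c 4 3 2 * c 4 4 2) * v ^ 5 + ((-16 : ℝ) * c 4 4 0 * c 4 4 0 + (-16 : ℝ) * c 4 4 1 * c 4 4 1 + (-16 : ℝ) * c 4 4 2 * c 4 4 2) * v ^ 6) * u ^ 8 = 0 := by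
    intro v u
    have h := (hiso u v).1
    simp only [dot3] at h
    rw [hpu u v 0, hpu u v 1, hpu u v 2, hpv u v 0, hpv u v 1, hpv u v 2] at h
    linear_combination h
  have hA5 := fun (v : ℝ) => (vanish8 (hEGg v)).2.2.2.2.2.1
  have hA5v : ∀ v : ℝ, ((-2 : ℝ) * c 1 1 0 * c 4 1 0 + (-2 : ℝ) * c 1 1 1 * c 4 1 1 + (-2 : ℝ) * c 1 1 2 * c 4 1 2 + (-2 : ℝ) * c 2 1 0 * c 3 1 0 + (-2 : ℝ) * c 2 1 1 * c 3 1 1 + (-2 : ℝ) * c 2 1 2 * c 3 1 2 + (24 : ℝ) * c 3 0 0 * c 4 0 0 + (24 : ℝ) * c 3 0 1 * c 4 0 1 + (24 : ℝ) * c 3 0 2 * c 4 0 2) + ((-4 : ℝ) * c 1 1 0 * c 4 2 0 + (-4 : ℝ) * c 1 1 1 * c 4 2 1 + (-4 : ℝ) * c 1 1 2 * c 4 2 2 + (-4 : ℝ) * c 1 2 0 * c 4 1 0 + (-4 : ℝ) * c 1 2 1 * c 4 1 1 + (-4 : ℝ) * c 1 2 2 * c 4 1 2 + (-4 : ℝ)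 * c 2 1 0 * c 3 2 0 + (-4 : ℝ) * c 2 1 1 * c 3 2 1 + (-4 : ℝ) * c 2 1 2 * c 3 2 2 + (-4 : ℝ) * c 2 2 0 * c 3 1 0 + (-4 : ℝ) * c 2 2 1 * c 3 1 1 + (-4 : ℝ) * c 2 2 2 * c 3 1 2 + (24 : ℝ) * c 3 0 0 * c 4 1 0 + (24 : ℝ) * c 3 0 1 * c 4 1 1 + (24 : ℝ) * c 3 0 2 * c 4 1 2 + (24 : ℝ) * c 3 1 0 * c 4 0 0 + (24 : ℝ) * c 3 1 1 * c 4 0 1 + (24 : ℝ) * c 3 1 2 * c 4 0 2) * v + ((-6 : ℝ) * c 1 1 0 * c 4 3 0 + (-6 : ℝ) * c 1 1 1 * c 4 3 1 + (-6 : ℝ) * c 1 1 2 * c 4 3 2 + (-8 : ℝ) * c 1 2 0 * c 4 2 0 + (-8 : ℝ) * c 1 2 1 * c 4 2 1 + (-8 : ℝ) * c 1 2 2 * c 4 2 2 + (-6 : ℝ) * c 1 3 0 * c 4 1 0 + (-6 : ℝ) * c 1 3 1 * c 4 1 1 + (-6 : ℝ) * c 1 3 2 * c 4 1 2 + (-6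 : ℝ) * c 2 1 0 * c 3 3 0 + (-6 : ℝ) * c 2 1 1 * c 3 3 1 + (-6 : ℝ) * c 2 1 2 * c 3 3 2 + (-8 : ℝ) * c 2 2 0 * c 3 2 0 + (-8 : ℝ) * c 2 2 1 * c 3 2 1 + (-8 : ℝ) * c 2 2 2 * c 3 2 2 + (-6 : ℝ) * c 2 3 0 * c 3 1 0 + (-6 : ℝ) * c 2 3 1 * c 3 1 1 + (-6 : ℝ) * c 2 3 2 * c 3 1 2 + (24 : ℝ) * c 3 0 0 * c 4 2 0 + (24 : ℝ) * c 3 0 1 * c 4 2 1 + (24 : ℝ) * c 3 0 2 * c 4 2 2 + (24 : ℝ) * c 3 1 0 * c 4 1 0 + (24 : ℝ) * c 3 1 1 * c 4 1 1 + (24 : ℝ) * c 3 1 2 * c 4 1 2 + (24 : ℝ) * c 3 2 0 * c 4 0 0 + (24 : ℝ) * c 3 2 1 * c 4 0 1 + (24 : ℝ) * c 3 2 2 * c 4 0 2) * v ^ 2 + ((-8 : ℝ) * c 1 1 0 * c 4 4 0 + (-8 : ℝ) * c 1 1 1 * c 4 4 1 + (-8 : ℝ) * c 1 1 2 * c 4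 4 2 + (-12 : ℝ) * c 1 2 0 * c 4 3 0 + (-12 : ℝ) * c 1 2 1 * c 4 3 1 + (-12 : ℝ) * c 1 2 2 * c 4 3 2 + (-12 : ℝ) * c 1 3 0 * c 4 2 0 + (-12 : ℝ) * c 1 3 1 * c 4 2 1 + (-12 : ℝ) * c 1 3 2 * c 4 2 2 + (-8 : ℝ) * c 1 4 0 * c 4 1 0 + (-8 : ℝ) * c 1 4 1 * c 4 1 1 + (-8 : ℝ) * c 1 4 2 * c 4 1 2 + (-8 : ℝ) * c 2 1 0 * c 3 4 0 + (-8 : ℝ) * c 2 1 1 * c 3 4 1 + (-8 : ℝ) * c 2 1 2 * c 3 4 2 + (-12 : ℝ) * c 2 2 0 * c 3 3 0 + (-12 : ℝ) * c 2 2 1 * c 3 3 1 + (-12 : ℝ) * c 2 2 2 * c 3 3 2 + (-12 : ℝ) * c 2 3 0 * c 3 2 0 + (-12 : ℝ) * c 2 3 1 * c 3 2 1 + (-12 : ℝ) * c 2 3 2 * c 3 2 2 + (-8 : ℝ) * c 2 4 0 * c 3 1 0 + (-8 : ℝ) * c 2 4 1 * c 3 1 1 + (-8 : ℝ) * c 2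 4 2 * c 3 1 2 + (24 : ℝ) * c 3 0 0 * c 4 3 0 + (24 : ℝ) * c 3 0 1 * c 4 3 1 + (24 : ℝ) * c 3 0 2 * c 4 3 2 + (24 : ℝ) * c 3 1 0 * c 4 2 0 + (24 : ℝ) * c 3 1 1 * c 4 2 1 + (24 : ℝ) * c 3 1 2 * c 4 2 2 + (24 : ℝ) * c 3 2 0 * c 4 1 0 + (24 : ℝ) * c 3 2 1 * c 4 1 1 + (24 : ℝ) * c 3 2 2 * c 4 1 2 + (24 : ℝ) * c 3 3 0 * c 4 0 0 + (24 : ℝ) * c 3 3 1 * c 4 0 1 + (24 : ℝ) * c 3 3 2 * c 4 0 2) * v ^ 3 + ((-16 : ℝ) * c 1 2 0 * c 4 4 0 + (-16 : ℝ) * c 1 2 1 * c 4 4 1 + (-16 : ℝ) * c 1 2 2 * c 4 4 2 + (-18 : ℝ) * c 1 3 0 * c 4 3 0 + (-18 : ℝ) * c 1 3 1 * c 4 3 1 + (-18 : ℝ) * c 1 3 2 * c 4 3 2 + (-16 : ℝ) * c 1 4 0 * c 4 2 0 + (-16 : ℝ) * c 1 4 1 * c 4 2 1 + (-16 : ℝ)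 * c 1 4 2 * c 4 2 2 + (-16 : ℝ) * c 2 2 0 * c 3 4 0 + (-16 : ℝ) * c 2 2 1 * c 3 4 1 + (-16 : ℝ) * c 2 2 2 * c 3 4 2 + (-18 : ℝ) * c 2 3 0 * c 3 3 0 + (-18 : ℝ) * c 2 3 1 * c 3 3 1 + (-18 : ℝ) * c 2 3 2 * c 3 3 2 + (-16 : ℝ) * c 2 4 0 * c 3 2 0 + (-16 : ℝ) * c 2 4 1 * c 3 2 1 + (-16 : ℝ) * c 2 4 2 * c 3 2 2 + (24 : ℝ) * c 3 0 0 * c 4 4 0 + (24 : ℝ) * c 3 0 1 * c 4 4 1 + (24 : ℝ) * c 3 0 2 * c 4 4 2 + (24 : ℝ) * c 3 1 0 * c 4 3 0 + (24 : ℝ) * c 3 1 1 * c 4 3 1 + (24 : ℝ) * c 3 1 2 * c 4 3 2 + (24 : ℝ) * c 3 2 0 * c 4 2 0 + (24 : ℝ) * c 3 2 1 * c 4 2 1 + (24 : ℝ) * c 3 2 2 * c 4 2 2 + (24 : ℝ) * c 3 3 0 * c 4 1 0 + (24 : ℝ) * c 3 3 1 * c 4 1 1 + (24 : ℝ) * c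 3 3 2 * c 4 1 2 + (24 : ℝ) * c 3 4 0 * c 4 0 0 + (24 : ℝ) * c 3 4 1 * c 4 0 1 + (24 : ℝ) * c 3 4 2 * c 4 0 2) * v ^ 4 + ((-24 : ℝ) * c 1 3 0 * c 4 4 0 + (-24 : ℝ) * c 1 3 1 * c 4 4 1 + (-24 : ℝ) * c 1 3 2 * c 4 4 2 + (-24 : ℝ) * c 1 4 0 * c 4 3 0 + (-24 : ℝ) * c 1 4 1 * c 4 3 1 + (-24 : ℝ) * c 1 4 2 * c 4 3 2 + (-24 : ℝ) * c 2 3 0 * c 3 4 0 + (-24 : ℝ) * c 2 3 1 * c 3 4 1 + (-24 : ℝ) * c 2 3 2 * c 3 4 2 + (-24 : ℝ) * c 2 4 0 * c 3 3 0 + (-24 : ℝ) * c 2 4 1 * c 3 3 1 + (-24 : ℝ) * c 2 4 2 * c 3 3 2 + (24 : ℝ) * c 3 1 0 * c 4 4 0 + (24 : ℝ) * c 3 1 1 * c 4 4 1 + (24 : ℝ) * c 3 1 2 * c 4 4 2 + (24 : ℝ) * c 3 2 0 * c 4 3 0 + (24 : ℝ) * c 3 2 1 * c 4 3 1 + (24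 : ℝ) * c 3 2 2 * c 4 3 2 + (24 : ℝ) * c 3 3 0 * c 4 2 0 + (24 : ℝ) * c 3 3 1 * c 4 2 1 + (24 : ℝ) * c 3 3 2 * c 4 2 2 + (24 : ℝ) * c 3 4 0 * c 4 1 0 + (24 : ℝ) * c 3 4 1 * c 4 1 1 + (24 : ℝ) * c 3 4 2 * c 4 1 2) * v ^ 5 + ((-32 : ℝ) * c 1 4 0 * c 4 4 0 + (-32 : ℝ) * c 1 4 1 * c 4 4 1 + (-32 : ℝ) * c 1 4 2 * c 4 4 2 + (-32 : ℝ) * c 2 4 0 * c 3 4 0 + (-32 : ℝ) * c 2 4 1 * c 3 4 1 + (-32 : ℝ) * c 2 4 2 * c 3 4 2 + (24 : ℝ) * c 3 2 0 * c 4 4 0 + (24 : ℝ) * c 3 2 1 * c 4 4 1 + (24 : ℝ) * c 3 2 2 * c 4 4 2 + (24 : ℝ) * c 3 3 0 * c 4 3 0 + (24 : ℝ) * c 3 3 1 * c 4 3 1 + (24 : ℝ) * c 3 3 2 * c 4 3 2 + (24 : ℝ) * c 3 4 0 * c 4 2 0 + (24 : ℝ) * c 3 4 1 * c 4 2 1 +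 (24 : ℝ) * c 3 4 2 * c 4 2 2) * v ^ 6 + ((24 : ℝ) * c 3 3 0 * c 4 4 0 + (24 : ℝ) * c 3 3 1 * c 4 4 1 + (24 : ℝ) * c 3 3 2 * c 4 4 2 + (24 : ℝ) * c 3 4 0 * c 4 3 0 + (24 : ℝ) * c 3 4 1 * c 4 3 1 + (24 : ℝ) * c 3 4 2 * c 4 3 2) * v ^ 7 + ((24 : ℝ) * c 3 4 0 * c 4 4 0 + (24 : ℝ) * c 3 4 1 * c 4 4 1 + (24 : ℝ) * c 3 4 2 * c 4 4 2) * v ^ 8 = 0 := fun v => by linear_combination hA5 v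
  have hEG50 := (vanish8 hA5v).1
  have hFg : ∀ (v u : ℝ), ((c 0 1 0 * c 1 0 0 + c 0 1 1 * c 1 0 1 + c 0 1 2 * c 1 0 2) + (c 0 1 0 * c 1 1 0 + c 0 1 1 * c 1 1 1 + c 0 1 2 * c 1 1 2 + (2 : ℝ) * c 0 2 0 * c 1 0 0 + (2 : ℝ) * c 0 2 1 * c 1 0 1 + (2 : ℝ) * c 0 2 2 * c 1 0 2) * v + (c 0 1 0 * c 1 2 0 + c 0 1 1 * c 1 2 1 + c 0 1 2 * c 1 2 2 + (2 : ℝ) * c 0 2 0 * c 1 1 0 + (2 : ℝ) * c 0 2 1 * c 1 1 1 + (2 : ℝ) * c 0 2 2 * c 1 1 2 + (3 : ℝ) * c 0 3 0 * c 1 0 0 + (3 : ℝ) * c 0 3 1 * c 1 0 1 + (3 : ℝ) * c 0 3 2 * c 1 0 2) * v ^ 2 + (c 0 1 0 * c 1 3 0 + c 0 1 1 * c 1 3 1 + c 0 1 2 * c 1 3 2 + (2 : ℝ) * c 0 2 0 * c 1 2 0 + (2 : ℝ) * c 0 2 1 * c 1 2 1 + (2 : ℝ) * c 0 2 2 * c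 1 2 2 + (3 : ℝ) * c 0 3 0 * c 1 1 0 + (3 : ℝ) * c 0 3 1 * c 1 1 1 + (3 : ℝ) * c 0 3 2 * c 1 1 2 + (4 : ℝ) * c 0 4 0 * c 1 0 0 + (4 : ℝ) * c 0 4 1 * c 1 0 1 + (4 : ℝ) * c 0 4 2 * c 1 0 2) * v ^ 3 + (c 0 1 0 * c 1 4 0 + c 0 1 1 * c 1 4 1 + c 0 1 2 * c 1 4 2 + (2 : ℝ) * c 0 2 0 * c 1 3 0 + (2 : ℝ) * c 0 2 1 * c 1 3 1 + (2 : ℝ) * c 0 2 2 * c 1 3 2 + (3 : ℝ) * c 0 3 0 * c 1 2 0 + (3 : ℝ) * c 0 3 1 * c 1 2 1 + (3 : ℝ) * c 0 3 2 * c 1 2 2 + (4 : ℝ) * c 0 4 0 * c 1 1 0 + (4 : ℝ) * c 0 4 1 * c 1 1 1 + (4 : ℝ) * c 0 4 2 * c 1 1 2) * v ^ 4 + ((2 : ℝ) * c 0 2 0 * c 1 4 0 + (2 : ℝ) * c 0 2 1 * c 1 4 1 + (2 : ℝ) * c 0 2 2 * c 1 4 2 + (3 : ℝ) * c 0 3 0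 * c 1 3 0 + (3 : ℝ) * c 0 3 1 * c 1 3 1 + (3 : ℝ) * c 0 3 2 * c 1 3 2 + (4 : ℝ) * c 0 4 0 * c 1 2 0 + (4 : ℝ) * c 0 4 1 * c 1 2 1 + (4 : ℝ) * c 0 4 2 * c 1 2 2) * v ^ 5 + ((3 : ℝ) * c 0 3 0 * c 1 4 0 + (3 : ℝ) * c 0 3 1 * c 1 4 1 + (3 : ℝ) * c 0 3 2 * c 1 4 2 + (4 : ℝ) * c 0 4 0 * c 1 3 0 + (4 : ℝ) * c 0 4 1 * c 1 3 1 + (4 : ℝ) * c 0 4 2 * c 1 3 2) * v ^ 6 + ((4 : ℝ) * c 0 4 0 * c 1 4 0 + (4 : ℝ) * c 0 4 1 * c 1 4 1 + (4 : ℝ) * c 0 4 2 * c 1 4 2) * v ^ 7) + (((2 : ℝ) * c 0 1 0 * c 2 0 0 + (2 : ℝ) * c 0 1 1 * c 2 0 1 + (2 : ℝ) * c 0 1 2 * c 2 0 2 + c 1 0 0 * c 1 1 0 + c 1 0 1 * c 1 1 1 + c 1 0 2 * c 1 1 2) + ((2 : ℝ) * c 0 1 0 * c 2 1 0 + (2 :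 ℝ) * c 0 1 1 * c 2 1 1 + (2 : ℝ) * c 0 1 2 * c 2 1 2 + (4 : ℝ) * c 0 2 0 * c 2 0 0 + (4 : ℝ) * c 0 2 1 * c 2 0 1 + (4 : ℝ) * c 0 2 2 * c 2 0 2 + (2 : ℝ) * c 1 0 0 * c 1 2 0 + (2 : ℝ) * c 1 0 1 * c 1 2 1 + (2 : ℝ) * c 1 0 2 * c 1 2 2 + c 1 1 0 * c 1 1 0 + c 1 1 1 * c 1 1 1 + c 1 1 2 * c 1 1 2) * v + ((2 : ℝ) * c 0 1 0 * c 2 2 0 + (2 : ℝ) * c 0 1 1 * c 2 2 1 + (2 : ℝ) * c 0 1 2 * c 2 2 2 + (4 : ℝ) * c 0 2 0 * c 2 1 0 + (4 : ℝ) * c 0 2 1 * c 2 1 1 + (4 : ℝ) * c 0 2 2 * c 2 1 2 + (6 : ℝ) * c 0 3 0 * c 2 0 0 + (6 : ℝ) * c 0 3 1 * c 2 0 1 + (6 : ℝ) * c 0 3 2 * c 2 0 2 + (3 : ℝ) * c 1 0 0 * c 1 3 0 + (3 : ℝ) * c 1 0 1 * c 1 3 1 + (3 : ℝ) * c 1 0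 2 * c 1 3 2 + (3 : ℝ) * c 1 1 0 * c 1 2 0 + (3 : ℝ) * c 1 1 1 * c 1 2 1 + (3 : ℝ) * c 1 1 2 * c 1 2 2) * v ^ 2 + ((2 : ℝ) * c 0 1 0 * c 2 3 0 + (2 : ℝ) * c 0 1 1 * c 2 3 1 + (2 : ℝ) * c 0 1 2 * c 2 3 2 + (4 : ℝ) * c 0 2 0 * c 2 2 0 + (4 : ℝ) * c 0 2 1 * c 2 2 1 + (4 : ℝ) * c 0 2 2 * c 2 2 2 + (6 : ℝ) * c 0 3 0 * c 2 1 0 + (6 : ℝ) * c 0 3 1 * c 2 1 1 + (6 : ℝ) * c 0 3 2 * c 2 1 2 + (8 : ℝ) * c 0 4 0 * c 2 0 0 + (8 : ℝ) * c 0 4 1 * c 2 0 1 + (8 : ℝ) * c 0 4 2 * c 2 0 2 + (4 : ℝ) * c 1 0 0 * c 1 4 0 + (4 : ℝ) * c 1 0 1 * c 1 4 1 + (4 : ℝ) * c 1 0 2 * c 1 4 2 + (4 : ℝ) * c 1 1 0 * c 1 3 0 + (4 : ℝ) * c 1 1 1 * c 1 3 1 + (4 : ℝ) * c 1 1 2 *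 c 1 3 2 + (2 : ℝ) * c 1 2 0 * c 1 2 0 + (2 : ℝ) * c 1 2 1 * c 1 2 1 + (2 : ℝ) * c 1 2 2 * c 1 2 2) * v ^ 3 + ((2 : ℝ) * c 0 1 0 * c 2 4 0 + (2 : ℝ) * c 0 1 1 * c 2 4 1 + (2 : ℝ) * c 0 1 2 * c 2 4 2 + (4 : ℝ) * c 0 2 0 * c 2 3 0 + (4 : ℝ) * c 0 2 1 * c 2 3 1 + (4 : ℝ) * c 0 2 2 * c 2 3 2 + (6 : ℝ) * c 0 3 0 * c 2 2 0 + (6 : ℝ) * c 0 3 1 * c 2 2 1 + (6 : ℝ) * c 0 3 2 * c 2 2 2 + (8 : ℝ) * c 0 4 0 * c 2 1 0 + (8 : ℝ) * c 0 4 1 * c 2 1 1 + (8 : ℝ) * c 0 4 2 * c 2 1 2 + (5 : ℝ) * c 1 1 0 * c 1 4 0 + (5 : ℝ) * c 1 1 1 * c 1 4 1 + (5 : ℝ) * c 1 1 2 * c 1 4 2 + (5 : ℝ) * c 1 2 0 * c 1 3 0 + (5 : ℝ) * c 1 2 1 * c 1 3 1 + (5 : ℝ) * c 1 2 2 * c 1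 3 2) * v ^ 4 + ((4 : ℝ) * c 0 2 0 * c 2 4 0 + (4 : ℝ) * c 0 2 1 * c 2 4 1 + (4 : ℝ) * c 0 2 2 * c 2 4 2 + (6 : ℝ) * c 0 3 0 * c 2 3 0 + (6 : ℝ) * c 0 3 1 * c 2 3 1 + (6 : ℝ) * c 0 3 2 * c 2 3 2 + (8 : ℝ) * c 0 4 0 * c 2 2 0 + (8 : ℝ) * c 0 4 1 * c 2 2 1 + (8 : ℝ) * c 0 4 2 * c 2 2 2 + (6 : ℝ) * c 1 2 0 * c 1 4 0 + (6 : ℝ) * c 1 2 1 * c 1 4 1 + (6 : ℝ) * c 1 2 2 * c 1 4 2 + (3 : ℝ) * c 1 3 0 * c 1 3 0 + (3 : ℝ) * c 1 3 1 * c 1 3 1 + (3 : ℝ) * c 1 3 2 * c 1 3 2) * v ^ 5 + ((6 : ℝ) * c 0 3 0 * c 2 4 0 + (6 : ℝ) * c 0 3 1 * c 2 4 1 + (6 : ℝ) * c 0 3 2 * c 2 4 2 + (8 : ℝ) * c 0 4 0 * c 2 3 0 + (8 : ℝ) * c 0 4 1 * c 2 3 1 + (8 : ℝ) * c 0 4 2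 * c 2 3 2 + (7 : ℝ) * c 1 3 0 * c 1 4 0 + (7 : ℝ) * c 1 3 1 * c 1 4 1 + (7 : ℝ) * c 1 3 2 * c 1 4 2) * v ^ 6 + ((8 : ℝ) * c 0 4 0 * c 2 4 0 + (8 : ℝ) * c 0 4 1 * c 2 4 1 + (8 : ℝ) * c 0 4 2 * c 2 4 2 + (4 : ℝ) * c 1 4 0 * c 1 4 0 + (4 : ℝ) * c 1 4 1 * c 1 4 1 + (4 : ℝ) * c 1 4 2 * c 1 4 2) * v ^ 7) * u + (((3 : ℝ) * c 0 1 0 * c 3 0 0 + (3 : ℝ) * c 0 1 1 * c 3 0 1 + (3 : ℝ) * c 0 1 2 * c 3 0 2 + c 1 0 0 * c 2 1 0 + c 1 0 1 * c 2 1 1 + c 1 0 2 * c 2 1 2 + (2 : ℝ) * c 1 1 0 * c 2 0 0 + (2 : ℝ) * c 1 1 1 * c 2 0 1 + (2 : ℝ) * c 1 1 2 * c 2 0 2) + ((3 : ℝ) * c 0 1 0 * c 3 1 0 + (3 : ℝ) * c 0 1 1 * c 3 1 1 + (3 : ℝ) * c 0 1 2 * c 3 1 2 + (6 : ℝ) *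 c 0 2 0 * c 3 0 0 + (6 : ℝ) * c 0 2 1 * c 3 0 1 + (6 : ℝ) * c 0 2 2 * c 3 0 2 + (2 : ℝ) * c 1 0 0 * c 2 2 0 + (2 : ℝ) * c 1 0 1 * c 2 2 1 + (2 : ℝ) * c 1 0 2 * c 2 2 2 + (3 : ℝ) * c 1 1 0 * c 2 1 0 + (3 : ℝ) * c 1 1 1 * c 2 1 1 + (3 : ℝ) * c 1 1 2 * c 2 1 2 + (4 : ℝ) * c 1 2 0 * c 2 0 0 + (4 : ℝ) * c 1 2 1 * c 2 0 1 + (4 : ℝ) * c 1 2 2 * c 2 0 2) * v + ((3 : ℝ) * c 0 1 0 * c 3 2 0 + (3 : ℝ) * c 0 1 1 * c 3 2 1 + (3 : ℝ) * c 0 1 2 * c 3 2 2 + (6 : ℝ) * c 0 2 0 * c 3 1 0 + (6 : ℝ) * c 0 2 1 * c 3 1 1 + (6 : ℝ) * c 0 2 2 * c 3 1 2 + (9 : ℝ) * c 0 3 0 * c 3 0 0 + (9 : ℝ) * c 0 3 1 * c 3 0 1 + (9 : ℝ) * c 0 3 2 * c 3 0 2 + (3 : ℝ) * c 1 0 0 *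 c 2 3 0 + (3 : ℝ) * c 1 0 1 * c 2 3 1 + (3 : ℝ) * c 1 0 2 * c 2 3 2 + (4 : ℝ) * c 1 1 0 * c 2 2 0 + (4 : ℝ) * c 1 1 1 * c 2 2 1 + (4 : ℝ) * c 1 1 2 * c 2 2 2 + (5 : ℝ) * c 1 2 0 * c 2 1 0 + (5 : ℝ) * c 1 2 1 * c 2 1 1 + (5 : ℝ) * c 1 2 2 * c 2 1 2 + (6 : ℝ) * c 1 3 0 * c 2 0 0 + (6 : ℝ) * c 1 3 1 * c 2 0 1 + (6 : ℝ) * c 1 3 2 * c 2 0 2) * v ^ 2 + ((3 : ℝ) * c 0 1 0 * c 3 3 0 + (3 : ℝ) * c 0 1 1 * c 3 3 1 + (3 : ℝ) * c 0 1 2 * c 3 3 2 + (6 : ℝ) * c 0 2 0 * c 3 2 0 + (6 : ℝ) * c 0 2 1 * c 3 2 1 + (6 : ℝ) * c 0 2 2 * c 3 2 2 + (9 : ℝ) * c 0 3 0 * c 3 1 0 + (9 : ℝ) * c 0 3 1 * c 3 1 1 + (9 : ℝ) * c 0 3 2 * c 3 1 2 + (12 : ℝ) * c 0 4 0 * c 3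 0 0 + (12 : ℝ) * c 0 4 1 * c 3 0 1 + (12 : ℝ) * c 0 4 2 * c 3 0 2 + (4 : ℝ) * c 1 0 0 * c 2 4 0 + (4 : ℝ) * c 1 0 1 * c 2 4 1 + (4 : ℝ) * c 1 0 2 * c 2 4 2 + (5 : ℝ) * c 1 1 0 * c 2 3 0 + (5 : ℝ) * c 1 1 1 * c 2 3 1 + (5 : ℝ) * c 1 1 2 * c 2 3 2 + (6 : ℝ) * c 1 2 0 * c 2 2 0 + (6 : ℝ) * c 1 2 1 * c 2 2 1 + (6 : ℝ) * c 1 2 2 * c 2 2 2 + (7 : ℝ) * c 1 3 0 * c 2 1 0 + (7 : ℝ) * c 1 3 1 * c 2 1 1 + (7 : ℝ) * c 1 3 2 * c 2 1 2 + (8 : ℝ) * c 1 4 0 * c 2 0 0 + (8 : ℝ) * c 1 4 1 * c 2 0 1 + (8 : ℝ) * c 1 4 2 * c 2 0 2) * v ^ 3 + ((3 : ℝ) * c 0 1 0 * c 3 4 0 + (3 : ℝ) * c 0 1 1 * c 3 4 1 + (3 : ℝ) * c 0 1 2 * c 3 4 2 + (6 : ℝ) * c 0 2 0 * c 3 3 0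 + (6 : ℝ) * c 0 2 1 * c 3 3 1 + (6 : ℝ) * c 0 2 2 * c 3 3 2 + (9 : ℝ) * c 0 3 0 * c 3 2 0 + (9 : ℝ) * c 0 3 1 * c 3 2 1 + (9 : ℝ) * c 0 3 2 * c 3 2 2 + (12 : ℝ) * c 0 4 0 * c 3 1 0 + (12 : ℝ) * c 0 4 1 * c 3 1 1 + (12 : ℝ) * c 0 4 2 * c 3 1 2 + (6 : ℝ) * c 1 1 0 * c 2 4 0 + (6 : ℝ) * c 1 1 1 * c 2 4 1 + (6 : ℝ) * c 1 1 2 * c 2 4 2 + (7 : ℝ) * c 1 2 0 * c 2 3 0 + (7 : ℝ) * c 1 2 1 * c 2 3 1 + (7 : ℝ) * c 1 2 2 * c 2 3 2 + (8 : ℝ) * c 1 3 0 * c 2 2 0 + (8 : ℝ) * c 1 3 1 * c 2 2 1 + (8 : ℝ) * c 1 3 2 * c 2 2 2 + (9 : ℝ) * c 1 4 0 * c 2 1 0 + (9 : ℝ) * c 1 4 1 * c 2 1 1 + (9 : ℝ) * c 1 4 2 * c 2 1 2) * v ^ 4 + ((6 : ℝ) * c 0 2 0 * c 3 4 0 + (6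 : ℝ) * c 0 2 1 * c 3 4 1 + (6 : ℝ) * c 0 2 2 * c 3 4 2 + (9 : ℝ) * c 0 3 0 * c 3 3 0 + (9 : ℝ) * c 0 3 1 * c 3 3 1 + (9 : ℝ) * c 0 3 2 * c 3 3 2 + (12 : ℝ) * c 0 4 0 * c 3 2 0 + (12 : ℝ) * c 0 4 1 * c 3 2 1 + (12 : ℝ) * c 0 4 2 * c 3 2 2 + (8 : ℝ) * c 1 2 0 * c 2 4 0 + (8 : ℝ) * c 1 2 1 * c 2 4 1 + (8 : ℝ) * c 1 2 2 * c 2 4 2 + (9 : ℝ) * c 1 3 0 * c 2 3 0 + (9 : ℝ) * c 1 3 1 * c 2 3 1 + (9 : ℝ) * c 1 3 2 * c 2 3 2 + (10 : ℝ) * c 1 4 0 * c 2 2 0 + (10 : ℝ) * c 1 4 1 * c 2 2 1 + (10 : ℝ) * c 1 4 2 * c 2 2 2) * v ^ 5 + ((9 : ℝ) * c 0 3 0 * c 3 4 0 + (9 : ℝ) * c 0 3 1 * c 3 4 1 + (9 : ℝ) * c 0 3 2 * c 3 4 2 + (12 : ℝ) * c 0 4 0 * c 3 3 0 + (12 : ℝ)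 * c 0 4 1 * c 3 3 1 + (12 : ℝ) * c 0 4 2 * c 3 3 2 + (10 : ℝ) * c 1 3 0 * c 2 4 0 + (10 : ℝ) * c 1 3 1 * c 2 4 1 + (10 : ℝ) * c 1 3 2 * c 2 4 2 + (11 : ℝ) * c 1 4 0 * c 2 3 0 + (11 : ℝ) * c 1 4 1 * c 2 3 1 + (11 : ℝ) * c 1 4 2 * c 2 3 2) * v ^ 6 + ((12 : ℝ) * c 0 4 0 * c 3 4 0 + (12 : ℝ) * c 0 4 1 * c 3 4 1 + (12 : ℝ) * c 0 4 2 * c 3 4 2 + (12 : ℝ) * c 1 4 0 * c 2 4 0 + (12 : ℝ) * c 1 4 1 * c 2 4 1 + (12 : ℝ) * c 1 4 2 * c 2 4 2) * v ^ 7) * u ^ 2 + (((4 : ℝ) * c 0 1 0 * c 4 0 0 + (4 : ℝ) * c 0 1 1 * c 4 0 1 + (4 : ℝ) * c 0 1 2 * c 4 0 2 + c 1 0 0 * c 3 1 0 + c 1 0 1 * c 3 1 1 + c 1 0 2 * c 3 1 2 + (3 : ℝ) * c 1 1 0 * c 3 0 0 + (3 : ℝ) * c 1 1 1 * c 3 0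 1 + (3 : ℝ) * c 1 1 2 * c 3 0 2 + (2 : ℝ) * c 2 0 0 * c 2 1 0 + (2 : ℝ) * c 2 0 1 * c 2 1 1 + (2 : ℝ) * c 2 0 2 * c 2 1 2) + ((4 : ℝ) * c 0 1 0 * c 4 1 0 + (4 : ℝ) * c 0 1 1 * c 4 1 1 + (4 : ℝ) * c 0 1 2 * c 4 1 2 + (8 : ℝ) * c 0 2 0 * c 4 0 0 + (8 : ℝ) * c 0 2 1 * c 4 0 1 + (8 : ℝ) * c 0 2 2 * c 4 0 2 + (2 : ℝ) * c 1 0 0 * c 3 2 0 + (2 : ℝ) * c 1 0 1 * c 3 2 1 + (2 : ℝ) * c 1 0 2 * c 3 2 2 + (4 : ℝ) * c 1 1 0 * c 3 1 0 + (4 : ℝ) * c 1 1 1 * c 3 1 1 + (4 : ℝ) * c 1 1 2 * c 3 1 2 + (6 : ℝ) * c 1 2 0 * c 3 0 0 + (6 : ℝ) * c 1 2 1 * c 3 0 1 + (6 : ℝ) * c 1 2 2 * c 3 0 2 + (4 : ℝ) * c 2 0 0 * c 2 2 0 + (4 : ℝ) * c 2 0 1 * c 2 2 1 + (4 : ℝ)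 * c 2 0 2 * c 2 2 2 + (2 : ℝ) * c 2 1 0 * c 2 1 0 + (2 : ℝ) * c 2 1 1 * c 2 1 1 + (2 : ℝ) * c 2 1 2 * c 2 1 2) * v + ((4 : ℝ) * c 0 1 0 * c 4 2 0 + (4 : ℝ) * c 0 1 1 * c 4 2 1 + (4 : ℝ) * c 0 1 2 * c 4 2 2 + (8 : ℝ) * c 0 2 0 * c 4 1 0 + (8 : ℝ) * c 0 2 1 * c 4 1 1 + (8 : ℝ) * c 0 2 2 * c 4 1 2 + (12 : ℝ) * c 0 3 0 * c 4 0 0 + (12 : ℝ) * c 0 3 1 * c 4 0 1 + (12 : ℝ) * c 0 3 2 * c 4 0 2 + (3 : ℝ) * c 1 0 0 * c 3 3 0 + (3 : ℝ) * c 1 0 1 * c 3 3 1 + (3 : ℝ) * c 1 0 2 * c 3 3 2 + (5 : ℝ) * c 1 1 0 * c 3 2 0 + (5 : ℝ) * c 1 1 1 * c 3 2 1 + (5 : ℝ) * c 1 1 2 * c 3 2 2 + (7 : ℝ) * c 1 2 0 * c 3 1 0 + (7 : ℝ) * c 1 2 1 * c 3 1 1 + (7 : ℝ) * c 1 2 2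 * c 3 1 2 + (9 : ℝ) * c 1 3 0 * c 3 0 0 + (9 : ℝ) * c 1 3 1 * c 3 0 1 + (9 : ℝ) * c 1 3 2 * c 3 0 2 + (6 : ℝ) * c 2 0 0 * c 2 3 0 + (6 : ℝ) * c 2 0 1 * c 2 3 1 + (6 : ℝ) * c 2 0 2 * c 2 3 2 + (6 : ℝ) * c 2 1 0 * c 2 2 0 + (6 : ℝ) * c 2 1 1 * c 2 2 1 + (6 : ℝ) * c 2 1 2 * c 2 2 2) * v ^ 2 + ((4 : ℝ) * c 0 1 0 * c 4 3 0 + (4 : ℝ) * c 0 1 1 * c 4 3 1 + (4 : ℝ) * c 0 1 2 * c 4 3 2 + (8 : ℝ) * c 0 2 0 * c 4 2 0 + (8 : ℝ) * c 0 2 1 * c 4 2 1 + (8 : ℝ) * c 0 2 2 * c 4 2 2 + (12 : ℝ) * c 0 3 0 * c 4 1 0 + (12 : ℝ) * c 0 3 1 * c 4 1 1 + (12 : ℝ) * c 0 3 2 * c 4 1 2 + (16 : ℝ) * c 0 4 0 * c 4 0 0 + (16 : ℝ) * c 0 4 1 * c 4 0 1 + (16 : ℝ) * c 0 4 2 * c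 4 0 2 + (4 : ℝ) * c 1 0 0 * c 3 4 0 + (4 : ℝ) * c 1 0 1 * c 3 4 1 + (4 : ℝ) * c 1 0 2 * c 3 4 2 + (6 : ℝ) * c 1 1 0 * c 3 3 0 + (6 : ℝ) * c 1 1 1 * c 3 3 1 + (6 : ℝ) * c 1 1 2 * c 3 3 2 + (8 : ℝ) * c 1 2 0 * c 3 2 0 + (8 : ℝ) * c 1 2 1 * c 3 2 1 + (8 : ℝ) * c 1 2 2 * c 3 2 2 + (10 : ℝ) * c 1 3 0 * c 3 1 0 + (10 : ℝ) * c 1 3 1 * c 3 1 1 + (10 : ℝ) * c 1 3 2 * c 3 1 2 + (12 : ℝ) * c 1 4 0 * c 3 0 0 + (12 : ℝ) * c 1 4 1 * c 3 0 1 + (12 : ℝ) * c 1 4 2 * c 3 0 2 + (8 : ℝ) * c 2 0 0 * c 2 4 0 + (8 : ℝ) * c 2 0 1 * c 2 4 1 + (8 : ℝ) * c 2 0 2 * c 2 4 2 + (8 : ℝ) * c 2 1 0 * c 2 3 0 + (8 : ℝ) * c 2 1 1 * c 2 3 1 + (8 : ℝ) * c 2 1 2 * c 2 3 2 + (4 :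 ℝ) * c 2 2 0 * c 2 2 0 + (4 : ℝ) * c 2 2 1 * c 2 2 1 + (4 : ℝ) * c 2 2 2 * c 2 2 2) * v ^ 3 + ((4 : ℝ) * c 0 1 0 * c 4 4 0 + (4 : ℝ) * c 0 1 1 * c 4 4 1 + (4 : ℝ) * c 0 1 2 * c 4 4 2 + (8 : ℝ) * c 0 2 0 * c 4 3 0 + (8 : ℝ) * c 0 2 1 * c 4 3 1 + (8 : ℝ) * c 0 2 2 * c 4 3 2 + (12 : ℝ) * c 0 3 0 * c 4 2 0 + (12 : ℝ) * c 0 3 1 * c 4 2 1 + (12 : ℝ) * c 0 3 2 * c 4 2 2 + (16 : ℝ) * c 0 4 0 * c 4 1 0 + (16 : ℝ) * c 0 4 1 * c 4 1 1 + (16 : ℝ) * c 0 4 2 * c 4 1 2 + (7 : ℝ) * c 1 1 0 * c 3 4 0 + (7 : ℝ) * c 1 1 1 * c 3 4 1 + (7 : ℝ) * c 1 1 2 * c 3 4 2 + (9 : ℝ) * c 1 2 0 * c 3 3 0 + (9 : ℝ) * c 1 2 1 * c 3 3 1 + (9 : ℝ) * c 1 2 2 * c 3 3 2 + (11 : ℝ)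 * c 1 3 0 * c 3 2 0 + (11 : ℝ) * c 1 3 1 * c 3 2 1 + (11 : ℝ) * c 1 3 2 * c 3 2 2 + (13 : ℝ) * c 1 4 0 * c 3 1 0 + (13 : ℝ) * c 1 4 1 * c 3 1 1 + (13 : ℝ) * c 1 4 2 * c 3 1 2 + (10 : ℝ) * c 2 1 0 * c 2 4 0 + (10 : ℝ) * c 2 1 1 * c 2 4 1 + (10 : ℝ) * c 2 1 2 * c 2 4 2 + (10 : ℝ) * c 2 2 0 * c 2 3 0 + (10 : ℝ) * c 2 2 1 * c 2 3 1 + (10 : ℝ) * c 2 2 2 * c 2 3 2) * v ^ 4 + ((8 : ℝ) * c 0 2 0 * c 4 4 0 + (8 : ℝ) * c 0 2 1 * c 4 4 1 + (8 : ℝ) * c 0 2 2 * c 4 4 2 + (12 : ℝ) * c 0 3 0 * c 4 3 0 + (12 : ℝ) * c 0 3 1 * c 4 3 1 + (12 : ℝ) * c 0 3 2 * c 4 3 2 + (16 : ℝ) * c 0 4 0 * c 4 2 0 + (16 : ℝ) * c 0 4 1 * c 4 2 1 + (16 : ℝ) * c 0 4 2 * c 4 2 2 + (10 : ℝ) * c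 1 2 0 * c 3 4 0 + (10 : ℝ) * c 1 2 1 * c 3 4 1 + (10 : ℝ) * c 1 2 2 * c 3 4 2 + (12 : ℝ) * c 1 3 0 * c 3 3 0 + (12 : ℝ) * c 1 3 1 * c 3 3 1 + (12 : ℝ) * c 1 3 2 * c 3 3 2 + (14 : ℝ) * c 1 4 0 * c 3 2 0 + (14 : ℝ) * c 1 4 1 * c 3 2 1 + (14 : ℝ) * c 1 4 2 * c 3 2 2 + (12 : ℝ) * c 2 2 0 * c 2 4 0 + (12 : ℝ) * c 2 2 1 * c 2 4 1 + (12 : ℝ) * c 2 2 2 * c 2 4 2 + (6 : ℝ) * c 2 3 0 * c 2 3 0 + (6 : ℝ) * c 2 3 1 * c 2 3 1 + (6 : ℝ) * c 2 3 2 * c 2 3 2) * v ^ 5 + ((12 : ℝ) * c 0 3 0 * c 4 4 0 + (12 : ℝ) * c 0 3 1 * c 4 4 1 + (12 : ℝ) * c 0 3 2 * c 4 4 2 + (16 : ℝ) * c 0 4 0 * c 4 3 0 + (16 : ℝ) * c 0 4 1 * c 4 3 1 + (16 : ℝ) * c 0 4 2 * c 4 3 2 + (13 : ℝ) * c 1 3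 0 * c 3 4 0 + (13 : ℝ) * c 1 3 1 * c 3 4 1 + (13 : ℝ) * c 1 3 2 * c 3 4 2 + (15 : ℝ) * c 1 4 0 * c 3 3 0 + (15 : ℝ) * c 1 4 1 * c 3 3 1 + (15 : ℝ) * c 1 4 2 * c 3 3 2 + (14 : ℝ) * c 2 3 0 * c 2 4 0 + (14 : ℝ) * c 2 3 1 * c 2 4 1 + (14 : ℝ) * c 2 3 2 * c 2 4 2) * v ^ 6 + ((16 : ℝ) * c 0 4 0 * c 4 4 0 + (16 : ℝ) * c 0 4 1 * c 4 4 1 + (16 : ℝ) * c 0 4 2 * c 4 4 2 + (16 : ℝ) * c 1 4 0 * c 3 4 0 + (16 : ℝ) * c 1 4 1 * c 3 4 1 + (16 : ℝ) * c 1 4 2 * c 3 4 2 + (8 : ℝ) * c 2 4 0 * c 2 4 0 + (8 : ℝ) * c 2 4 1 * c 2 4 1 + (8 : ℝ) * c 2 4 2 * c 2 4 2) * v ^ 7) * u ^ 3 + ((c 1 0 0 * c 4 1 0 + c 1 0 1 * c 4 1 1 + c 1 0 2 * c 4 1 2 + (4 : ℝ) * c 1 1 0 * c 4 0 0 + (4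 : ℝ) * c 1 1 1 * c 4 0 1 + (4 : ℝ) * c 1 1 2 * c 4 0 2 + (2 : ℝ) * c 2 0 0 * c 3 1 0 + (2 : ℝ) * c 2 0 1 * c 3 1 1 + (2 : ℝ) * c 2 0 2 * c 3 1 2 + (3 : ℝ) * c 2 1 0 * c 3 0 0 + (3 : ℝ) * c 2 1 1 * c 3 0 1 + (3 : ℝ) * c 2 1 2 * c 3 0 2) + ((2 : ℝ) * c 1 0 0 * c 4 2 0 + (2 : ℝ) * c 1 0 1 * c 4 2 1 + (2 : ℝ) * c 1 0 2 * c 4 2 2 + (5 : ℝ) * c 1 1 0 * c 4 1 0 + (5 : ℝ) * c 1 1 1 * c 4 1 1 + (5 : ℝ) * c 1 1 2 * c 4 1 2 + (8 : ℝ) * c 1 2 0 * c 4 0 0 + (8 : ℝ) * c 1 2 1 * c 4 0 1 + (8 : ℝ) * c 1 2 2 * c 4 0 2 + (4 : ℝ) * c 2 0 0 * c 3 2 0 + (4 : ℝ) * c 2 0 1 * c 3 2 1 + (4 : ℝ) * c 2 0 2 * c 3 2 2 + (5 : ℝ) * c 2 1 0 * c 3 1 0 + (5 : ℝ) * c 2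 1 1 * c 3 1 1 + (5 : ℝ) * c 2 1 2 * c 3 1 2 + (6 : ℝ) * c 2 2 0 * c 3 0 0 + (6 : ℝ) * c 2 2 1 * c 3 0 1 + (6 : ℝ) * c 2 2 2 * c 3 0 2) * v + ((3 : ℝ) * c 1 0 0 * c 4 3 0 + (3 : ℝ) * c 1 0 1 * c 4 3 1 + (3 : ℝ) * c 1 0 2 * c 4 3 2 + (6 : ℝ) * c 1 1 0 * c 4 2 0 + (6 : ℝ) * c 1 1 1 * c 4 2 1 + (6 : ℝ) * c 1 1 2 * c 4 2 2 + (9 : ℝ) * c 1 2 0 * c 4 1 0 + (9 : ℝ) * c 1 2 1 * c 4 1 1 + (9 : ℝ) * c 1 2 2 * c 4 1 2 + (12 : ℝ) * c 1 3 0 * c 4 0 0 + (12 : ℝ) * c 1 3 1 * c 4 0 1 + (12 : ℝ) * c 1 3 2 * c 4 0 2 + (6 : ℝ) * c 2 0 0 * c 3 3 0 + (6 : ℝ) * c 2 0 1 * c 3 3 1 + (6 : ℝ) * c 2 0 2 * c 3 3 2 + (7 : ℝ) * c 2 1 0 * c 3 2 0 + (7 : ℝ) * c 2 1 1 * c 3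 2 1 + (7 : ℝ) * c 2 1 2 * c 3 2 2 + (8 : ℝ) * c 2 2 0 * c 3 1 0 + (8 : ℝ) * c 2 2 1 * c 3 1 1 + (8 : ℝ) * c 2 2 2 * c 3 1 2 + (9 : ℝ) * c 2 3 0 * c 3 0 0 + (9 : ℝ) * c 2 3 1 * c 3 0 1 + (9 : ℝ) * c 2 3 2 * c 3 0 2) * v ^ 2 + ((4 : ℝ) * c 1 0 0 * c 4 4 0 + (4 : ℝ) * c 1 0 1 * c 4 4 1 + (4 : ℝ) * c 1 0 2 * c 4 4 2 + (7 : ℝ) * c 1 1 0 * c 4 3 0 + (7 : ℝ) * c 1 1 1 * c 4 3 1 + (7 : ℝ) * c 1 1 2 * c 4 3 2 + (10 : ℝ) * c 1 2 0 * c 4 2 0 + (10 : ℝ) * c 1 2 1 * c 4 2 1 + (10 : ℝ) * c 1 2 2 * c 4 2 2 + (13 : ℝ) * c 1 3 0 * c 4 1 0 + (13 : ℝ) * c 1 3 1 * c 4 1 1 + (13 : ℝ) * c 1 3 2 * c 4 1 2 + (16 : ℝ) * c 1 4 0 * c 4 0 0 + (16 : ℝ) * c 1 4 1 * c 4 0 1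 + (16 : ℝ) * c 1 4 2 * c 4 0 2 + (8 : ℝ) * c 2 0 0 * c 3 4 0 + (8 : ℝ) * c 2 0 1 * c 3 4 1 + (8 : ℝ) * c 2 0 2 * c 3 4 2 + (9 : ℝ) * c 2 1 0 * c 3 3 0 + (9 : ℝ) * c 2 1 1 * c 3 3 1 + (9 : ℝ) * c 2 1 2 * c 3 3 2 + (10 : ℝ) * c 2 2 0 * c 3 2 0 + (10 : ℝ) * c 2 2 1 * c 3 2 1 + (10 : ℝ) * c 2 2 2 * c 3 2 2 + (11 : ℝ) * c 2 3 0 * c 3 1 0 + (11 : ℝ) * c 2 3 1 * c 3 1 1 + (11 : ℝ) * c 2 3 2 * c 3 1 2 + (12 : ℝ) * c 2 4 0 * c 3 0 0 + (12 : ℝ) * c 2 4 1 * c 3 0 1 + (12 : ℝ) * c 2 4 2 * c 3 0 2) * v ^ 3 + ((8 : ℝ) * c 1 1 0 * c 4 4 0 + (8 : ℝ) * c 1 1 1 * c 4 4 1 + (8 : ℝ) * c 1 1 2 * c 4 4 2 + (11 : ℝ) * c 1 2 0 * c 4 3 0 + (11 : ℝ) * c 1 2 1 * c 4 3 1 + (11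 : ℝ) * c 1 2 2 * c 4 3 2 + (14 : ℝ) * c 1 3 0 * c 4 2 0 + (14 : ℝ) * c 1 3 1 * c 4 2 1 + (14 : ℝ) * c 1 3 2 * c 4 2 2 + (17 : ℝ) * c 1 4 0 * c 4 1 0 + (17 : ℝ) * c 1 4 1 * c 4 1 1 + (17 : ℝ) * c 1 4 2 * c 4 1 2 + (11 : ℝ) * c 2 1 0 * c 3 4 0 + (11 : ℝ) * c 2 1 1 * c 3 4 1 + (11 : ℝ) * c 2 1 2 * c 3 4 2 + (12 : ℝ) * c 2 2 0 * c 3 3 0 + (12 : ℝ) * c 2 2 1 * c 3 3 1 + (12 : ℝ) * c 2 2 2 * c 3 3 2 + (13 : ℝ) * c 2 3 0 * c 3 2 0 + (13 : ℝ) * c 2 3 1 * c 3 2 1 + (13 : ℝ) * c 2 3 2 * c 3 2 2 + (14 : ℝ) * c 2 4 0 * c 3 1 0 + (14 : ℝ) * c 2 4 1 * c 3 1 1 + (14 : ℝ) * c 2 4 2 * c 3 1 2) * v ^ 4 + ((12 : ℝ) * c 1 2 0 * c 4 4 0 + (12 : ℝ) * c 1 2 1 * c 4 4 1 + (12 : ℝ)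 * c 1 2 2 * c 4 4 2 + (15 : ℝ) * c 1 3 0 * c 4 3 0 + (15 : ℝ) * c 1 3 1 * c 4 3 1 + (15 : ℝ) * c 1 3 2 * c 4 3 2 + (18 : ℝ) * c 1 4 0 * c 4 2 0 + (18 : ℝ) * c 1 4 1 * c 4 2 1 + (18 : ℝ) * c 1 4 2 * c 4 2 2 + (14 : ℝ) * c 2 2 0 * c 3 4 0 + (14 : ℝ) * c 2 2 1 * c 3 4 1 + (14 : ℝ) * c 2 2 2 * c 3 4 2 + (15 : ℝ) * c 2 3 0 * c 3 3 0 + (15 : ℝ) * c 2 3 1 * c 3 3 1 + (15 : ℝ) * c 2 3 2 * c 3 3 2 + (16 : ℝ) * c 2 4 0 * c 3 2 0 + (16 : ℝ) * c 2 4 1 * c 3 2 1 + (16 : ℝ) * c 2 4 2 * c 3 2 2) * v ^ 5 + ((16 : ℝ) * c 1 3 0 * c 4 4 0 + (16 : ℝ) * c 1 3 1 * c 4 4 1 + (16 : ℝ) * c 1 3 2 * c 4 4 2 + (19 : ℝ) * c 1 4 0 * c 4 3 0 + (19 : ℝ) * c 1 4 1 * c 4 3 1 + (19 : ℝ) * c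 1 4 2 * c 4 3 2 + (17 : ℝ) * c 2 3 0 * c 3 4 0 + (17 : ℝ) * c 2 3 1 * c 3 4 1 + (17 : ℝ) * c 2 3 2 * c 3 4 2 + (18 : ℝ) * c 2 4 0 * c 3 3 0 + (18 : ℝ) * c 2 4 1 * c 3 3 1 + (18 : ℝ) * c 2 4 2 * c 3 3 2) * v ^ 6 + ((20 : ℝ) * c 1 4 0 * c 4 4 0 + (20 : ℝ) * c 1 4 1 * c 4 4 1 + (20 : ℝ) * c 1 4 2 * c 4 4 2 + (20 : ℝ) * c 2 4 0 * c 3 4 0 + (20 : ℝ) * c 2 4 1 * c 3 4 1 + (20 : ℝ) * c 2 4 2 * c 3 4 2) * v ^ 7) * u ^ 4 + (((2 : ℝ) * c 2 0 0 * c 4 1 0 + (2 : ℝ) * c 2 0 1 * c 4 1 1 + (2 : ℝ) * c 2 0 2 * c 4 1 2 + (4 : ℝ) * c 2 1 0 * c 4 0 0 + (4 : ℝ) * c 2 1 1 * c 4 0 1 + (4 : ℝ) * c 2 1 2 * c 4 0 2 + (3 : ℝ) * c 3 0 0 * c 3 1 0 + (3 : ℝ) * c 3 0 1 * c 3 1 1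 + (3 : ℝ) * c 3 0 2 * c 3 1 2) + ((4 : ℝ) * c 2 0 0 * c 4 2 0 + (4 : ℝ) * c 2 0 1 * c 4 2 1 + (4 : ℝ) * c 2 0 2 * c 4 2 2 + (6 : ℝ) * c 2 1 0 * c 4 1 0 + (6 : ℝ) * c 2 1 1 * c 4 1 1 + (6 : ℝ) * c 2 1 2 * c 4 1 2 + (8 : ℝ) * c 2 2 0 * c 4 0 0 + (8 : ℝ) * c 2 2 1 * c 4 0 1 + (8 : ℝ) * c 2 2 2 * c 4 0 2 + (6 : ℝ) * c 3 0 0 * c 3 2 0 + (6 : ℝ) * c 3 0 1 * c 3 2 1 + (6 : ℝ) * c 3 0 2 * c 3 2 2 + (3 : ℝ) * c 3 1 0 * c 3 1 0 + (3 : ℝ) * c 3 1 1 * c 3 1 1 + (3 : ℝ) * c 3 1 2 * c 3 1 2) * v + ((6 : ℝ) * c 2 0 0 * c 4 3 0 + (6 : ℝ) * c 2 0 1 * c 4 3 1 + (6 : ℝ) * c 2 0 2 * c 4 3 2 + (8 : ℝ) * c 2 1 0 * c 4 2 0 + (8 : ℝ) * c 2 1 1 * c 4 2 1 + (8 : ℝ)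 * c 2 1 2 * c 4 2 2 + (10 : ℝ) * c 2 2 0 * c 4 1 0 + (10 : ℝ) * c 2 2 1 * c 4 1 1 + (10 : ℝ) * c 2 2 2 * c 4 1 2 + (12 : ℝ) * c 2 3 0 * c 4 0 0 + (12 : ℝ) * c 2 3 1 * c 4 0 1 + (12 : ℝ) * c 2 3 2 * c 4 0 2 + (9 : ℝ) * c 3 0 0 * c 3 3 0 + (9 : ℝ) * c 3 0 1 * c 3 3 1 + (9 : ℝ) * c 3 0 2 * c 3 3 2 + (9 : ℝ) * c 3 1 0 * c 3 2 0 + (9 : ℝ) * c 3 1 1 * c 3 2 1 + (9 : ℝ) * c 3 1 2 * c 3 2 2) * v ^ 2 + ((8 : ℝ) * c 2 0 0 * c 4 4 0 + (8 : ℝ) * c 2 0 1 * c 4 4 1 + (8 : ℝ) * c 2 0 2 * c 4 4 2 + (10 : ℝ) * c 2 1 0 * c 4 3 0 + (10 : ℝ) * c 2 1 1 * c 4 3 1 + (10 : ℝ) * c 2 1 2 * c 4 3 2 + (12 : ℝ) * c 2 2 0 * c 4 2 0 + (12 : ℝ) * c 2 2 1 * c 4 2 1 + (12 : ℝ) * c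 2 2 2 * c 4 2 2 + (14 : ℝ) * c 2 3 0 * c 4 1 0 + (14 : ℝ) * c 2 3 1 * c 4 1 1 + (14 : ℝ) * c 2 3 2 * c 4 1 2 + (16 : ℝ) * c 2 4 0 * c 4 0 0 + (16 : ℝ) * c 2 4 1 * c 4 0 1 + (16 : ℝ) * c 2 4 2 * c 4 0 2 + (12 : ℝ) * c 3 0 0 * c 3 4 0 + (12 : ℝ) * c 3 0 1 * c 3 4 1 + (12 : ℝ) * c 3 0 2 * c 3 4 2 + (12 : ℝ) * c 3 1 0 * c 3 3 0 + (12 : ℝ) * c 3 1 1 * c 3 3 1 + (12 : ℝ) * c 3 1 2 * c 3 3 2 + (6 : ℝ) * c 3 2 0 * c 3 2 0 + (6 : ℝ) * c 3 2 1 * c 3 2 1 + (6 : ℝ) * c 3 2 2 * c 3 2 2) * v ^ 3 + ((12 : ℝ) * c 2 1 0 * c 4 4 0 + (12 : ℝ) * c 2 1 1 * c 4 4 1 + (12 : ℝ) * c 2 1 2 * c 4 4 2 + (14 : ℝ) * c 2 2 0 * c 4 3 0 + (14 : ℝ) * c 2 2 1 * c 4 3 1 + (14 : ℝ) * c 2 2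 2 * c 4 3 2 + (16 : ℝ) * c 2 3 0 * c 4 2 0 + (16 : ℝ) * c 2 3 1 * c 4 2 1 + (16 : ℝ) * c 2 3 2 * c 4 2 2 + (18 : ℝ) * c 2 4 0 * c 4 1 0 + (18 : ℝ) * c 2 4 1 * c 4 1 1 + (18 : ℝ) * c 2 4 2 * c 4 1 2 + (15 : ℝ) * c 3 1 0 * c 3 4 0 + (15 : ℝ) * c 3 1 1 * c 3 4 1 + (15 : ℝ) * c 3 1 2 * c 3 4 2 + (15 : ℝ) * c 3 2 0 * c 3 3 0 + (15 : ℝ) * c 3 2 1 * c 3 3 1 + (15 : ℝ) * c 3 2 2 * c 3 3 2) * v ^ 4 + ((16 : ℝ) * c 2 2 0 * c 4 4 0 + (16 : ℝ) * c 2 2 1 * c 4 4 1 + (16 : ℝ) * c 2 2 2 * c 4 4 2 + (18 : ℝ) * c 2 3 0 * c 4 3 0 + (18 : ℝ) * c 2 3 1 * c 4 3 1 + (18 : ℝ) * c 2 3 2 * c 4 3 2 + (20 : ℝ) * c 2 4 0 * c 4 2 0 + (20 : ℝ) * c 2 4 1 * c 4 2 1 + (20 : ℝ) * c 2 4 2 *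 c 4 2 2 + (18 : ℝ) * c 3 2 0 * c 3 4 0 + (18 : ℝ) * c 3 2 1 * c 3 4 1 + (18 : ℝ) * c 3 2 2 * c 3 4 2 + (9 : ℝ) * c 3 3 0 * c 3 3 0 + (9 : ℝ) * c 3 3 1 * c 3 3 1 + (9 : ℝ) * c 3 3 2 * c 3 3 2) * v ^ 5 + ((20 : ℝ) * c 2 3 0 * c 4 4 0 + (20 : ℝ) * c 2 3 1 * c 4 4 1 + (20 : ℝ) * c 2 3 2 * c 4 4 2 + (22 : ℝ) * c 2 4 0 * c 4 3 0 + (22 : ℝ) * c 2 4 1 * c 4 3 1 + (22 : ℝ) * c 2 4 2 * c 4 3 2 + (21 : ℝ) * c 3 3 0 * c 3 4 0 + (21 : ℝ) * c 3 3 1 * c 3 4 1 + (21 : ℝ) * c 3 3 2 * c 3 4 2) * v ^ 6 + ((24 : ℝ) * c 2 4 0 * c 4 4 0 + (24 : ℝ) * c 2 4 1 * c 4 4 1 + (24 : ℝ) * c 2 4 2 * c 4 4 2 + (12 : ℝ) * c 3 4 0 * c 3 4 0 + (12 : ℝ) * c 3 4 1 * c 3 4 1 + (12 : ℝ) * c 3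 4 2 * c 3 4 2) * v ^ 7) * u ^ 5 + (((3 : ℝ) * c 3 0 0 * c 4 1 0 + (3 : ℝ) * c 3 0 1 * c 4 1 1 + (3 : ℝ) * c 3 0 2 * c 4 1 2 + (4 : ℝ) * c 3 1 0 * c 4 0 0 + (4 : ℝ) * c 3 1 1 * c 4 0 1 + (4 : ℝ) * c 3 1 2 * c 4 0 2) + ((6 : ℝ) * c 3 0 0 * c 4 2 0 + (6 : ℝ) * c 3 0 1 * c 4 2 1 + (6 : ℝ) * c 3 0 2 * c 4 2 2 + (7 : ℝ) * c 3 1 0 * c 4 1 0 + (7 : ℝ) * c 3 1 1 * c 4 1 1 + (7 : ℝ) * c 3 1 2 * c 4 1 2 + (8 : ℝ) * c 3 2 0 * c 4 0 0 + (8 : ℝ) * c 3 2 1 * c 4 0 1 + (8 : ℝ) * c 3 2 2 * c 4 0 2) * v + ((9 : ℝ) * c 3 0 0 * c 4 3 0 + (9 : ℝ) * c 3 0 1 * c 4 3 1 + (9 : ℝ) * c 3 0 2 * c 4 3 2 + (10 : ℝ) * c 3 1 0 * c 4 2 0 + (10 : ℝ) * c 3 1 1 * c 4 2 1 + (10 :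 ℝ) * c 3 1 2 * c 4 2 2 + (11 : ℝ) * c 3 2 0 * c 4 1 0 + (11 : ℝ) * c 3 2 1 * c 4 1 1 + (11 : ℝ) * c 3 2 2 * c 4 1 2 + (12 : ℝ) * c 3 3 0 * c 4 0 0 + (12 : ℝ) * c 3 3 1 * c 4 0 1 + (12 : ℝ) * c 3 3 2 * c 4 0 2) * v ^ 2 + ((12 : ℝ) * c 3 0 0 * c 4 4 0 + (12 : ℝ) * c 3 0 1 * c 4 4 1 + (12 : ℝ) * c 3 0 2 * c 4 4 2 + (13 : ℝ) * c 3 1 0 * c 4 3 0 + (13 : ℝ) * c 3 1 1 * c 4 3 1 + (13 : ℝ) * c 3 1 2 * c 4 3 2 + (14 : ℝ) * c 3 2 0 * c 4 2 0 + (14 : ℝ) * c 3 2 1 * c 4 2 1 + (14 : ℝ) * c 3 2 2 * c 4 2 2 + (15 : ℝ) * c 3 3 0 * c 4 1 0 + (15 : ℝ) * c 3 3 1 * c 4 1 1 + (15 : ℝ) * c 3 3 2 * c 4 1 2 + (16 : ℝ) * c 3 4 0 * c 4 0 0 + (16 : ℝ) * c 3 4 1 * c 4 0 1 + (16 : ℝ)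 * c 3 4 2 * c 4 0 2) * v ^ 3 + ((16 : ℝ) * c 3 1 0 * c 4 4 0 + (16 : ℝ) * c 3 1 1 * c 4 4 1 + (16 : ℝ) * c 3 1 2 * c 4 4 2 + (17 : ℝ) * c 3 2 0 * c 4 3 0 + (17 : ℝ) * c 3 2 1 * c 4 3 1 + (17 : ℝ) * c 3 2 2 * c 4 3 2 + (18 : ℝ) * c 3 3 0 * c 4 2 0 + (18 : ℝ) * c 3 3 1 * c 4 2 1 + (18 : ℝ) * c 3 3 2 * c 4 2 2 + (19 : ℝ) * c 3 4 0 * c 4 1 0 + (19 : ℝ) * c 3 4 1 * c 4 1 1 + (19 : ℝ) * c 3 4 2 * c 4 1 2) * v ^ 4 + ((20 : ℝ) * c 3 2 0 * c 4 4 0 + (20 : ℝ) * c 3 2 1 * c 4 4 1 + (20 : ℝ) * c 3 2 2 * c 4 4 2 + (21 : ℝ) * c 3 3 0 * c 4 3 0 + (21 : ℝ) * c 3 3 1 * c 4 3 1 + (21 : ℝ) * c 3 3 2 * c 4 3 2 + (22 : ℝ) * c 3 4 0 * c 4 2 0 + (22 : ℝ) * c 3 4 1 * c 4 2 1 + (22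 : ℝ) * c 3 4 2 * c 4 2 2) * v ^ 5 + ((24 : ℝ) * c 3 3 0 * c 4 4 0 + (24 : ℝ) * c 3 3 1 * c 4 4 1 + (24 : ℝ) * c 3 3 2 * c 4 4 2 + (25 : ℝ) * c 3 4 0 * c 4 3 0 + (25 : ℝ) * c 3 4 1 * c 4 3 1 + (25 : ℝ) * c 3 4 2 * c 4 3 2) * v ^ 6 + ((28 : ℝ) * c 3 4 0 * c 4 4 0 + (28 : ℝ) * c 3 4 1 * c 4 4 1 + (28 : ℝ) * c 3 4 2 * c 4 4 2) * v ^ 7) * u ^ 6 + (((4 : ℝ) * c 4 0 0 * c 4 1 0 + (4 : ℝ) * c 4 0 1 * c 4 1 1 + (4 : ℝ) * c 4 0 2 * c 4 1 2) + ((8 : ℝ) * c 4 0 0 * c 4 2 0 + (8 : ℝ) * c 4 0 1 * c 4 2 1 + (8 : ℝ) * c 4 0 2 * c 4 2 2 + (4 : ℝ) * c 4 1 0 * c 4 1 0 + (4 : ℝ) * c 4 1 1 * c 4 1 1 + (4 : ℝ) * c 4 1 2 * c 4 1 2) * v + ((12 : ℝ) * c 4 0 0 * c 4 3 0 + (12 :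 ℝ) * c 4 0 1 * c 4 3 1 + (12 : ℝ) * c 4 0 2 * c 4 3 2 + (12 : ℝ) * c 4 1 0 * c 4 2 0 + (12 : ℝ) * c 4 1 1 * c 4 2 1 + (12 : ℝ) * c 4 1 2 * c 4 2 2) * v ^ 2 + ((16 : ℝ) * c 4 0 0 * c 4 4 0 + (16 : ℝ) * c 4 0 1 * c 4 4 1 + (16 : ℝ) * c 4 0 2 * c 4 4 2 + (16 : ℝ) * c 4 1 0 * c 4 3 0 + (16 : ℝ) * c 4 1 1 * c 4 3 1 + (16 : ℝ) * c 4 1 2 * c 4 3 2 + (8 : ℝ) * c 4 2 0 * c 4 2 0 + (8 : ℝ) * c 4 2 1 * c 4 2 1 + (8 : ℝ) * c 4 2 2 * c 4 2 2) * v ^ 3 + ((20 : ℝ) * c 4 1 0 * c 4 4 0 + (20 : ℝ) * c 4 1 1 * c 4 4 1 + (20 : ℝ) * c 4 1 2 * c 4 4 2 + (20 : ℝ) * c 4 2 0 * c 4 3 0 + (20 : ℝ) * c 4 2 1 * c 4 3 1 + (20 : ℝ) * c 4 2 2 * c 4 3 2) * v ^ 4 + ((24 : ℝ) * c 4 2 0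 * c 4 4 0 + (24 : ℝ) * c 4 2 1 * c 4 4 1 + (24 : ℝ) * c 4 2 2 * c 4 4 2 + (12 : ℝ) * c 4 3 0 * c 4 3 0 + (12 : ℝ) * c 4 3 1 * c 4 3 1 + (12 : ℝ) * c 4 3 2 * c 4 3 2) * v ^ 5 + ((28 : ℝ) * c 4 3 0 * c 4 4 0 + (28 : ℝ) * c 4 3 1 * c 4 4 1 + (28 : ℝ) * c 4 3 2 * c 4 4 2) * v ^ 6 + ((16 : ℝ) * c 4 4 0 * c 4 4 0 + (16 : ℝ) * c 4 4 1 * c 4 4 1 + (16 : ℝ) * c 4 4 2 * c 4 4 2) * v ^ 7) * u ^ 7 + ((0:ℝ)) * u ^ 8 = 0 := by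
    intro v u
    have h := (hiso u v).2
    simp only [dot3] at h
    rw [hpu u v 0, hpu u v 1, hpu u v 2, hpv u v 0, hpv u v 1, hpv u v 2] at h
    linear_combination h
  have hB5 := fun (v : ℝ) => (vanish8 (hFg v)).2.2.2.2.2.1
  have hB5v : ∀ v : ℝ, ((2 : ℝ) * c 2 0 0 * c 4 1 0 + (2 : ℝ) * c 2 0 1 * c 4 1 1 + (2 : ℝ) * c 2 0 2 * c 4 1 2 + (4 : ℝ) * c 2 1 0 * c 4 0 0 + (4 : ℝ) * c 2 1 1 * c 4 0 1 + (4 : ℝ) * c 2 1 2 * c 4 0 2 + (3 : ℝ) * c 3 0 0 * c 3 1 0 + (3 : ℝ) * c 3 0 1 * c 3 1 1 + (3 : ℝ) * c 3 0 2 * c 3 1 2) + ((4 : ℝ) * c 2 0 0 * c 4 2 0 + (4 : ℝ) * c 2 0 1 * c 4 2 1 + (4 : ℝ) * c 2 0 2 * c 4 2 2 + (6 : ℝ) * c 2 1 0 * c 4 1 0 + (6 : ℝ) * c 2 1 1 * c 4 1 1 + (6 : ℝ) * c 2 1 2 * c 4 1 2 + (8 : ℝ) * c 2 2 0 * c 4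 0 0 + (8 : ℝ) * c 2 2 1 * c 4 0 1 + (8 : ℝ) * c 2 2 2 * c 4 0 2 + (6 : ℝ) * c 3 0 0 * c 3 2 0 + (6 : ℝ) * c 3 0 1 * c 3 2 1 + (6 : ℝ) * c 3 0 2 * c 3 2 2 + (3 : ℝ) * c 3 1 0 * c 3 1 0 + (3 : ℝ) * c 3 1 1 * c 3 1 1 + (3 : ℝ) * c 3 1 2 * c 3 1 2) * v + ((6 : ℝ) * c 2 0 0 * c 4 3 0 + (6 : ℝ) * c 2 0 1 * c 4 3 1 + (6 : ℝ) * c 2 0 2 * c 4 3 2 + (8 : ℝ) * c 2 1 0 * c 4 2 0 + (8 : ℝ) * c 2 1 1 * c 4 2 1 + (8 : ℝ) * c 2 1 2 * c 4 2 2 + (10 : ℝ) * c 2 2 0 * c 4 1 0 + (10 : ℝ) * c 2 2 1 * c 4 1 1 + (10 : ℝ) * c 2 2 2 * c 4 1 2 + (12 : ℝ) * c 2 3 0 * c 4 0 0 + (12 : ℝ) * c 2 3 1 * c 4 0 1 + (12 : ℝ) * c 2 3 2 * c 4 0 2 + (9 : ℝ) * c 3 0 0 * c 3 3 0 + (9 :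 ℝ) * c 3 0 1 * c 3 3 1 + (9 : ℝ) * c 3 0 2 * c 3 3 2 + (9 : ℝ) * c 3 1 0 * c 3 2 0 + (9 : ℝ) * c 3 1 1 * c 3 2 1 + (9 : ℝ) * c 3 1 2 * c 3 2 2) * v ^ 2 + ((8 : ℝ) * c 2 0 0 * c 4 4 0 + (8 : ℝ) * c 2 0 1 * c 4 4 1 + (8 : ℝ) * c 2 0 2 * c 4 4 2 + (10 : ℝ) * c 2 1 0 * c 4 3 0 + (10 : ℝ) * c 2 1 1 * c 4 3 1 + (10 : ℝ) * c 2 1 2 * c 4 3 2 + (12 : ℝ) * c 2 2 0 * c 4 2 0 + (12 : ℝ) * c 2 2 1 * c 4 2 1 + (12 : ℝ) * c 2 2 2 * c 4 2 2 + (14 : ℝ) * c 2 3 0 * c 4 1 0 + (14 : ℝ) * c 2 3 1 * c 4 1 1 + (14 : ℝ) * c 2 3 2 * c 4 1 2 + (16 : ℝ) * c 2 4 0 * c 4 0 0 + (16 : ℝ) * c 2 4 1 * c 4 0 1 + (16 : ℝ) * c 2 4 2 * c 4 0 2 + (12 : ℝ) * c 3 0 0 * c 3 4 0 + (12 : ℝ)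 * c 3 0 1 * c 3 4 1 + (12 : ℝ) * c 3 0 2 * c 3 4 2 + (12 : ℝ) * c 3 1 0 * c 3 3 0 + (12 : ℝ) * c 3 1 1 * c 3 3 1 + (12 : ℝ) * c 3 1 2 * c 3 3 2 + (6 : ℝ) * c 3 2 0 * c 3 2 0 + (6 : ℝ) * c 3 2 1 * c 3 2 1 + (6 : ℝ) * c 3 2 2 * c 3 2 2) * v ^ 3 + ((12 : ℝ) * c 2 1 0 * c 4 4 0 + (12 : ℝ) * c 2 1 1 * c 4 4 1 + (12 : ℝ) * c 2 1 2 * c 4 4 2 + (14 : ℝ) * c 2 2 0 * c 4 3 0 + (14 : ℝ) * c 2 2 1 * c 4 3 1 + (14 : ℝ) * c 2 2 2 * c 4 3 2 + (16 : ℝ) * c 2 3 0 * c 4 2 0 + (16 : ℝ) * c 2 3 1 * c 4 2 1 + (16 : ℝ) * c 2 3 2 * c 4 2 2 + (18 : ℝ) * c 2 4 0 * c 4 1 0 + (18 : ℝ) * c 2 4 1 * c 4 1 1 + (18 : ℝ) * c 2 4 2 * c 4 1 2 + (15 : ℝ) * c 3 1 0 * c 3 4 0 + (15 : ℝ) * c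 3 1 1 * c 3 4 1 + (15 : ℝ) * c 3 1 2 * c 3 4 2 + (15 : ℝ) * c 3 2 0 * c 3 3 0 + (15 : ℝ) * c 3 2 1 * c 3 3 1 + (15 : ℝ) * c 3 2 2 * c 3 3 2) * v ^ 4 + ((16 : ℝ) * c 2 2 0 * c 4 4 0 + (16 : ℝ) * c 2 2 1 * c 4 4 1 + (16 : ℝ) * c 2 2 2 * c 4 4 2 + (18 : ℝ) * c 2 3 0 * c 4 3 0 + (18 : ℝ) * c 2 3 1 * c 4 3 1 + (18 : ℝ) * c 2 3 2 * c 4 3 2 + (20 : ℝ) * c 2 4 0 * c 4 2 0 + (20 : ℝ) * c 2 4 1 * c 4 2 1 + (20 : ℝ) * c 2 4 2 * c 4 2 2 + (18 : ℝ) * c 3 2 0 * c 3 4 0 + (18 : ℝ) * c 3 2 1 * c 3 4 1 + (18 : ℝ) * c 3 2 2 * c 3 4 2 + (9 : ℝ) * c 3 3 0 * c 3 3 0 + (9 : ℝ) * c 3 3 1 * c 3 3 1 + (9 : ℝ) * c 3 3 2 * c 3 3 2) * v ^ 5 + ((20 : ℝ) * c 2 3 0 * c 4 4 0 + (20 : ℝ)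 * c 2 3 1 * c 4 4 1 + (20 : ℝ) * c 2 3 2 * c 4 4 2 + (22 : ℝ) * c 2 4 0 * c 4 3 0 + (22 : ℝ) * c 2 4 1 * c 4 3 1 + (22 : ℝ) * c 2 4 2 * c 4 3 2 + (21 : ℝ) * c 3 3 0 * c 3 4 0 + (21 : ℝ) * c 3 3 1 * c 3 4 1 + (21 : ℝ) * c 3 3 2 * c 3 4 2) * v ^ 6 + ((24 : ℝ) * c 2 4 0 * c 4 4 0 + (24 : ℝ) * c 2 4 1 * c 4 4 1 + (24 : ℝ) * c 2 4 2 * c 4 4 2 + (12 : ℝ) * c 3 4 0 * c 3 4 0 + (12 : ℝ) * c 3 4 1 * c 3 4 1 + (12 : ℝ) * c 3 4 2 * c 3 4 2) * v ^ 7 + ((0:ℝ)) * v ^ 8 = 0 := fun v => by linear_combination hB5 v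
  have hF50 := (vanish8 hB5v).1
  have key1 : p * (c 0 3 1 + c 3 0 0) = 0 := by
    linear_combination (1/24 : ℝ) * hEG50 - (c 3 0 0) * (h40c0) - ((-1 / 144 : ℝ) * c 1 1 0) * (hH21 0) - ((-1 / 24 : ℝ) * c 3 1 0) * (hH01 0) - (c 3 0 1) * (h40c1) - ((-1 / 144 : ℝ) * c 1 1 1) * (hH21 1) - ((-1 / 24 : ℝ) * c 3 1 1) * (hH01 1) - (c 3 0 2) * (h40c2) - ((-1 / 144 : ℝ) * c 1 1 2) * (hH21 2) - ((-1 / 24 : ℝ) * c 3 1 2) * (hH01 2) - ((1 / 48 : ℝ) * c 1 1 0) * (hH03 0) - ((1 / 4 : ℝ) * c 0 3 0) * (h31c0) - ((1 / 48 : ℝ) * c 1 1 1) * (hH03 1) - ((1 / 4 : ℝ) * c 0 3 1) * (h31c1) - ((1 / 48 : ℝ) * c 1 1 2) * (hH03 2) - ((1 / 4 : ℝ) * c 0 3 2) * (h31c2)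
  have key2 : p * (c 0 3 0 - c 3 0 1) = 0 := by
    linear_combination (-1/12 : ℝ) * hF50 - ((-1 / 12 : ℝ) * c 4 1 0) * (hH00 0) - ((-1 / 4 : ℝ) * c 3 0 0) * (h31c0) - ((-1 / 6 : ℝ) * c 4 0 0) * (hH01 0) - ((-1 / 12 : ℝ) * c 4 1 1) * (hH00 1) - ((-1 / 4 : ℝ) * c 3 0 1) * (h31c1) - ((-1 / 6 : ℝ) * c 4 0 1) * (hH01 1) - ((-1 / 12 : ℝ) * c 4 1 2) * (hH00 2) - ((-1 / 4 : ℝ) * c 3 0 2) * (h31c2) - ((-1 / 6 : ℝ) * c 4 0 2) * (hH01 2) - ((1 / 72 : ℝ) * c 0 2 0) * (hH21 0) - (c 0 3 0) * (h40c0) - ((1 / 72 : ℝ) * c 0 2 1) * (hH21 1) - (c 0 3 1) * (h40c1) - ((1 / 72 : ℝ) * c 0 2 2) * (hH21 2) - (c 0 3 2) * (h40c2) - ((-1 / 24 : ℝ) * c 0 2 0) * (hH03 0) - ((-1 / 24 : ℝ) * c 0 2 1) * (hH03 1) - ((-1 / 24 : ℝ) * c 0 2 2) * (hH03 2)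
  exact ⟨(mul_eq_zero.mp key1).resolve_left hp, (mul_eq_zero.mp key2).resolve_left hp⟩
end
end

section
/- Let x₀(u,v) = ((u² − v²)/4 − (u⁴ − 6u²v² + v⁴)/8, −uv/2 − (u³v − uv³)/2, (u³ − 3uv²)/3), and set L̃ = (x_u × x_v)·x_uu, M̃ = (x_u × x_v)·x_uv, Ñ = (x_u × x_v)·x_vv. Then for all (u,v) ∈ ℝ²: L̃Ñ − M̃² = −(1/16)(u² + v²)³(1 + u² + v²)⁴. Consequently, for (u,v) ≠ (0,0), the Gauss curvature K = (L̃Ñ − M̃²)/(EG − F²)² equals −16/((u² + v²)(1 + u² + v²)⁴), so the normal curvature ν₀ = √(−K) equals 4/(√(u² + v²)(1 + u² + v²)²). -/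
noncomputable section

/-- The real part of the Weierstrass minimal curve with `f(z) = z`, `g(z) = z`. -/
def x₀ : ℝ → ℝ → Fin 3 → ℝ :=
  fun u v => ![(u ^ 2 - v ^ 2) / 4 - (u ^ 4 - 6 * u ^ 2 * v ^ 2 + v ^ 4) / 8,
               -(u * v) / 2 - (u ^ 3 * v - u * v ^ 3) / 2,
               (u ^ 3 - 3 * u * v ^ 2) / 3]

/-! The chart is polynomial, so its partial derivatives are computed symbolically and
`L̃Ñ - M̃²` becomes a polynomial identity. So does `EG - F² = λ²`, where
`λ = |f|²(1 + |g|²)²/4 = (u² + v²)(1 + u² + v²)²/4` is the conformal factor of the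
Weierstrass data `f = g = z`. The formulas for `K` and `ν₀` then follow by field algebra. -/

theorem pu_x₀ : pu x₀ = fun u v =>
    ![u / 2 - (u ^ 3 - 3 * u * v ^ 2) / 2, -(v / 2) - (3 * u ^ 2 * v - v ^ 3) / 2,
      u ^ 2 - v ^ 2] := by
  funext u v i
  fin_cases i <;> simp (disch := fun_prop) [pu, x₀, deriv_div_const] <;> ring

theorem pv_x₀ : pv x₀ = fun u v =>
    ![-(v / 2) + (3 * u ^ 2 * v - v ^ 3) / 2, -(u / 2) - (u ^ 3 - 3 * u * v ^ 2) / 2,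
      -(2 * u * v)] := by
  funext u v i
  fin_cases i <;> simp (disch := fun_prop) [pv, x₀, deriv_div_const] <;> ring

theorem pu_pu_x₀ : pu (pu x₀) = fun u v =>
    ![1 / 2 - (3 * u ^ 2 - 3 * v ^ 2) / 2, -(3 * u * v), 2 * u] := by
  rw [pu_x₀]
  funext u v i
  fin_cases i <;> simp (disch := fun_prop) [pu, deriv_div_const]
  ring

theorem pv_pu_x₀ : pv (pu x₀) = fun u v =>
    ![3 * u * v, -(1 / 2) - (3 * u ^ 2 - 3 * v ^ 2) / 2, -(2 * v)] := by
  rw [pu_x₀]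
  funext u v i
  fin_cases i <;> simp (disch := fun_prop) [pv, deriv_div_const]
  ring

theorem pv_pv_x₀ : pv (pv x₀) = fun u v =>
    ![-(1 / 2) + (3 * u ^ 2 - 3 * v ^ 2) / 2, 3 * u * v, -(2 * u)] := by
  rw [pv_x₀]
  funext u v i
  fin_cases i <;> simp (disch := fun_prop) [pv, deriv_div_const]
  ring

theorem x₀_EG_sub_F_sq (u v : ℝ) :
    dot3 (pu x₀ u v) (pu x₀ u v) * dot3 (pv x₀ u v) (pv x₀ u v)
        - (dot3 (pu x₀ u v) (pv x₀ u v)) ^ 2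
      = (u ^ 2 + v ^ 2) ^ 2 * (1 + u ^ 2 + v ^ 2) ^ 4 / 16 := by
  simp only [pu_x₀, pv_x₀, dot3, Matrix.cons_val_zero, Matrix.cons_val_one,
    Matrix.cons_val_two, Matrix.head_cons, Matrix.tail_cons]
  ring

theorem x₀_LN_sub_M_sq (u v : ℝ) :
    dot3 (cross3 (pu x₀ u v) (pv x₀ u v)) (pu (pu x₀) u v)
        * dot3 (cross3 (pu x₀ u v) (pv x₀ u v)) (pv (pv x₀) u v)
      - (dot3 (cross3 (pu x₀ u v) (pv x₀ u v)) (pv (pu x₀) u v)) ^ 2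
      = -(1 / 16) * (u ^ 2 + v ^ 2) ^ 3 * (1 + u ^ 2 + v ^ 2) ^ 4 := by
  rw [pu_pu_x₀, pv_pu_x₀, pv_pv_x₀, pu_x₀, pv_x₀]
  simp only [dot3, cross3, Matrix.cons_val_zero, Matrix.cons_val_one, Matrix.cons_val_two,
    Matrix.head_cons, Matrix.tail_cons]
  ring

theorem neg_div_sq_eq (r s : ℝ) :
    -(1 / 16) * r ^ 3 * s ^ 4 / (r ^ 2 * s ^ 4 / 16) ^ 2 = -16 / (r * s ^ 4) := by
  rcases eq_or_ne r 0 with rfl | hr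
  · simp
  rcases eq_or_ne s 0 with rfl | hs
  · simp
  field_simp

theorem sqrt_neg_neg_div {r : ℝ} (hr : 0 ≤ r) (s : ℝ) :
    √(-(-16 / (r * s ^ 4))) = 4 / (√r * s ^ 2) := by
  rw [neg_div, neg_neg, show 16 / (r * s ^ 4) = (4 / (√r * s ^ 2)) ^ 2 by
    rw [div_pow, mul_pow, Real.sq_sqrt hr]; ring]
  exact Real.sqrt_sq (by positivity)

/-- with `L̃ = (x_u × x_v)·x_uu`, `M̃ = (x_u × x_v)·x_uv`,
`Ñ = (x_u × x_v)·x_vv`, one has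
`L̃Ñ - M̃² = -(1/16)(u² + v²)³(1 + u² + v²)⁴`; hence away from the origin the Gauss
curvature `K = (L̃Ñ - M̃²)/(EG - F²)²` equals `-16/((u² + v²)(1 + u² + v²)⁴)` and the
normal curvature `√(-K)` equals `4/(√(u² + v²)(1 + u² + v²)²)`. -/
theorem x₀_gauss_and_normal_curvature :
    ∀ u v : ℝ,
      dot3 (cross3 (pu x₀ u v) (pv x₀ u v)) (pu (pu x₀) u v)
          * dot3 (cross3 (pu x₀ u v) (pv x₀ u v)) (pv (pv x₀) u v)
        - (dot3 (cross3 (pu x₀ u v) (pv x₀ u v)) (pv (pu x₀) u v)) ^ 2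
        = -(1 / 16) * (u ^ 2 + v ^ 2) ^ 3 * (1 + u ^ 2 + v ^ 2) ^ 4 ∧
      ((u, v) ≠ (0, 0) →
        (dot3 (cross3 (pu x₀ u v) (pv x₀ u v)) (pu (pu x₀) u v)
            * dot3 (cross3 (pu x₀ u v) (pv x₀ u v)) (pv (pv x₀) u v)
          - (dot3 (cross3 (pu x₀ u v) (pv x₀ u v)) (pv (pu x₀) u v)) ^ 2)
          / (dot3 (pu x₀ u v) (pu x₀ u v) * dot3 (pv x₀ u v) (pv x₀ u v)
              - (dot3 (pu x₀ u v) (pv x₀ u v)) ^ 2) ^ 2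
          = -16 / ((u ^ 2 + v ^ 2) * (1 + u ^ 2 + v ^ 2) ^ 4) ∧
        Real.sqrt (-((dot3 (cross3 (pu x₀ u v) (pv x₀ u v)) (pu (pu x₀) u v)
            * dot3 (cross3 (pu x₀ u v) (pv x₀ u v)) (pv (pv x₀) u v)
          - (dot3 (cross3 (pu x₀ u v) (pv x₀ u v)) (pv (pu x₀) u v)) ^ 2)
          / (dot3 (pu x₀ u v) (pu x₀ u v) * dot3 (pv x₀ u v) (pv x₀ u v)
              - (dot3 (pu x₀ u v) (pv x₀ u v)) ^ 2) ^ 2))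
          = 4 / (Real.sqrt (u ^ 2 + v ^ 2) * (1 + u ^ 2 + v ^ 2) ^ 2)) := by
  intro u v
  refine ⟨x₀_LN_sub_M_sq u v, fun _ => ?_⟩
  rw [x₀_LN_sub_M_sq, x₀_EG_sub_F_sq, neg_div_sq_eq]
  exact ⟨rfl, sqrt_neg_neg_div (by positivity) _⟩
end
end

section
/- Let σ : ℝ³ → ℝ³ be the reflection in one of the coordinate planes Oxy, Oxz, Oyz (the linear map negating exactly one coordinate). Let b_{ij} ∈ ℝ³ (0 ≤ i,j ≤ 4) be control points whose bi-quartic Bézier surface x(u,v) = Σ_{i,j=0}^4 b_{ij} B_i^4(u) B_j^4(v) is harmonic, and suppose the nine points b_{00}, b_{10}, b_{20}, b_{30}, b_{40}, b_{04}, b_{14}, b_{34}, b_{44} satisfy σ(b_{00}) = b_{40}, σ(b_{10}) = b_{30}, σ(b_{20}) = b_{20}, σ(b_{04}) = b_{44}, and σ(b_{14}) = b_{34}. Then for all (u,v) ∈ ℝ², σ(x(u,v)) = x(1−u, v); in particular the image of the surface is symmetric with respect to that coordinate plane. -/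
/-!
The harmonic condition `x_uu + x_vv = 0` is a linear system on the control net whose solutions
are determined by the nine boundary points `b₀₀, …, b₄₀, b₀₄, b₁₄, b₃₄, b₄₄`. Since `σ` is linear
and `B⁴ᵢ(1 - u) = B⁴₄₋ᵢ(u)`, which leaves second derivatives unchanged, the reflected net
`cᵢⱼ = σ(b₄₋ᵢ,ⱼ)` is harmonic as well. The hypotheses say that `c` and `b` share the nine boundary
points, so `c = b`, and this is the symmetry `σ(x(u, v)) = x(1 - u, v)`.
-/

noncomputable section

/-- Bernstein polynomial of degree 4. -/
def B4 (i : Fin 5) (t : ℝ) : ℝ :=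
  (Nat.choose 4 (i : ℕ) : ℝ) * t ^ (i : ℕ) * (1 - t) ^ (4 - (i : ℕ))

/-- The bi-quartic tensor-product Bézier surface with control net `b`. -/
def bezier (b : Fin 5 → Fin 5 → Fin 3 → ℝ) : ℝ → ℝ → Fin 3 → ℝ :=
  fun u v i => ∑ p : Fin 5, ∑ q : Fin 5, b p q i * B4 p u * B4 q v

open Polynomial

def bernstein4 (p : Fin 5) : ℝ[X] := bernsteinPolynomial ℝ 4 p

section TensorPatch

variable {ι κ E F : Type*} [Fintype ι] [Fintype κ]
  [AddCommGroup E] [Module ℝ E] [AddCommGroup F] [Module ℝ F]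

def tensorPatch (P : ι → ℝ[X]) (Q : κ → ℝ[X]) (b : ι → κ → E) (u v : ℝ) : E :=
  ∑ p, ∑ q, ((P p).eval u * (Q q).eval v) • b p q

theorem tensorPatch_map (P : ι → ℝ[X]) (Q : κ → ℝ[X]) (b : ι → κ → E) (σ : E →ₗ[ℝ] F)
    (u v : ℝ) : tensorPatch P Q (fun p q => σ (b p q)) u v = σ (tensorPatch P Q b u v) := by
  simp [tensorPatch, map_sum, map_smul]

theorem tensorPatch_sub (P : ι → ℝ[X]) (Q : κ → ℝ[X]) (b c : ι → κ → E) (u v : ℝ) :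
    tensorPatch P Q (b - c) u v = tensorPatch P Q b u v - tensorPatch P Q c u v := by
  simp [tensorPatch, smul_sub]

theorem tensorPatch_rev {n : ℕ} (P : Fin n → ℝ[X]) (Q : κ → ℝ[X]) (b : Fin n → κ → E)
    (hP : ∀ p t, (P p.rev).eval t = (P p).eval (1 - t)) (u v : ℝ) :
    tensorPatch P Q (fun p q => b p.rev q) u v = tensorPatch P Q b (1 - u) v := by
  unfold tensorPatch
  rw [← Equiv.sum_comp Fin.revPerm]
  simp [hP]

theorem pu_tensorPatch (P : ι → ℝ[X]) (Q : κ → ℝ[X]) (b : ι → κ → Fin 3 → ℝ) :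
    pu (tensorPatch P Q b) = tensorPatch (fun p => derivative (P p)) Q b := by
  funext u v i
  simp only [pu, tensorPatch, Finset.sum_apply, Pi.smul_apply, smul_eq_mul]
  exact (HasDerivAt.fun_sum fun p _ => HasDerivAt.fun_sum fun q _ =>
    (((P p).hasDerivAt u).mul_const _).mul_const _).deriv

theorem pv_tensorPatch (P : ι → ℝ[X]) (Q : κ → ℝ[X]) (b : ι → κ → Fin 3 → ℝ) :
    pv (tensorPatch P Q b) = tensorPatch P (fun q => derivative (Q q)) b := by
  funext u v i
  simp only [pv, tensorPatch, Finset.sum_apply, Pi.smul_apply, smul_eq_mul]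
  exact (HasDerivAt.fun_sum fun p _ => HasDerivAt.fun_sum fun q _ =>
    (((Q q).hasDerivAt v).const_mul _).mul_const _).deriv

end TensorPatch

theorem eval_iterate_derivative_bernstein4_rev (k : ℕ) (p : Fin 5) (t : ℝ) :
    (derivative^[k] (bernstein4 p.rev)).eval t =
      (-1) ^ k * (derivative^[k] (bernstein4 p)).eval (1 - t) := by
  have hrev : ((p.rev : Fin 5) : ℕ) = 4 - p := by rw [Fin.val_rev]; omega
  rw [bernstein4, bernstein4, hrev, bernsteinPolynomial.flip' ℝ 4 _ (by omega),
    Nat.sub_sub_self (by omega), iterate_derivative_comp_one_sub_X]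
  simp

theorem eval_bernstein4 (p : Fin 5) (t : ℝ) : (bernstein4 p).eval t =
    ![(1 - t) ^ 4, 4 * t * (1 - t) ^ 3, 6 * t ^ 2 * (1 - t) ^ 2, 4 * t ^ 3 * (1 - t), t ^ 4] p := by
  fin_cases p <;> simp [bernstein4, bernsteinPolynomial, Nat.choose]

theorem eval_iterate_derivative_two_bernstein4 (p : Fin 5) (t : ℝ) :
    (derivative^[2] (bernstein4 p)).eval t = ![12 * (1 - t) ^ 2, 24 * (1 - t) * (2 * t - 1),
      12 * (6 * t ^ 2 - 6 * t + 1), 24 * t * (1 - 2 * t), 12 * t ^ 2] p := by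
  fin_cases p <;>
    simp [bernstein4, bernsteinPolynomial, derivative_mul, derivative_pow, Nat.choose] <;> ring

theorem bezier_eq_tensorPatch (b : Fin 5 → Fin 5 → Fin 3 → ℝ) :
    bezier b = tensorPatch bernstein4 bernstein4 b := by
  funext u v i
  simp [bezier, tensorPatch, Finset.sum_apply, B4, bernstein4, bernsteinPolynomial, mul_assoc,
    mul_left_comm, mul_comm]

section HarmonicNet

variable {E F : Type*} [AddCommGroup E] [Module ℝ E] [AddCommGroup F] [Module ℝ F]

def IsHarmonicNet (b : Fin 5 → Fin 5 → E) : Prop :=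
  ∀ u v, tensorPatch (fun p => derivative^[2] (bernstein4 p)) bernstein4 b u v +
    tensorPatch bernstein4 (fun q => derivative^[2] (bernstein4 q)) b u v = 0

theorem Harmonic.isHarmonicNet {b : Fin 5 → Fin 5 → Fin 3 → ℝ} (h : Harmonic (bezier b)) :
    IsHarmonicNet b := by
  intro u v
  funext i
  simpa [bezier_eq_tensorPatch, pu_tensorPatch, pv_tensorPatch] using h u v i

namespace IsHarmonicNet

variable {b c : Fin 5 → Fin 5 → E}

theorem map (hb : IsHarmonicNet b) (σ : E →ₗ[ℝ] F) : IsHarmonicNet fun p q => σ (b p q) := by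
  intro u v
  rw [tensorPatch_map, tensorPatch_map, ← map_add, hb u v, map_zero]

theorem sub (hb : IsHarmonicNet b) (hc : IsHarmonicNet c) : IsHarmonicNet (b - c) := by
  intro u v
  rw [tensorPatch_sub, tensorPatch_sub, sub_add_sub_comm, hb u v, hc u v, sub_zero]

theorem rev (hb : IsHarmonicNet b) : IsHarmonicNet fun p q => b p.rev q := by
  intro u v
  rw [tensorPatch_rev _ _ _ (by simpa using eval_iterate_derivative_bernstein4_rev 2),
    tensorPatch_rev _ _ _ (by simpa using eval_iterate_derivative_bernstein4_rev 0)]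
  exact hb (1 - u) v

set_option maxHeartbeats 1000000 in
theorem eq_zero_of_boundary {a : Fin 5 → Fin 5 → ℝ} (ha : IsHarmonicNet a)
    (h00 : a 0 0 = 0) (h10 : a 1 0 = 0) (h20 : a 2 0 = 0) (h30 : a 3 0 = 0) (h40 : a 4 0 = 0)
    (h04 : a 0 4 = 0) (h14 : a 1 4 = 0) (h34 : a 3 4 = 0) (h44 : a 4 4 = 0) : a = 0 := by
  have key (u v : ℝ) := ha u v
  simp only [tensorPatch, Fin.sum_univ_five, eval_bernstein4,
    eval_iterate_derivative_two_bernstein4, Matrix.cons_val, smul_eq_mul,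
    h00, h10, h20, h30, h40, h04, h14, h34, h44, mul_zero, add_zero, zero_add] at key
  -- At these sixteen grid points the harmonic condition is a nonsingular linear system in the
  -- sixteen control points not fixed by the hypotheses.
  have e00 := key 0 0; have e01 := key 0 1; have e02 := key 0 2; have e03 := key 0 3
  have e04 := key 0 4; have e10 := key 1 0; have e11 := key 1 1; have e12 := key 1 2
  have e13 := key 1 3; have e14 := key 1 4; have e20 := key 2 0; have e21 := key 2 1
  have e22 := key 2 2; have e23 := key 2 3; have e24 := key 2 4; have e30 := key 3 0
  norm_num at e00 e01 e02 e03 e04 e10 e11 e12 e13 e14 e20 e21 e22 e23 e24 e30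
  ext p q
  fin_cases p <;> fin_cases q <;> simp <;> linarith

theorem ext_of_boundary (hb : IsHarmonicNet b) (hc : IsHarmonicNet c)
    (h00 : b 0 0 = c 0 0) (h10 : b 1 0 = c 1 0) (h20 : b 2 0 = c 2 0) (h30 : b 3 0 = c 3 0)
    (h40 : b 4 0 = c 4 0) (h04 : b 0 4 = c 0 4) (h14 : b 1 4 = c 1 4) (h34 : b 3 4 = c 3 4)
    (h44 : b 4 4 = c 4 4) : b = c := by
  refine sub_eq_zero.mp (funext₂ fun p q => (Module.forall_dual_apply_eq_zero_iff ℝ _).mp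
    fun φ => ?_)
  have hzero := ((hb.sub hc).map φ).eq_zero_of_boundary
    (by simp [h00]) (by simp [h10]) (by simp [h20]) (by simp [h30]) (by simp [h40])
    (by simp [h04]) (by simp [h14]) (by simp [h34]) (by simp [h44])
  exact congrFun₂ hzero p q

theorem apply_tensorPatch_eq_of_boundary (hb : IsHarmonicNet b) (σ : E →ₗ[ℝ] E)
    (hσ : Function.Involutive σ) (h00 : σ (b 0 0) = b 4 0) (h10 : σ (b 1 0) = b 3 0)
    (h20 : σ (b 2 0) = b 2 0) (h04 : σ (b 0 4) = b 4 4) (h14 : σ (b 1 4) = b 3 4) (u v : ℝ) :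
    σ (tensorPatch bernstein4 bernstein4 b u v) =
      tensorPatch bernstein4 bernstein4 b (1 - u) v := by
  have hσb : (fun p q => σ (b p.rev q)) = b := by
    have swap {x y : E} (h : σ x = y) : σ y = x := h ▸ hσ x
    exact (hb.rev.map σ).ext_of_boundary hb (swap h00) (swap h10) h20 h10 h00 (swap h04)
      (swap h14) h14 h04
  calc σ (tensorPatch bernstein4 bernstein4 b u v)
      = tensorPatch bernstein4 bernstein4 (fun p q => σ (b p.rev.rev q)) u v := by
        simp only [Fin.rev_rev, tensorPatch_map]
    _ = tensorPatch bernstein4 bernstein4 b (1 - u) v := by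
        rw [tensorPatch_rev _ _ (fun p q => σ (b p.rev q)), hσb]
        simpa using eval_iterate_derivative_bernstein4_rev 0

end IsHarmonicNet

end HarmonicNet

def coordReflection {ι : Type*} [DecidableEq ι] (k : ι) : (ι → ℝ) →ₗ[ℝ] (ι → ℝ) where
  toFun x i := if i = k then -x i else x i
  map_add' x y := by ext i; simp only [Pi.add_apply]; split_ifs <;> ring
  map_smul' c x := by
    ext i; simp only [Pi.smul_apply, smul_eq_mul, RingHom.id_apply]; split_ifs <;> ring

theorem coordReflection_involutive {ι : Type*} [DecidableEq ι] (k : ι) :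
    Function.Involutive (coordReflection k) := by
  intro x; ext i; by_cases hi : i = k <;> simp [coordReflection, hi]

/-- if a harmonic bi-quartic Bézier control net has its nine
determining boundary points symmetric with respect to a coordinate plane
(reflection `σ` negating exactly one coordinate), then the surface itself is
symmetric: `σ(x(u,v)) = x(1-u, v)` for all `(u,v)`. -/
theorem harmonic_bezier_surface_symmetric
    (σ : (Fin 3 → ℝ) → (Fin 3 → ℝ))
    (hσ : ∃ k : Fin 3, σ = fun p i => if i = k then -p i else p i)
    (b : Fin 5 → Fin 5 → Fin 3 → ℝ)
    (hharm : Harmonic (bezier b))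
    (h00 : σ (b 0 0) = b 4 0) (h10 : σ (b 1 0) = b 3 0) (h20 : σ (b 2 0) = b 2 0)
    (h04 : σ (b 0 4) = b 4 4) (h14 : σ (b 1 4) = b 3 4) :
    ∀ u v : ℝ, σ (bezier b u v) = bezier b (1 - u) v := by
  obtain ⟨k, rfl⟩ := hσ
  rw [bezier_eq_tensorPatch]
  exact hharm.isHarmonicNet.apply_tensorPatch_eq_of_boundary (coordReflection k)
    (coordReflection_involutive k) h00 h10 h20 h04 h14
end
end
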